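/- arXiv:2403.03365 — 4 statements merged into one kernel-verified Lean document; each statement's English description precedes it below -/
import Mathlib

section
/- Types are additive under association: with λ, μ, ν nonempty exchange relations as above, writing type(λ,μ) = (k₀,l₀) ∈ ℤ² for the type of λ • μ, one has type(λ • μ, ν) + type(λ, μ) = type(μ, ν) + type(λ, μ • ν), as an equation in ℤ × ℤ. -/
open Finset

def Exchangeable {A B : Type*} [DecidableEq A] [DecidableEq B]
    (r : Finset A → Finset B → Prop) (X : Finset A) (Y : Finset B) :
    A ⊕ B → A ⊕ B → Prop
  | Sum.inl a, Sum.inl a' =>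
      a = a' ∨
      (a ∈ X ∧ a' ∉ X ∧ r (insert a' (X.erase a)) Y) ∨
      (a ∉ X ∧ a' ∈ X ∧ r (insert a (X.erase a')) Y)
  | Sum.inl a, Sum.inr b =>
      (a ∈ X ∧ b ∈ Y ∧ r (X.erase a) (Y.erase b)) ∨
      (a ∉ X ∧ b ∉ Y ∧ r (insert a X) (insert b Y))
  | Sum.inr b, Sum.inl a =>
      (b ∈ Y ∧ a ∈ X ∧ r (X.erase a) (Y.erase b)) ∨
      (b ∉ Y ∧ a ∉ X ∧ r (insert a X) (insert b Y))
  | Sum.inr b, Sum.inr b' =>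
      b = b' ∨
      (b ∈ Y ∧ b' ∉ Y ∧ r X (insert b' (Y.erase b))) ∨
      (b ∉ Y ∧ b' ∈ Y ∧ r X (insert b (Y.erase b')))

def InBar {A B : Type*} (X : Finset A) (Y : Finset B) : A ⊕ B → Prop
  | Sum.inl a => a ∉ X
  | Sum.inr b => b ∈ Y

def ExchAxiom {A B : Type*} [DecidableEq A] [DecidableEq B]
    (r : Finset A → Finset B → Prop) : Prop :=
  ∀ X Y X' Y', r X Y → r X' Y' → ∀ u, InBar X Y u →
    ∃ v, InBar X' Y' v ∧ Exchangeable r X Y u v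

def RelComp {A B C : Type*} (r : Finset A → Finset B → Prop)
    (s : Finset B → Finset C → Prop) : Finset A → Finset C → Prop :=
  fun X Z => ∃ Y, r X Y ∧ s Y Z

def BComp {A B C : Type*} [DecidableEq B] (r : Finset A → Finset B → Prop)
    (s : Finset B → Finset C → Prop) (k l : ℕ) : Finset A → Finset C → Prop :=
  fun X Z => ∃ Y Y', r X Y' ∧ s Y Z ∧ (Y \ Y').card = k ∧ (Y' \ Y).card = l

noncomputable def totalType {A B C : Type*} [DecidableEq B]
    (r : Finset A → Finset B → Prop) (s : Finset B → Finset C → Prop) : ℕ :=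
  sInf {m | ∃ k l, k + l = m ∧ ∃ X Z, BComp r s k l X Z}

noncomputable def LaxComp {A B C : Type*} [DecidableEq B]
    (r : Finset A → Finset B → Prop) (s : Finset B → Finset C → Prop) :
    Finset A → Finset C → Prop :=
  fun X Z => ∃ k l, k + l = totalType r s ∧ BComp r s k l X Z

noncomputable def TypeK {A B C : Type*} [DecidableEq B]
    (r : Finset A → Finset B → Prop) (s : Finset B → Finset C → Prop) : ℕ :=
  sInf {k | ∃ l, k + l = totalType r s ∧ ∃ X Z, BComp r s k l X Z}

noncomputable def TypeL {A B C : Type*} [DecidableEq B]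
    (r : Finset A → Finset B → Prop) (s : Finset B → Finset C → Prop) : ℕ :=
  sInf {l | ∃ k, k + l = totalType r s ∧ ∃ X Z, BComp r s k l X Z}

noncomputable def TypePair {A B C : Type*} [DecidableEq B]
    (r : Finset A → Finset B → Prop) (s : Finset B → Finset C → Prop) : ℤ × ℤ :=
  ((TypeK r s : ℤ), (TypeL r s : ℤ))


set_option linter.unusedSectionVars false
set_option maxHeartbeats 1000000

section Helpers
variable {α : Type*} [DecidableEq α] {s t : Finset α} {b : α}

theorem hsd1 (h : b ∉ t) : t \ (s.erase b) = t \ s := by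
  ext x; by_cases hx : x = b <;> simp [hx, h]
theorem hsd2 : (s.erase b) \ t = (s \ t).erase b := by
  ext x; simp [mem_erase]; tauto
theorem hsd3 (h : b ∈ t) : t \ (insert b s) = (t \ s).erase b := by
  ext x; by_cases hx : x = b <;> simp [hx, h]
theorem hsd4 (h : b ∉ t) : (insert b s) \ t = insert b (s \ t) := by
  ext x; by_cases hx : x = b <;> simp [hx, h]
theorem hsd5 (h : b ∈ t) : (insert b s) \ t = s \ t := by
  ext x; by_cases hx : x = b <;> simp [hx, h]
theorem hsd6 (h : b ∉ t) : t \ (insert b s) = t \ s := by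
  ext x; by_cases hx : x = b <;> simp [hx, h]
theorem hpigeon {s t : Finset α} (h : t.card < s.card) : ∃ b ∈ s, b ∉ t := by
  by_contra hc; push_neg at hc
  exact absurd (card_le_card fun x hx => hc x hx) (by omega)
-- reconstruction helpers
theorem heq_insert (h1 : s \ t = ∅) (h2 : t \ s = {b}) : t = insert b s := by
  have e1 := Finset.ext_iff.mp h1; have e2 := Finset.ext_iff.mp h2
  ext x; specialize e1 x; specialize e2 x
  simp only [mem_sdiff, notMem_empty, iff_false, not_and, not_not, mem_singleton] at e1 e2
  simp only [mem_insert]; constructor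
  · intro hx; by_cases hxs : x ∈ s; · exact Or.inr hxs
    · exact Or.inl (e2.mp ⟨hx, hxs⟩)
  · rintro (rfl | hx)
    · exact (e2.mpr rfl).1
    · exact e1 hx
theorem heq_eq (h1 : s \ t = ∅) (h2 : t \ s = ∅) : t = s := by
  have := sdiff_eq_empty_iff_subset.mp h1
  have := sdiff_eq_empty_iff_subset.mp h2
  exact Subset.antisymm ‹t ⊆ s› ‹s ⊆ t›
theorem heq_swapel (h1 : t \ s = {b}) (h2 : s \ t = {b₂}) :
    t = insert b (s.erase b₂) := by
  have e1 := Finset.ext_iff.mp h1; have e2 := Finset.ext_iff.mp h2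
  have hb : b ∈ t ∧ b ∉ s := by
    have := (e1 b).mpr (mem_singleton_self b); simpa using this
  have hb2 : b₂ ∈ s ∧ b₂ ∉ t := by
    have := (e2 b₂).mpr (mem_singleton_self b₂); simpa using this
  ext x; specialize e1 x; specialize e2 x
  simp only [mem_sdiff, mem_singleton] at e1 e2
  simp only [mem_insert, mem_erase]
  constructor
  · intro hx; by_cases hxs : x ∈ s
    · refine Or.inr ⟨?_, hxs⟩; rintro rfl; exact hb2.2 hx
    · exact Or.inl (e1.mp ⟨hx, hxs⟩)
  · rintro (rfl | ⟨hne, hx⟩)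
    · exact hb.1
    · by_contra hxt; exact hne (e2.mp ⟨hx, hxt⟩)
theorem heq_erase (h1 : t \ s = ∅) (h2 : s \ t = {b}) : t = s.erase b := by
  have e1 := Finset.ext_iff.mp h1; have e2 := Finset.ext_iff.mp h2
  have hb : b ∈ s ∧ b ∉ t := by have := (e2 b).mpr (mem_singleton_self b); simpa using this
  ext x; specialize e1 x; specialize e2 x
  simp only [mem_sdiff, notMem_empty, iff_false, not_and, not_not, mem_singleton] at e1 e2
  simp only [mem_erase]
  constructor
  · intro hx; refine ⟨?_, e1 hx⟩; rintro rfl; exact hb.2 hx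
  · rintro ⟨hne, hx⟩; by_contra hxt; exact hne (e2.mp ⟨hx, hxt⟩)
theorem hsd7 {α : Type*} [DecidableEq α] {s t : Finset α} {b : α} (h : b ∈ t) :
    t \ (s.erase b) = insert b (t \ s) := by
  ext x; by_cases hx : x = b <;> simp [hx, h]
end Helpers


section ELemmas
variable {A B : Type*} [DecidableEq A] [DecidableEq B]

theorem exch_right {r : Finset A → Finset B → Prop} (hr : ExchAxiom r)
    {X X₁ : Finset A} {Y' Y₁' : Finset B} (h : r X Y') (h1 : r X₁ Y₁') {b : B} (hb : b ∈ Y') :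
    b ∈ Y₁' ∨ (∃ a, a ∈ X ∧ a ∉ X₁ ∧ r (X.erase a) (Y'.erase b)) ∨
      (∃ b₂, b₂ ∉ Y' ∧ b₂ ∈ Y₁' ∧ r X (insert b₂ (Y'.erase b))) := by
  obtain ⟨v, hv, hex⟩ := hr X Y' X₁ Y₁' h h1 (Sum.inr b) hb
  match v with
  | Sum.inl a =>
    simp only [Exchangeable] at hex
    rcases hex with ⟨_, ha, hr'⟩ | ⟨hb', _, _⟩
    · exact Or.inr (Or.inl ⟨a, ha, hv, hr'⟩)
    · exact absurd hb hb'
  | Sum.inr b₂ =>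
    simp only [Exchangeable] at hex
    rcases hex with rfl | ⟨_, hb₂, hr'⟩ | ⟨hb', _, _⟩
    · exact Or.inl hv
    · exact Or.inr (Or.inr ⟨b₂, hb₂, hv, hr'⟩)
    · exact absurd hb hb'

theorem exch_left {r : Finset A → Finset B → Prop} (hr : ExchAxiom r)
    {X X₁ : Finset A} {Y' Y₁' : Finset B} (h : r X Y') (h1 : r X₁ Y₁') {a : A} (ha : a ∉ X) :
    a ∉ X₁ ∨ (∃ a₂, a₂ ∈ X ∧ a₂ ∉ X₁ ∧ r (insert a (X.erase a₂)) Y') ∨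
      (∃ b, b ∉ Y' ∧ b ∈ Y₁' ∧ r (insert a X) (insert b Y')) := by
  obtain ⟨v, hv, hex⟩ := hr X Y' X₁ Y₁' h h1 (Sum.inl a) ha
  match v with
  | Sum.inl a₂ =>
    simp only [Exchangeable] at hex
    rcases hex with rfl | ⟨ha', _, _⟩ | ⟨_, ha₂, hr'⟩
    · exact Or.inl hv
    · exact absurd ha' ha
    · exact Or.inr (Or.inl ⟨a₂, ha₂, hv, hr'⟩)
  | Sum.inr b =>
    simp only [Exchangeable] at hex
    rcases hex with ⟨ha', _, _⟩ | ⟨_, hb, hr'⟩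
    · exact absurd ha' ha
    · exact Or.inr (Or.inr ⟨b, hb, hv, hr'⟩)
end ELemmas

section Bal
variable {A B : Type*} [DecidableEq A] [DecidableEq B] {r : Finset A → Finset B → Prop}

theorem bal_aux (hr : ExchAxiom r) :
    ∀ (m : ℕ) (X : Finset A) (Y : Finset B) (X₁ : Finset A) (Y₁ : Finset B),
      (X₁ \ X).card + (Y \ Y₁).card = m → r X Y → r X₁ Y₁ →
      (X₁ \ X).card + (Y \ Y₁).card = (X \ X₁).card + (Y₁ \ Y).card := by
  intro m
  induction m using Nat.strong_induction_on with
  | _ m IH =>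
    intro X Y X₁ Y₁ hm h h1
    rcases Nat.eq_zero_or_pos m with rfl | hpos
    · -- X₁ ⊆ X, Y ⊆ Y₁; show other side empty
      have hX1 : X₁ \ X = ∅ := card_eq_zero.mp (by omega)
      have hY1 : Y \ Y₁ = ∅ := card_eq_zero.mp (by omega)
      have hXsub : X₁ ⊆ X := sdiff_eq_empty_iff_subset.mp hX1
      have hYsub : Y ⊆ Y₁ := sdiff_eq_empty_iff_subset.mp hY1
      have hx2 : X \ X₁ = ∅ := by
        by_contra hc
        obtain ⟨a, ha⟩ := nonempty_iff_ne_empty.mpr hc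
        rw [mem_sdiff] at ha
        rcases exch_left hr h1 h (a := a) ha.2 with h' | ⟨a₂, ha₂, ha₂', _⟩ | ⟨b, hb, hb', _⟩
        · exact h' ha.1
        · exact ha₂' (hXsub ha₂)
        · exact hb (hYsub hb')
      have hy2 : Y₁ \ Y = ∅ := by
        by_contra hc
        obtain ⟨b, hb⟩ := nonempty_iff_ne_empty.mpr hc
        rw [mem_sdiff] at hb
        rcases exch_right hr h1 h (b := b) hb.1 with h' | ⟨a, ha, ha', _⟩ | ⟨b₂, hb₂, hb₂', _⟩
        · exact hb.2 h'
        · exact ha' (hXsub ha)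
        · exact hb₂ (hYsub hb₂')
      rw [hx2, hy2]; simpa using hm
    · -- pick an element
      rcases Nat.lt_or_ge 0 ((Y \ Y₁).card) with hY | hY
      · obtain ⟨b, hb⟩ := card_pos.mp hY
        rw [mem_sdiff] at hb
        rcases exch_right hr h h1 (b := b) hb.1 with h' | ⟨a, ha, ha', hr'⟩ | ⟨b₂, hb₂, hb₂', hr'⟩
        · exact absurd h' hb.2
        · have e1 : X₁ \ X.erase a = X₁ \ X := hsd1 ha'
          have e2 : (Y.erase b) \ Y₁ = (Y \ Y₁).erase b := hsd2
          have e3 : (X.erase a) \ X₁ = (X \ X₁).erase a := hsd2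
          have e4 : Y₁ \ (Y.erase b) = Y₁ \ Y := hsd1 hb.2
          have hcard := IH (m - 1) (by omega) (X.erase a) (Y.erase b) X₁ Y₁
            (by rw [e1, e2, card_erase_of_mem (mem_sdiff.mpr hb)]; omega) hr' h1
          rw [e1, e2, e3, e4, card_erase_of_mem (mem_sdiff.mpr hb),
            card_erase_of_mem (mem_sdiff.mpr ⟨ha, ha'⟩)] at hcard
          have hax : 0 < (X \ X₁).card := card_pos.mpr ⟨a, mem_sdiff.mpr ⟨ha, ha'⟩⟩
          omega
        · have e2 : (insert b₂ (Y.erase b)) \ Y₁ = (Y \ Y₁).erase b := by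
            rw [hsd5 hb₂', hsd2]
          have e4 : Y₁ \ (insert b₂ (Y.erase b)) = (Y₁ \ Y).erase b₂ := by
            rw [hsd3 hb₂', hsd1 hb.2]
          have hcard := IH (m - 1) (by omega) X (insert b₂ (Y.erase b)) X₁ Y₁
            (by rw [e2, card_erase_of_mem (mem_sdiff.mpr hb)]; omega) hr' h1
          rw [e2, e4, card_erase_of_mem (mem_sdiff.mpr hb),
            card_erase_of_mem (mem_sdiff.mpr ⟨hb₂', hb₂⟩)] at hcard
          have hby : 0 < (Y₁ \ Y).card := card_pos.mpr ⟨b₂, mem_sdiff.mpr ⟨hb₂', hb₂⟩⟩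
          omega
      · have hX : 0 < (X₁ \ X).card := by omega
        obtain ⟨a, ha⟩ := card_pos.mp hX
        rw [mem_sdiff] at ha
        rcases exch_left hr h h1 (a := a) ha.2 with h' | ⟨a₂, ha₂, ha₂', hr'⟩ | ⟨b, hb, hb', hr'⟩
        · exact absurd ha.1 h'
        · have e1 : X₁ \ (insert a (X.erase a₂)) = (X₁ \ X).erase a := by
            rw [hsd3 ha.1, hsd1 ha₂']
          have e3 : (insert a (X.erase a₂)) \ X₁ = (X \ X₁).erase a₂ := by
            rw [hsd5 ha.1, hsd2]
          have hcard := IH (m - 1) (by omega) (insert a (X.erase a₂)) Y X₁ Y₁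
            (by rw [e1, card_erase_of_mem (mem_sdiff.mpr ha)]; omega) hr' h1
          rw [e1, e3, card_erase_of_mem (mem_sdiff.mpr ha),
            card_erase_of_mem (mem_sdiff.mpr ⟨ha₂, ha₂'⟩)] at hcard
          have hax : 0 < (X \ X₁).card := card_pos.mpr ⟨a₂, mem_sdiff.mpr ⟨ha₂, ha₂'⟩⟩
          omega
        · have e1 : X₁ \ (insert a X) = (X₁ \ X).erase a := hsd3 ha.1
          have e2 : (insert b Y) \ Y₁ = Y \ Y₁ := hsd5 hb'
          have e3 : (insert a X) \ X₁ = X \ X₁ := hsd5 ha.1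
          have e4 : Y₁ \ (insert b Y) = (Y₁ \ Y).erase b := hsd3 hb'
          have hcard := IH (m - 1) (by omega) (insert a X) (insert b Y) X₁ Y₁
            (by rw [e1, e2, card_erase_of_mem (mem_sdiff.mpr ha)]; omega) hr' h1
          rw [e1, e2, e3, e4, card_erase_of_mem (mem_sdiff.mpr ha),
            card_erase_of_mem (mem_sdiff.mpr ⟨hb', hb⟩)] at hcard
          have hby : 0 < (Y₁ \ Y).card := card_pos.mpr ⟨b, mem_sdiff.mpr ⟨hb', hb⟩⟩
          omega

theorem bal (hr : ExchAxiom r) {X X₁ : Finset A} {Y Y₁ : Finset B} (h : r X Y) (h1 : r X₁ Y₁) :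
    (X₁ \ X).card + (Y \ Y₁).card = (X \ X₁).card + (Y₁ \ Y).card :=
  bal_aux hr _ X Y X₁ Y₁ rfl h h1
end Bal

section Dual
variable {A B : Type*} [DecidableEq A] [DecidableEq B] {r : Finset A → Finset B → Prop}

theorem dual_core (hr : ExchAxiom r) :
    ∀ (n : ℕ) (X : Finset A) (Y : Finset B) (X₁ : Finset A) (Y₁ : Finset B),
      (X \ X₁).card + (Y₁ \ Y).card = n → r X Y → r X₁ Y₁ →
      (∀ b, b ∈ Y₁ → b ∉ Y →
         (∃ b₂, b₂ ∈ Y ∧ b₂ ∉ Y₁ ∧ r X (insert b (Y.erase b₂))) ∨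
         (∃ a, a ∈ X₁ ∧ a ∉ X ∧ r (insert a X) (insert b Y))) ∧
      (∀ a, a ∈ X → a ∉ X₁ →
         (∃ a₂, a₂ ∈ X₁ ∧ a₂ ∉ X ∧ r (insert a₂ (X.erase a)) Y) ∨
         (∃ b, b ∈ Y ∧ b ∉ Y₁ ∧ r (X.erase a) (Y.erase b))) := by
  intro n
  induction n using Nat.strong_induction_on with
  | _ n IH =>
    intro X Y X₁ Y₁ hn h h1
    constructor
    · -- part b
      intro b hb hbY
      have hbmem : b ∈ Y₁ \ Y := mem_sdiff.mpr ⟨hb, hbY⟩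
      by_cases hst : ∃ b', b' ∈ Y₁ \ Y ∧ b' ≠ b
      · -- step using b'
        obtain ⟨b', hb', hne⟩ := hst
        rw [mem_sdiff] at hb'
        rcases exch_right hr h1 h (b := b') hb'.1 with h' | ⟨a, ha, ha', hr'⟩ | ⟨b₂', hb₂', hb₂'', hr'⟩
        · exact absurd h' hb'.2
        · -- (X₁.erase a, Y₁.erase b')
          have e1 : X \ (X₁.erase a) = X \ X₁ := hsd1 ha'
          have e2 : (Y₁.erase b') \ Y = (Y₁ \ Y).erase b' := hsd2
          have hcard : (X \ X₁.erase a).card + ((Y₁.erase b') \ Y).card = n - 1 := by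
            rw [e1, e2, card_erase_of_mem (mem_sdiff.mpr hb')]
            have : 0 < (Y₁ \ Y).card := card_pos.mpr ⟨b', mem_sdiff.mpr hb'⟩
            omega
          have hnpos : 0 < n := by
            have : 0 < (Y₁ \ Y).card := card_pos.mpr ⟨b', mem_sdiff.mpr hb'⟩
            omega
          obtain ⟨IHb, _⟩ := IH (n-1) (by omega) X Y (X₁.erase a) (Y₁.erase b') hcard h hr'
          rcases IHb b (mem_erase.mpr ⟨Ne.symm hne, hb⟩) hbY with ⟨b₂, hm1, hm2, hm3⟩ | ⟨a', hm1, hm2, hm3⟩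
          · refine Or.inl ⟨b₂, hm1, ?_, hm3⟩
            intro hb₂Y₁
            exact hm2 (mem_erase.mpr ⟨by rintro rfl; exact hb'.2 hm1, hb₂Y₁⟩)
          · exact Or.inr ⟨a', mem_of_mem_erase hm1, hm2, hm3⟩
        · -- (X₁, insert b₂' (Y₁.erase b'))
          have e2 : (insert b₂' (Y₁.erase b')) \ Y = (Y₁ \ Y).erase b' := by
            rw [hsd5 hb₂'', hsd2]
          have hcard : (X \ X₁).card + ((insert b₂' (Y₁.erase b')) \ Y).card = n - 1 := by
            rw [e2, card_erase_of_mem (mem_sdiff.mpr hb')]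
            have : 0 < (Y₁ \ Y).card := card_pos.mpr ⟨b', mem_sdiff.mpr hb'⟩
            omega
          obtain ⟨IHb, _⟩ := IH (n-1)
            (by have : 0 < (Y₁ \ Y).card := card_pos.mpr ⟨b', mem_sdiff.mpr hb'⟩; omega)
            X Y X₁ (insert b₂' (Y₁.erase b')) hcard h hr'
          have hbmem' : b ∈ insert b₂' (Y₁.erase b') :=
            mem_insert_of_mem (mem_erase.mpr ⟨Ne.symm hne, hb⟩)
          rcases IHb b hbmem' hbY with ⟨b₂, hm1, hm2, hm3⟩ | ⟨a', hm1, hm2, hm3⟩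
          · refine Or.inl ⟨b₂, hm1, ?_, hm3⟩
            intro hb₂Y₁
            have : b₂ ≠ b₂' := by rintro rfl; exact hm2 (mem_insert_self _ _)
            exact hm2 (mem_insert_of_mem (mem_erase.mpr ⟨by rintro rfl; exact hb'.2 hm1, hb₂Y₁⟩))
          · exact Or.inr ⟨a', hm1, hm2, hm3⟩
      · -- Y₁ \ Y = {b}
        push_neg at hst
        have hYsingle : Y₁ \ Y = {b} := by
          apply Subset.antisymm
          · intro x hx; rw [mem_singleton]; exact hst x hx
          · intro x hx; rw [mem_singleton] at hx; subst hx; exact hbmem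
        by_cases hX : ∃ a', a' ∈ X \ X₁
        · -- step using a' ∈ X \ X₁
          obtain ⟨a', ha'⟩ := hX
          rw [mem_sdiff] at ha'
          rcases exch_left hr h1 h (a := a') ha'.2 with h' | ⟨a₂, ha₂, ha₂', hr'⟩ | ⟨b'', hb'', hb''', hr'⟩
          · exact absurd ha'.1 h'
          · -- (insert a' (X₁.erase a₂), Y₁)
            have e1 : X \ (insert a' (X₁.erase a₂)) = (X \ X₁).erase a' := by
              rw [hsd3 ha'.1, hsd1 ha₂']
            have hcard : (X \ (insert a' (X₁.erase a₂))).card + (Y₁ \ Y).card = n - 1 := by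
              rw [e1, card_erase_of_mem (mem_sdiff.mpr ha')]
              have : 0 < (X \ X₁).card := card_pos.mpr ⟨a', mem_sdiff.mpr ha'⟩
              omega
            obtain ⟨IHb, _⟩ := IH (n-1)
              (by have : 0 < (X \ X₁).card := card_pos.mpr ⟨a', mem_sdiff.mpr ha'⟩; omega)
              X Y (insert a' (X₁.erase a₂)) Y₁ hcard h hr'
            rcases IHb b hb hbY with ⟨b₂, hm1, hm2, hm3⟩ | ⟨a'', hm1, hm2, hm3⟩
            · exact Or.inl ⟨b₂, hm1, hm2, hm3⟩
            · refine Or.inr ⟨a'', ?_, hm2, hm3⟩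
              rcases mem_insert.mp hm1 with rfl | hm1'
              · exact absurd ha'.1 hm2
              · exact mem_of_mem_erase hm1'
          · -- (insert a' X₁, insert b'' Y₁)
            have e1 : X \ (insert a' X₁) = (X \ X₁).erase a' := hsd3 ha'.1
            have e2 : (insert b'' Y₁) \ Y = Y₁ \ Y := hsd5 hb'''
            have hcard : (X \ (insert a' X₁)).card + ((insert b'' Y₁) \ Y).card = n - 1 := by
              rw [e1, e2, card_erase_of_mem (mem_sdiff.mpr ha')]
              have : 0 < (X \ X₁).card := card_pos.mpr ⟨a', mem_sdiff.mpr ha'⟩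
              omega
            obtain ⟨IHb, _⟩ := IH (n-1)
              (by have : 0 < (X \ X₁).card := card_pos.mpr ⟨a', mem_sdiff.mpr ha'⟩; omega)
              X Y (insert a' X₁) (insert b'' Y₁) hcard h hr'
            rcases IHb b (mem_insert_of_mem hb) hbY with ⟨b₂, hm1, hm2, hm3⟩ | ⟨a'', hm1, hm2, hm3⟩
            · refine Or.inl ⟨b₂, hm1, fun hc => hm2 (mem_insert_of_mem hc), hm3⟩
            · refine Or.inr ⟨a'', ?_, hm2, hm3⟩
              rcases mem_insert.mp hm1 with rfl | hm1'
              · exact absurd ha'.1 hm2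
              · exact hm1'
        · -- base : X \ X₁ = ∅, Y₁ \ Y = {b}
          push_neg at hX
          have hXempty : X \ X₁ = ∅ := eq_empty_of_forall_notMem hX
          have hbal := bal hr h h1
          rw [hXempty, hYsingle] at hbal
          simp only [card_empty, card_singleton] at hbal
          rcases Nat.lt_or_ge 0 ((X₁ \ X).card) with hc | hc
          · -- X₁ \ X = {a}, Y \ Y₁ = ∅
            have hX1 : (X₁ \ X).card = 1 := by omega
            have hY1 : (Y \ Y₁).card = 0 := by omega
            obtain ⟨a, haeq⟩ := card_eq_one.mp hX1
            have hYe : Y \ Y₁ = ∅ := card_eq_zero.mp hY1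
            have hXeq : X₁ = insert a X := heq_insert hXempty haeq
            have hYeq : Y₁ = insert b Y := heq_insert hYe hYsingle
            have haX : a ∉ X := by
              have : a ∈ X₁ \ X := haeq ▸ mem_singleton_self a
              exact (mem_sdiff.mp this).2
            refine Or.inr ⟨a, ?_, haX, ?_⟩
            · rw [hXeq]; exact mem_insert_self a X
            · rw [← hXeq, ← hYeq]; exact h1
          · -- X₁ = X, Y \ Y₁ = {b₂}
            have hY1 : (Y \ Y₁).card = 1 := by omega
            have hX0 : X₁ \ X = ∅ := card_eq_zero.mp (by omega)
            obtain ⟨b₂, hbeq⟩ := card_eq_one.mp hY1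
            have hXeq : X₁ = X := heq_eq hXempty hX0
            have hYeq : Y₁ = insert b (Y.erase b₂) := heq_swapel hYsingle hbeq
            have hb₂ : b₂ ∈ Y ∧ b₂ ∉ Y₁ := by
              have : b₂ ∈ Y \ Y₁ := hbeq ▸ mem_singleton_self b₂
              exact mem_sdiff.mp this
            exact Or.inl ⟨b₂, hb₂.1, hb₂.2, by rw [← hYeq, ← hXeq]; exact h1⟩
    · -- part a
      intro a haX haX₁
      have hamem : a ∈ X \ X₁ := mem_sdiff.mpr ⟨haX, haX₁⟩
      by_cases hst : ∃ b', b' ∈ Y₁ \ Y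
      · obtain ⟨b', hb'⟩ := hst
        rw [mem_sdiff] at hb'
        rcases exch_right hr h1 h (b := b') hb'.1 with h' | ⟨a', ha', ha'', hr'⟩ | ⟨b₂', hb₂', hb₂'', hr'⟩
        · exact absurd h' hb'.2
        · have e1 : X \ (X₁.erase a') = X \ X₁ := hsd1 ha''
          have e2 : (Y₁.erase b') \ Y = (Y₁ \ Y).erase b' := hsd2
          have hcard : (X \ X₁.erase a').card + ((Y₁.erase b') \ Y).card = n - 1 := by
            rw [e1, e2, card_erase_of_mem (mem_sdiff.mpr hb')]
            have : 0 < (Y₁ \ Y).card := card_pos.mpr ⟨b', mem_sdiff.mpr hb'⟩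
            omega
          obtain ⟨_, IHa⟩ := IH (n-1)
            (by have : 0 < (Y₁ \ Y).card := card_pos.mpr ⟨b', mem_sdiff.mpr hb'⟩; omega)
            X Y (X₁.erase a') (Y₁.erase b') hcard h hr'
          rcases IHa a haX (fun hc => haX₁ (mem_of_mem_erase hc)) with
            ⟨a₂, hm1, hm2, hm3⟩ | ⟨b'', hm1, hm2, hm3⟩
          · exact Or.inl ⟨a₂, mem_of_mem_erase hm1, hm2, hm3⟩
          · refine Or.inr ⟨b'', hm1, ?_, hm3⟩
            intro hc
            exact hm2 (mem_erase.mpr ⟨by rintro rfl; exact hb'.2 hm1, hc⟩)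
        · have e2 : (insert b₂' (Y₁.erase b')) \ Y = (Y₁ \ Y).erase b' := by
            rw [hsd5 hb₂'', hsd2]
          have hcard : (X \ X₁).card + ((insert b₂' (Y₁.erase b')) \ Y).card = n - 1 := by
            rw [e2, card_erase_of_mem (mem_sdiff.mpr hb')]
            have : 0 < (Y₁ \ Y).card := card_pos.mpr ⟨b', mem_sdiff.mpr hb'⟩
            omega
          obtain ⟨_, IHa⟩ := IH (n-1)
            (by have : 0 < (Y₁ \ Y).card := card_pos.mpr ⟨b', mem_sdiff.mpr hb'⟩; omega)
            X Y X₁ (insert b₂' (Y₁.erase b')) hcard h hr'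
          rcases IHa a haX haX₁ with ⟨a₂, hm1, hm2, hm3⟩ | ⟨b'', hm1, hm2, hm3⟩
          · exact Or.inl ⟨a₂, hm1, hm2, hm3⟩
          · refine Or.inr ⟨b'', hm1, ?_, hm3⟩
            intro hc
            have hne : b'' ≠ b₂' := by rintro rfl; exact hm2 (mem_insert_self _ _)
            exact hm2 (mem_insert_of_mem (mem_erase.mpr ⟨by rintro rfl; exact hb'.2 hm1, hc⟩))
      · -- Y₁ \ Y = ∅
        push_neg at hst
        have hYempty : Y₁ \ Y = ∅ := eq_empty_of_forall_notMem hst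
        by_cases hX2 : ∃ a', a' ∈ X \ X₁ ∧ a' ≠ a
        · obtain ⟨a', ha', hne⟩ := hX2
          rw [mem_sdiff] at ha'
          rcases exch_left hr h1 h (a := a') ha'.2 with h' | ⟨a₂, ha₂, ha₂', hr'⟩ | ⟨b'', hb'', hb''', hr'⟩
          · exact absurd ha'.1 h'
          · have e1 : X \ (insert a' (X₁.erase a₂)) = (X \ X₁).erase a' := by
              rw [hsd3 ha'.1, hsd1 ha₂']
            have hcard : (X \ (insert a' (X₁.erase a₂))).card + (Y₁ \ Y).card = n - 1 := by
              rw [e1, card_erase_of_mem (mem_sdiff.mpr ha')]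
              have : 0 < (X \ X₁).card := card_pos.mpr ⟨a', mem_sdiff.mpr ha'⟩
              omega
            obtain ⟨_, IHa⟩ := IH (n-1)
              (by have : 0 < (X \ X₁).card := card_pos.mpr ⟨a', mem_sdiff.mpr ha'⟩; omega)
              X Y (insert a' (X₁.erase a₂)) Y₁ hcard h hr'
            have haX₁' : a ∉ insert a' (X₁.erase a₂) := by
              intro hc
              rcases mem_insert.mp hc with rfl | hc'
              · exact hne rfl
              · exact haX₁ (mem_of_mem_erase hc')
            rcases IHa a haX haX₁' with ⟨a₂', hm1, hm2, hm3⟩ | ⟨b'', hm1, hm2, hm3⟩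
            · refine Or.inl ⟨a₂', ?_, hm2, hm3⟩
              rcases mem_insert.mp hm1 with rfl | hm1'
              · exact absurd ha'.1 hm2
              · exact mem_of_mem_erase hm1'
            · exact Or.inr ⟨b'', hm1, hm2, hm3⟩
          · have e1 : X \ (insert a' X₁) = (X \ X₁).erase a' := hsd3 ha'.1
            have e2 : (insert b'' Y₁) \ Y = Y₁ \ Y := hsd5 hb'''
            have hcard : (X \ (insert a' X₁)).card + ((insert b'' Y₁) \ Y).card = n - 1 := by
              rw [e1, e2, card_erase_of_mem (mem_sdiff.mpr ha')]
              have : 0 < (X \ X₁).card := card_pos.mpr ⟨a', mem_sdiff.mpr ha'⟩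
              omega
            obtain ⟨_, IHa⟩ := IH (n-1)
              (by have : 0 < (X \ X₁).card := card_pos.mpr ⟨a', mem_sdiff.mpr ha'⟩; omega)
              X Y (insert a' X₁) (insert b'' Y₁) hcard h hr'
            have haX₁' : a ∉ insert a' X₁ := by
              intro hc
              rcases mem_insert.mp hc with rfl | hc'
              · exact hne rfl
              · exact haX₁ hc'
            rcases IHa a haX haX₁' with ⟨a₂', hm1, hm2, hm3⟩ | ⟨b₃, hm1, hm2, hm3⟩
            · refine Or.inl ⟨a₂', ?_, hm2, hm3⟩
              rcases mem_insert.mp hm1 with rfl | hm1'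
              · exact absurd ha'.1 hm2
              · exact hm1'
            · refine Or.inr ⟨b₃, hm1, fun hc => hm2 (mem_insert_of_mem hc), hm3⟩
        · -- base : X \ X₁ = {a}, Y₁ \ Y = ∅
          push_neg at hX2
          have hXsingle : X \ X₁ = {a} := by
            apply Subset.antisymm
            · intro x hx; rw [mem_singleton]; exact hX2 x hx
            · intro x hx; rw [mem_singleton] at hx; subst hx; exact hamem
          have hbal := bal hr h h1
          rw [hXsingle, hYempty] at hbal
          simp only [card_empty, card_singleton] at hbal
          rcases Nat.lt_or_ge 0 ((X₁ \ X).card) with hc | hc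
          · have hX1 : (X₁ \ X).card = 1 := by omega
            have hY1 : Y \ Y₁ = ∅ := card_eq_zero.mp (by omega)
            obtain ⟨a₂, haeq⟩ := card_eq_one.mp hX1
            have hXeq : X₁ = insert a₂ (X.erase a) := heq_swapel haeq hXsingle
            have hYeq : Y₁ = Y := heq_eq hY1 hYempty
            have ha₂ : a₂ ∈ X₁ ∧ a₂ ∉ X := by
              have : a₂ ∈ X₁ \ X := haeq ▸ mem_singleton_self a₂
              exact mem_sdiff.mp this
            exact Or.inl ⟨a₂, ha₂.1, ha₂.2, by rw [← hXeq, ← hYeq]; exact h1⟩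
          · have hY1 : (Y \ Y₁).card = 1 := by omega
            have hX0 : X₁ \ X = ∅ := card_eq_zero.mp (by omega)
            obtain ⟨b, hbeq⟩ := card_eq_one.mp hY1
            have hXeq : X₁ = X.erase a := heq_erase hX0 hXsingle
            have hYeq : Y₁ = Y.erase b := heq_erase hYempty hbeq
            have hb : b ∈ Y ∧ b ∉ Y₁ := by
              have : b ∈ Y \ Y₁ := hbeq ▸ mem_singleton_self b
              exact mem_sdiff.mp this
            exact Or.inr ⟨b, hb.1, hb.2, by rw [← hXeq, ← hYeq]; exact h1⟩
end Dual

def swapRel {A B : Type*} (r : Finset A → Finset B → Prop) :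
    Finset B → Finset A → Prop := fun Y X => r X Y

theorem exch_swap {A B : Type*} [DecidableEq A] [DecidableEq B]
    {r : Finset A → Finset B → Prop} (hr : ExchAxiom r) : ExchAxiom (swapRel r) := by
  intro Y X Y₁ X₁ h h1 u hu
  obtain ⟨hb, ha⟩ := dual_core hr _ X Y X₁ Y₁ rfl h h1
  match u with
  | Sum.inl b =>
    have hbY : b ∉ Y := hu
    by_cases hbY₁ : b ∈ Y₁
    · rcases hb b hbY₁ hbY with ⟨b₂, hm1, hm2, hm3⟩ | ⟨a, hm1, hm2, hm3⟩
      · exact ⟨Sum.inl b₂, hm2, Or.inr (Or.inr ⟨hbY, hm1, hm3⟩)⟩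
      · exact ⟨Sum.inr a, hm1, Or.inr ⟨hbY, hm2, hm3⟩⟩
    · exact ⟨Sum.inl b, hbY₁, Or.inl rfl⟩
  | Sum.inr a =>
    have haX : a ∈ X := hu
    by_cases haX₁ : a ∈ X₁
    · exact ⟨Sum.inr a, haX₁, Or.inl rfl⟩
    · rcases ha a haX haX₁ with ⟨a₂, hm1, hm2, hm3⟩ | ⟨b, hm1, hm2, hm3⟩
      · exact ⟨Sum.inr a₂, hm1, Or.inr (Or.inl ⟨haX, hm2, hm3⟩)⟩
      · exact ⟨Sum.inl b, hm2, Or.inl ⟨haX, hm1, hm3⟩⟩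

noncomputable section Compose
variable {A B C : Type*} [DecidableEq A] [DecidableEq B] [DecidableEq C]
variable (ρ : Finset A → Finset B → Prop) (σ : Finset B → Finset C → Prop)

def kapSet : Set ℕ := {n | ∃ X Y' Y Z, ρ X Y' ∧ σ Y Z ∧ (Y \ Y').card = n}
def lamSet : Set ℕ := {n | ∃ X Y' Y Z, ρ X Y' ∧ σ Y Z ∧ (Y' \ Y).card = n}
def kap : ℕ := sInf (kapSet ρ σ)
def lam : ℕ := sInf (lamSet ρ σ)

variable {ρ σ}

theorem kap_le {X Y' Y Z} (h1 : ρ X Y') (h2 : σ Y Z) : kap ρ σ ≤ (Y \ Y').card :=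
  Nat.sInf_le ⟨X, Y', Y, Z, h1, h2, rfl⟩
theorem lam_le {X Y' Y Z} (h1 : ρ X Y') (h2 : σ Y Z) : lam ρ σ ≤ (Y' \ Y).card :=
  Nat.sInf_le ⟨X, Y', Y, Z, h1, h2, rfl⟩

theorem kap_mem (hne : ∃ X Y', ρ X Y') (hne' : ∃ Y Z, σ Y Z) :
    ∃ X Y' Y Z, ρ X Y' ∧ σ Y Z ∧ (Y \ Y').card = kap ρ σ := by
  obtain ⟨X, Y', h1⟩ := hne; obtain ⟨Y, Z, h2⟩ := hne'
  exact Nat.sInf_mem (⟨_, X, Y', Y, Z, h1, h2, rfl⟩ : (kapSet ρ σ).Nonempty)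
theorem lam_mem (hne : ∃ X Y', ρ X Y') (hne' : ∃ Y Z, σ Y Z) :
    ∃ X Y' Y Z, ρ X Y' ∧ σ Y Z ∧ (Y' \ Y).card = lam ρ σ := by
  obtain ⟨X, Y', h1⟩ := hne; obtain ⟨Y, Z, h2⟩ := hne'
  exact Nat.sInf_mem (⟨_, X, Y', Y, Z, h1, h2, rfl⟩ : (lamSet ρ σ).Nonempty)

variable (ρ σ)

def Tri1 : Prop :=
  ∀ X Y' X₁ Y₁', ρ X Y' → ρ X₁ Y₁' → ∀ b, b ∈ Y' → b ∉ Y₁' →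
    (∃ X₂, ρ X₂ (Y'.erase b)) ∨
    (∃ b₂ X₂, b₂ ∉ Y' ∧ b₂ ∈ Y₁' ∧ ρ X₂ (insert b₂ (Y'.erase b)))

def Tri2 : Prop :=
  ∀ Y Z Y₁ Z₁, σ Y Z → σ Y₁ Z₁ → ∀ b, b ∉ Y → b ∈ Y₁ →
    (∃ b', b' ∈ Y ∧ b' ∉ Y₁ ∧ σ (insert b (Y.erase b')) Z) ∨
    (∃ Z₂, σ (insert b Y) Z₂)

variable {ρ σ}

theorem ldesc_weak (T1 : Tri1 ρ) (T2 : Tri2 σ) :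
    ∀ (Φ : ℕ) (X : Finset A) (Y' Y : Finset B) (Z : Finset C)
      (X₁ : Finset A) (Y₁' Y₁ : Finset B) (Z₁ : Finset C),
      (Y' \ Y₁').card + (Y₁' \ Y').card + (Y \ Y₁).card + (Y₁ \ Y).card = Φ →
      ρ X Y' → σ Y Z → ρ X₁ Y₁' → σ Y₁ Z₁ →
      (Y₁' \ Y₁).card < (Y' \ Y).card →
      ∃ X₂ Y₂' Y₂ Z₂, ρ X₂ Y₂' ∧ σ Y₂ Z₂ ∧
        (Y₂ \ Y₂').card ≤ (Y \ Y').card ∧ (Y₂' \ Y₂).card ≤ (Y' \ Y).card ∧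
        (Y₂ \ Y₂').card + (Y₂' \ Y₂).card < (Y \ Y').card + (Y' \ Y).card := by
  intro Φ
  induction Φ using Nat.strong_induction_on with
  | _ Φ IH =>
    intro X Y' Y Z X₁ Y₁' Y₁ Z₁ hΦ h1 h2 h1' h2' hlt
    obtain ⟨b, hbm, hbm'⟩ := hpigeon hlt
    rw [mem_sdiff] at hbm
    obtain ⟨hbY', hbY⟩ := hbm
    by_cases hb1 : b ∈ Y₁'
    · -- then b ∈ Y₁ : use Tri2
      have hbY₁ : b ∈ Y₁ := by
        by_contra hc; exact hbm' (mem_sdiff.mpr ⟨hb1, hc⟩)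
      rcases T2 Y Z Y₁ Z₁ h2 h2' b hbY hbY₁ with ⟨b', hb'Y, hb'Y₁, hσ'⟩ | ⟨Z₂, hσ'⟩
      · by_cases hb'Y' : b' ∈ Y'
        · -- neutral swap on Y ; recurse
          set Y₂ := insert b (Y.erase b') with hY₂
          have ek : Y₂ \ Y' = Y \ Y' := by
            rw [hY₂, hsd5 hbY', hsd2, erase_eq_of_notMem (by simp [hb'Y'])]
          have el : Y' \ Y₂ = (insert b' (Y' \ Y)).erase b := by
            rw [hY₂, hsd3 hbY', hsd7 hb'Y']
          have elc : (Y' \ Y₂).card = (Y' \ Y).card := by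
            rw [el, card_erase_of_mem, card_insert_of_notMem (by simp [hb'Y])]
            · omega
            · exact mem_insert_of_mem (mem_sdiff.mpr ⟨hbY', hbY⟩)
          have em1 : (Y₂ \ Y₁).card = (Y \ Y₁).card - 1 := by
            rw [hY₂, hsd5 hbY₁, hsd2, card_erase_of_mem (mem_sdiff.mpr ⟨hb'Y, hb'Y₁⟩)]
          have em2 : (Y₁ \ Y₂).card = (Y₁ \ Y).card - 1 := by
            rw [hY₂, hsd3 hbY₁, hsd1 hb'Y₁, card_erase_of_mem (mem_sdiff.mpr ⟨hbY₁, hbY⟩)]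
          have hm1pos : 0 < (Y \ Y₁).card := card_pos.mpr ⟨b', mem_sdiff.mpr ⟨hb'Y, hb'Y₁⟩⟩
          have hm2pos : 0 < (Y₁ \ Y).card := card_pos.mpr ⟨b, mem_sdiff.mpr ⟨hbY₁, hbY⟩⟩
          obtain ⟨X₂, Y₂', Y₂'', Z₂, c1, c2, c3, c4, c5⟩ :=
            IH ((Y' \ Y₁').card + (Y₁' \ Y').card + (Y₂ \ Y₁).card + (Y₁ \ Y₂).card)
              (by rw [em1, em2]; omega) X Y' Y₂ Z X₁ Y₁' Y₁ Z₁ rfl h1 hσ' h1' h2'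
              (by rw [elc]; exact hlt)
          refine ⟨X₂, Y₂', Y₂'', Z₂, c1, c2, ?_, ?_, ?_⟩
          · rw [ek] at c3; exact c3
          · rw [elc] at c4; exact c4
          · rw [ek, elc] at c5; exact c5
        · -- O3
          refine ⟨X, Y', insert b (Y.erase b'), Z, h1, hσ', ?_, ?_, ?_⟩
          · rw [hsd5 hbY', hsd2, card_erase_of_mem (mem_sdiff.mpr ⟨hb'Y, hb'Y'⟩)]; omega
          · rw [hsd3 hbY', hsd1 hb'Y', card_erase_of_mem (mem_sdiff.mpr ⟨hbY', hbY⟩)]; omega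
          · rw [hsd5 hbY', hsd2, card_erase_of_mem (mem_sdiff.mpr ⟨hb'Y, hb'Y'⟩),
              hsd3 hbY', hsd1 hb'Y', card_erase_of_mem (mem_sdiff.mpr ⟨hbY', hbY⟩)]
            have : 0 < (Y \ Y').card := card_pos.mpr ⟨b', mem_sdiff.mpr ⟨hb'Y, hb'Y'⟩⟩
            have : 0 < (Y' \ Y).card := card_pos.mpr ⟨b, mem_sdiff.mpr ⟨hbY', hbY⟩⟩
            omega
      · -- O4 : grow
        refine ⟨X, Y', insert b Y, Z₂, h1, hσ', ?_, ?_, ?_⟩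
        · rw [hsd5 hbY']
        · rw [hsd3 hbY', card_erase_of_mem (mem_sdiff.mpr ⟨hbY', hbY⟩)]; omega
        · rw [hsd5 hbY', hsd3 hbY', card_erase_of_mem (mem_sdiff.mpr ⟨hbY', hbY⟩)]
          have : 0 < (Y' \ Y).card := card_pos.mpr ⟨b, mem_sdiff.mpr ⟨hbY', hbY⟩⟩
          omega
    · -- b ∉ Y₁' : use Tri1
      rcases T1 X Y' X₁ Y₁' h1 h1' b hbY' hb1 with ⟨X₂, hρ'⟩ | ⟨b₂, X₂, hb₂Y', hb₂Y₁', hρ'⟩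
      · -- O1 : erase
        refine ⟨X₂, Y'.erase b, Y, Z, hρ', h2, ?_, ?_, ?_⟩
        · rw [hsd1 hbY]
        · rw [hsd2, card_erase_of_mem (mem_sdiff.mpr ⟨hbY', hbY⟩)]; omega
        · rw [hsd1 hbY, hsd2, card_erase_of_mem (mem_sdiff.mpr ⟨hbY', hbY⟩)]
          have : 0 < (Y' \ Y).card := card_pos.mpr ⟨b, mem_sdiff.mpr ⟨hbY', hbY⟩⟩
          omega
      · by_cases hb₂Y : b₂ ∈ Y
        · -- O3 : swap with b₂ ∈ Y
          refine ⟨X₂, insert b₂ (Y'.erase b), Y, Z, hρ', h2, ?_, ?_, ?_⟩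
          · rw [hsd3 hb₂Y, hsd1 hbY, card_erase_of_mem (mem_sdiff.mpr ⟨hb₂Y, hb₂Y'⟩)]; omega
          · rw [hsd5 hb₂Y, hsd2, card_erase_of_mem (mem_sdiff.mpr ⟨hbY', hbY⟩)]; omega
          · rw [hsd3 hb₂Y, hsd1 hbY, card_erase_of_mem (mem_sdiff.mpr ⟨hb₂Y, hb₂Y'⟩),
              hsd5 hb₂Y, hsd2, card_erase_of_mem (mem_sdiff.mpr ⟨hbY', hbY⟩)]
            have : 0 < (Y \ Y').card := card_pos.mpr ⟨b₂, mem_sdiff.mpr ⟨hb₂Y, hb₂Y'⟩⟩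
            have : 0 < (Y' \ Y).card := card_pos.mpr ⟨b, mem_sdiff.mpr ⟨hbY', hbY⟩⟩
            omega
        · -- neutral swap on Y' ; recurse
          set Y'₂ := insert b₂ (Y'.erase b) with hY'₂
          have ek : Y \ Y'₂ = Y \ Y' := by rw [hY'₂, hsd6 hb₂Y, hsd1 hbY]
          have el : Y'₂ \ Y = insert b₂ ((Y' \ Y).erase b) := by rw [hY'₂, hsd4 hb₂Y, hsd2]
          have elc : (Y'₂ \ Y).card = (Y' \ Y).card := by
            rw [el, card_insert_of_notMem (fun hc => hb₂Y' (mem_sdiff.mp (mem_of_mem_erase hc)).1),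
              card_erase_of_mem (mem_sdiff.mpr ⟨hbY', hbY⟩)]
            have : 0 < (Y' \ Y).card := card_pos.mpr ⟨b, mem_sdiff.mpr ⟨hbY', hbY⟩⟩
            omega
          have em1 : (Y'₂ \ Y₁').card = (Y' \ Y₁').card - 1 := by
            rw [hY'₂, hsd5 hb₂Y₁', hsd2, card_erase_of_mem (mem_sdiff.mpr ⟨hbY', hb1⟩)]
          have em2 : (Y₁' \ Y'₂).card = (Y₁' \ Y').card - 1 := by
            rw [hY'₂, hsd3 hb₂Y₁', hsd1 hb1, card_erase_of_mem (mem_sdiff.mpr ⟨hb₂Y₁', hb₂Y'⟩)]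
          have hm1pos : 0 < (Y' \ Y₁').card := card_pos.mpr ⟨b, mem_sdiff.mpr ⟨hbY', hb1⟩⟩
          have hm2pos : 0 < (Y₁' \ Y').card := card_pos.mpr ⟨b₂, mem_sdiff.mpr ⟨hb₂Y₁', hb₂Y'⟩⟩
          obtain ⟨X₃, Y₃', Y₃, Z₃, c1, c2, c3, c4, c5⟩ :=
            IH ((Y'₂ \ Y₁').card + (Y₁' \ Y'₂).card + (Y \ Y₁).card + (Y₁ \ Y).card)
              (by rw [em1, em2]; omega) X₂ Y'₂ Y Z X₁ Y₁' Y₁ Z₁ rfl hρ' h2 h1' h2'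
              (by rw [elc]; exact hlt)
          refine ⟨X₃, Y₃', Y₃, Z₃, c1, c2, ?_, ?_, ?_⟩
          · rw [ek] at c3; exact c3
          · rw [elc] at c4; exact c4
          · rw [ek, elc] at c5; exact c5
end Compose

noncomputable section Compose2
variable {A B C : Type*} [DecidableEq A] [DecidableEq B] [DecidableEq C]
variable {ρ : Finset A → Finset B → Prop} {σ : Finset B → Finset C → Prop}

theorem tri1_of_ex (hρ : ExchAxiom ρ) : Tri1 ρ := by
  intro X Y' X₁ Y₁' h h1 b hb hb1
  rcases exch_right hρ h h1 hb with h' | ⟨a, ha, ha', hr'⟩ | ⟨b₂, hb₂, hb₂', hr'⟩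
  · exact absurd h' hb1
  · exact Or.inl ⟨X.erase a, hr'⟩
  · exact Or.inr ⟨b₂, X, hb₂, hb₂', hr'⟩

theorem tri2_of_ex (hσ : ExchAxiom σ) : Tri2 σ := by
  intro Y Z Y₁ Z₁ h h1 b hb hb1
  rcases exch_left hσ h h1 hb with h' | ⟨b', hb', hb'', hr'⟩ | ⟨c, hc, hc', hr'⟩
  · exact absurd hb1 h'
  · exact Or.inl ⟨b', hb', hb'', hr'⟩
  · exact Or.inr ⟨insert c Z, hr'⟩

theorem sim (T1 : Tri1 ρ) (T2 : Tri2 σ)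
    (hne : ∃ X Y', ρ X Y') (hne' : ∃ Y Z, σ Y Z) :
    ∃ X Y' Y Z, ρ X Y' ∧ σ Y Z ∧ (Y \ Y').card = kap ρ σ ∧ (Y' \ Y).card = lam ρ σ := by
  obtain ⟨X, Y', Y, Z, h1, h2, hk⟩ := kap_mem hne hne'
  obtain ⟨Xl, Yl', Yl, Zl, hl1, hl2, hl⟩ := lam_mem hne hne'
  -- descend on l
  have main : ∀ (l : ℕ) (X : Finset A) (Y' Y : Finset B) (Z : Finset C),
      ρ X Y' → σ Y Z → (Y \ Y').card = kap ρ σ → (Y' \ Y).card = l →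
      ∃ X₂ Y₂' Y₂ Z₂, ρ X₂ Y₂' ∧ σ Y₂ Z₂ ∧
        (Y₂ \ Y₂').card = kap ρ σ ∧ (Y₂' \ Y₂).card = lam ρ σ := by
    intro l
    induction l using Nat.strong_induction_on with
    | _ l IH =>
      intro X Y' Y Z h1 h2 hk hlval
      rcases eq_or_lt_of_le (lam_le h1 h2) with heq | hlt
      · exact ⟨X, Y', Y, Z, h1, h2, hk, heq.symm⟩
      · rw [hlval] at hlt
        obtain ⟨X₂, Y₂', Y₂, Z₂, c1, c2, c3, c4, c5⟩ :=
          ldesc_weak T1 T2 _ X Y' Y Z Xl Yl' Yl Zl rfl h1 h2 hl1 hl2 (by omega)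
        have hk2 : (Y₂ \ Y₂').card = kap ρ σ :=
          le_antisymm (hk ▸ c3) (kap_le c1 c2)
        have hl2' : (Y₂' \ Y₂).card < l := by omega
        exact IH _ hl2' X₂ Y₂' Y₂ Z₂ c1 c2 hk2 rfl
  exact main _ X Y' Y Z h1 h2 hk rfl

theorem bcomp_iff {k l : ℕ} {X : Finset A} {Z : Finset C} :
    BComp ρ σ k l X Z ↔ ∃ Y Y', ρ X Y' ∧ σ Y Z ∧ (Y \ Y').card = k ∧ (Y' \ Y).card = l :=
  Iff.rfl

theorem totalType_eq (T1 : Tri1 ρ) (T2 : Tri2 σ)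
    (hne : ∃ X Y', ρ X Y') (hne' : ∃ Y Z, σ Y Z) :
    totalType ρ σ = kap ρ σ + lam ρ σ := by
  obtain ⟨X, Y', Y, Z, h1, h2, hk, hl⟩ := sim T1 T2 hne hne'
  apply le_antisymm
  · exact Nat.sInf_le ⟨kap ρ σ, lam ρ σ, rfl, X, Z, Y, Y', h1, h2, hk, hl⟩
  · refine le_csInf ⟨kap ρ σ + lam ρ σ, ⟨kap ρ σ, lam ρ σ, rfl, X, Z, Y, Y', h1, h2, hk, hl⟩⟩ ?_
    rintro m ⟨k, l, rfl, X', Z', Y'', Y''', h1', h2', hk', hl'⟩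
    have := kap_le h1' h2'
    have := lam_le h1' h2'
    omega

theorem typeK_eq (T1 : Tri1 ρ) (T2 : Tri2 σ)
    (hne : ∃ X Y', ρ X Y') (hne' : ∃ Y Z, σ Y Z) :
    TypeK ρ σ = kap ρ σ := by
  obtain ⟨X, Y', Y, Z, h1, h2, hk, hl⟩ := sim T1 T2 hne hne'
  have htot := totalType_eq T1 T2 hne hne'
  have hmem : kap ρ σ ∈ {k | ∃ l, k + l = totalType ρ σ ∧ ∃ X Z, BComp ρ σ k l X Z} :=
    ⟨lam ρ σ, htot.symm, X, Z, Y, Y', h1, h2, hk, hl⟩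
  have hin : TypeK ρ σ ∈ {k | ∃ l, k + l = totalType ρ σ ∧ ∃ X Z, BComp ρ σ k l X Z} :=
    Nat.sInf_mem ⟨_, hmem⟩
  obtain ⟨l, hsum, X', Z', Y'', Y''', h1', h2', hk', hl'⟩ := hin
  have h1k := kap_le h1' h2'
  have h1l := lam_le h1' h2'
  omega

theorem typeL_eq (T1 : Tri1 ρ) (T2 : Tri2 σ)
    (hne : ∃ X Y', ρ X Y') (hne' : ∃ Y Z, σ Y Z) :
    TypeL ρ σ = lam ρ σ := by
  obtain ⟨X, Y', Y, Z, h1, h2, hk, hl⟩ := sim T1 T2 hne hne'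
  have htot := totalType_eq T1 T2 hne hne'
  have hmem : lam ρ σ ∈ {l | ∃ k, k + l = totalType ρ σ ∧ ∃ X Z, BComp ρ σ k l X Z} :=
    ⟨kap ρ σ, htot.symm, X, Z, Y, Y', h1, h2, hk, hl⟩
  have hin : TypeL ρ σ ∈ {l | ∃ k, k + l = totalType ρ σ ∧ ∃ X Z, BComp ρ σ k l X Z} :=
    Nat.sInf_mem ⟨_, hmem⟩
  obtain ⟨k, hsum, X', Z', Y'', Y''', h1', h2', hk', hl'⟩ := hin
  have h1k := kap_le h1' h2'
  have h1l := lam_le h1' h2'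
  omega

theorem lax_iff (T1 : Tri1 ρ) (T2 : Tri2 σ)
    (hne : ∃ X Y', ρ X Y') (hne' : ∃ Y Z, σ Y Z) {X : Finset A} {Z : Finset C} :
    LaxComp ρ σ X Z ↔
      ∃ Y Y', ρ X Y' ∧ σ Y Z ∧ (Y \ Y').card = kap ρ σ ∧ (Y' \ Y).card = lam ρ σ := by
  have htot := totalType_eq T1 T2 hne hne'
  constructor
  · rintro ⟨k, l, hsum, Y, Y', h1, h2, hk, hl⟩
    have h1k := kap_le h1 h2
    have h1l := lam_le h1 h2
    have hkk : k = kap ρ σ := by omega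
    have hll : l = lam ρ σ := by omega
    exact ⟨Y, Y', h1, h2, by omega, by omega⟩
  · rintro ⟨Y, Y', h1, h2, hk, hl⟩
    exact ⟨kap ρ σ, lam ρ σ, htot.symm, Y, Y', h1, h2, hk, hl⟩
end Compose2

noncomputable section Strong
variable {A B C : Type*} [DecidableEq A] [DecidableEq B] [DecidableEq C]
variable {ρ : Finset A → Finset B → Prop} {σ : Finset B → Finset C → Prop}

theorem ldesc_strong (hρ : ExchAxiom ρ) (hσ : ExchAxiom σ) :
    ∀ (Φ : ℕ) (X : Finset A) (Y' Y : Finset B) (Z : Finset C)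
      (X₁ : Finset A) (Y₁' Y₁ : Finset B) (Z₁ : Finset C),
      (Y' \ Y₁').card + (Y₁' \ Y').card + (Y \ Y₁).card + (Y₁ \ Y).card = Φ →
      ρ X Y' → σ Y Z → ρ X₁ Y₁' → σ Y₁ Z₁ →
      (Y₁' \ Y₁).card < (Y' \ Y).card →
      ∃ X₂ Y₂' Y₂ Z₂, ρ X₂ Y₂' ∧ σ Y₂ Z₂ ∧
        (Y₂ \ Y₂').card ≤ (Y \ Y').card ∧ (Y₂' \ Y₂).card ≤ (Y' \ Y).card ∧
        (Y₂ \ Y₂').card + (Y₂' \ Y₂).card < (Y \ Y').card + (Y' \ Y).card ∧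
        ((X₂ = X ∧ Z₂ = Z) ∨
         ((Y₂' \ Y₂).card < (Y' \ Y).card ∧ Z₂ = Z ∧ ∃ a, a ∈ X ∧ a ∉ X₁ ∧ X₂ = X.erase a) ∨
         ((Y₂' \ Y₂).card < (Y' \ Y).card ∧ X₂ = X ∧ ∃ c, c ∈ Z₁ ∧ c ∉ Z ∧ Z₂ = insert c Z)) := by
  intro Φ
  induction Φ using Nat.strong_induction_on with
  | _ Φ IH =>
    intro X Y' Y Z X₁ Y₁' Y₁ Z₁ hΦ h1 h2 h1' h2' hlt
    obtain ⟨b, hbm, hbm'⟩ := hpigeon hlt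
    rw [mem_sdiff] at hbm
    obtain ⟨hbY', hbY⟩ := hbm
    by_cases hb1 : b ∈ Y₁'
    · -- then b ∈ Y₁ : use exch_left on σ
      have hbY₁ : b ∈ Y₁ := by
        by_contra hc; exact hbm' (mem_sdiff.mpr ⟨hb1, hc⟩)
      rcases exch_left hσ h2 h2' (a := b) hbY with h' | ⟨b', hb'Y, hb'Y₁, hσ'⟩ | ⟨c, hc, hc', hσ'⟩
      · exact absurd hbY₁ h'
      · by_cases hb'Y' : b' ∈ Y'
        · -- neutral swap on Y ; recurse
          set Y₂ := insert b (Y.erase b') with hY₂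
          have ek : Y₂ \ Y' = Y \ Y' := by
            rw [hY₂, hsd5 hbY', hsd2, erase_eq_of_notMem (by simp [hb'Y'])]
          have el : Y' \ Y₂ = (insert b' (Y' \ Y)).erase b := by
            rw [hY₂, hsd3 hbY', hsd7 hb'Y']
          have elc : (Y' \ Y₂).card = (Y' \ Y).card := by
            rw [el, card_erase_of_mem, card_insert_of_notMem (by simp [hb'Y])]
            · omega
            · exact mem_insert_of_mem (mem_sdiff.mpr ⟨hbY', hbY⟩)
          have em1 : (Y₂ \ Y₁).card = (Y \ Y₁).card - 1 := by
            rw [hY₂, hsd5 hbY₁, hsd2, card_erase_of_mem (mem_sdiff.mpr ⟨hb'Y, hb'Y₁⟩)]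
          have em2 : (Y₁ \ Y₂).card = (Y₁ \ Y).card - 1 := by
            rw [hY₂, hsd3 hbY₁, hsd1 hb'Y₁, card_erase_of_mem (mem_sdiff.mpr ⟨hbY₁, hbY⟩)]
          have hm1pos : 0 < (Y \ Y₁).card := card_pos.mpr ⟨b', mem_sdiff.mpr ⟨hb'Y, hb'Y₁⟩⟩
          have hm2pos : 0 < (Y₁ \ Y).card := card_pos.mpr ⟨b, mem_sdiff.mpr ⟨hbY₁, hbY⟩⟩
          obtain ⟨X₂, Y₂', Y₂'', Z₂, c1, c2, c3, c4, c5, c6⟩ :=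
            IH ((Y' \ Y₁').card + (Y₁' \ Y').card + (Y₂ \ Y₁).card + (Y₁ \ Y₂).card)
              (by rw [em1, em2]; omega) X Y' Y₂ Z X₁ Y₁' Y₁ Z₁ rfl h1 hσ' h1' h2'
              (by rw [elc]; exact hlt)
          refine ⟨X₂, Y₂', Y₂'', Z₂, c1, c2, ?_, ?_, ?_, ?_⟩
          · rw [ek] at c3; exact c3
          · rw [elc] at c4; exact c4
          · rw [ek, elc] at c5; exact c5
          · rw [elc] at c6; exact c6
        · -- O3
          refine ⟨X, Y', insert b (Y.erase b'), Z, h1, hσ', ?_, ?_, ?_, Or.inl ⟨rfl, rfl⟩⟩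
          · rw [hsd5 hbY', hsd2, card_erase_of_mem (mem_sdiff.mpr ⟨hb'Y, hb'Y'⟩)]; omega
          · rw [hsd3 hbY', hsd1 hb'Y', card_erase_of_mem (mem_sdiff.mpr ⟨hbY', hbY⟩)]; omega
          · rw [hsd5 hbY', hsd2, card_erase_of_mem (mem_sdiff.mpr ⟨hb'Y, hb'Y'⟩),
              hsd3 hbY', hsd1 hb'Y', card_erase_of_mem (mem_sdiff.mpr ⟨hbY', hbY⟩)]
            have : 0 < (Y \ Y').card := card_pos.mpr ⟨b', mem_sdiff.mpr ⟨hb'Y, hb'Y'⟩⟩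
            have : 0 < (Y' \ Y).card := card_pos.mpr ⟨b, mem_sdiff.mpr ⟨hbY', hbY⟩⟩
            omega
      · -- O4 : grow
        have hl : (Y' \ insert b Y).card = (Y' \ Y).card - 1 := by
          rw [hsd3 hbY', card_erase_of_mem (mem_sdiff.mpr ⟨hbY', hbY⟩)]
        have hlpos : 0 < (Y' \ Y).card := card_pos.mpr ⟨b, mem_sdiff.mpr ⟨hbY', hbY⟩⟩
        refine ⟨X, Y', insert b Y, insert c Z, h1, hσ', ?_, ?_, ?_,
          Or.inr (Or.inr ⟨?_, rfl, c, hc', hc, rfl⟩)⟩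
        · rw [hsd5 hbY']
        · omega
        · rw [hsd5 hbY']; omega
        · omega
    · -- b ∉ Y₁' : use exch_right on ρ
      rcases exch_right hρ h1 h1' (b := b) hbY' with h' | ⟨a, ha, ha', hρ'⟩ | ⟨b₂, hb₂Y', hb₂Y₁', hρ'⟩
      · exact absurd h' hb1
      · -- O1 : erase
        have hl : ((Y'.erase b) \ Y).card = (Y' \ Y).card - 1 := by
          rw [hsd2, card_erase_of_mem (mem_sdiff.mpr ⟨hbY', hbY⟩)]
        have hlpos : 0 < (Y' \ Y).card := card_pos.mpr ⟨b, mem_sdiff.mpr ⟨hbY', hbY⟩⟩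
        refine ⟨X.erase a, Y'.erase b, Y, Z, hρ', h2, ?_, ?_, ?_,
          Or.inr (Or.inl ⟨?_, rfl, a, ha, ha', rfl⟩)⟩
        · rw [hsd1 hbY]
        · omega
        · rw [hsd1 hbY]; omega
        · omega
      · by_cases hb₂Y : b₂ ∈ Y
        · -- O3
          refine ⟨X, insert b₂ (Y'.erase b), Y, Z, hρ', h2, ?_, ?_, ?_, Or.inl ⟨rfl, rfl⟩⟩
          · rw [hsd3 hb₂Y, hsd1 hbY, card_erase_of_mem (mem_sdiff.mpr ⟨hb₂Y, hb₂Y'⟩)]; omega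
          · rw [hsd5 hb₂Y, hsd2, card_erase_of_mem (mem_sdiff.mpr ⟨hbY', hbY⟩)]; omega
          · rw [hsd3 hb₂Y, hsd1 hbY, card_erase_of_mem (mem_sdiff.mpr ⟨hb₂Y, hb₂Y'⟩),
              hsd5 hb₂Y, hsd2, card_erase_of_mem (mem_sdiff.mpr ⟨hbY', hbY⟩)]
            have : 0 < (Y \ Y').card := card_pos.mpr ⟨b₂, mem_sdiff.mpr ⟨hb₂Y, hb₂Y'⟩⟩
            have : 0 < (Y' \ Y).card := card_pos.mpr ⟨b, mem_sdiff.mpr ⟨hbY', hbY⟩⟩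
            omega
        · -- neutral swap on Y' ; recurse
          set Y'₂ := insert b₂ (Y'.erase b) with hY'₂
          have ek : Y \ Y'₂ = Y \ Y' := by rw [hY'₂, hsd6 hb₂Y, hsd1 hbY]
          have el : Y'₂ \ Y = insert b₂ ((Y' \ Y).erase b) := by rw [hY'₂, hsd4 hb₂Y, hsd2]
          have elc : (Y'₂ \ Y).card = (Y' \ Y).card := by
            rw [el, card_insert_of_notMem (fun hc => hb₂Y' (mem_sdiff.mp (mem_of_mem_erase hc)).1),
              card_erase_of_mem (mem_sdiff.mpr ⟨hbY', hbY⟩)]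
            have : 0 < (Y' \ Y).card := card_pos.mpr ⟨b, mem_sdiff.mpr ⟨hbY', hbY⟩⟩
            omega
          have em1 : (Y'₂ \ Y₁').card = (Y' \ Y₁').card - 1 := by
            rw [hY'₂, hsd5 hb₂Y₁', hsd2, card_erase_of_mem (mem_sdiff.mpr ⟨hbY', hb1⟩)]
          have em2 : (Y₁' \ Y'₂).card = (Y₁' \ Y').card - 1 := by
            rw [hY'₂, hsd3 hb₂Y₁', hsd1 hb1, card_erase_of_mem (mem_sdiff.mpr ⟨hb₂Y₁', hb₂Y'⟩)]
          have hm1pos : 0 < (Y' \ Y₁').card := card_pos.mpr ⟨b, mem_sdiff.mpr ⟨hbY', hb1⟩⟩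
          have hm2pos : 0 < (Y₁' \ Y').card := card_pos.mpr ⟨b₂, mem_sdiff.mpr ⟨hb₂Y₁', hb₂Y'⟩⟩
          obtain ⟨X₃, Y₃', Y₃, Z₃, c1, c2, c3, c4, c5, c6⟩ :=
            IH ((Y'₂ \ Y₁').card + (Y₁' \ Y'₂).card + (Y \ Y₁).card + (Y₁ \ Y).card)
              (by rw [em1, em2]; omega) X Y'₂ Y Z X₁ Y₁' Y₁ Z₁ rfl hρ' h2 h1' h2'
              (by rw [elc]; exact hlt)
          refine ⟨X₃, Y₃', Y₃, Z₃, c1, c2, ?_, ?_, ?_, ?_⟩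
          · rw [ek] at c3; exact c3
          · rw [elc] at c4; exact c4
          · rw [ek, elc] at c5; exact c5
          · rw [elc] at c6; exact c6
end Strong

noncomputable section Needs
variable {A B C D : Type*} [DecidableEq A] [DecidableEq B] [DecidableEq C] [DecidableEq D]

theorem erase_insert_comm' {α : Type*} [DecidableEq α] {a b : α} (h : a ≠ b) (s : Finset α) :
    (insert a s).erase b = insert a (s.erase b) := by
  ext x; by_cases hx : x = a <;> by_cases hx' : x = b <;> simp [hx, hx', h] <;> simp_all

theorem need1 {r : Finset A → Finset B → Prop} {s : Finset B → Finset C → Prop}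
    (hr : ExchAxiom r) (hs : ExchAxiom s)
    (hrne : ∃ X Y, r X Y) (hsne : ∃ Y Z, s Y Z) : Tri1 (LaxComp r s) := by
  have T1 := tri1_of_ex hr
  have T2 := tri2_of_ex hs
  intro X Z' X₁ Z₁' h h1 c hc hc1
  rw [lax_iff T1 T2 hrne hsne] at h h1
  obtain ⟨Y, Y', hXY', hYZ', hk, hl⟩ := h
  obtain ⟨Y₁, Y₁', hXY₁', hY₁Z₁', hk1, hl1⟩ := h1
  rcases exch_right hs hYZ' hY₁Z₁' (b := c) hc with h' | ⟨b, hbY, hbY₁, hs'⟩ | ⟨c₂, hc₂Z', hc₂Z₁', hs'⟩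
  · exact absurd h' hc1
  · -- erase case : s (Y.erase b) (Z'.erase c) ; forcing b ∈ Y'
    have hbY' : b ∈ Y' := by
      by_contra hbY'
      have hle := kap_le hXY' hs'
      rw [hsd2, card_erase_of_mem (mem_sdiff.mpr ⟨hbY, hbY'⟩), hk] at hle
      have : 0 < (Y \ Y').card := card_pos.mpr ⟨b, mem_sdiff.mpr ⟨hbY, hbY'⟩⟩
      omega
    have hk' : ((Y.erase b) \ Y').card = kap r s := by
      rw [hsd2, erase_eq_of_notMem (by simp [hbY']), hk]
    have hl' : (Y' \ (Y.erase b)).card = lam r s + 1 := by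
      rw [hsd7 hbY', card_insert_of_notMem (by simp [hbY]), hl]
    obtain ⟨X₂, Y₂', Y₂, Z₂, c1, c2, c3, c4, c5, c6⟩ :=
      ldesc_strong hr hs _ X Y' (Y.erase b) (Z'.erase c) X₁ Y₁' Y₁ Z₁' rfl hXY' hs'
        hXY₁' hY₁Z₁' (by rw [hl', hl1]; omega)
    rw [hk'] at c3 c5
    rw [hl'] at c4 c5 c6
    have hk2 : (Y₂ \ Y₂').card = kap r s := le_antisymm c3 (kap_le c1 c2)
    have hl2 : (Y₂' \ Y₂).card = lam r s := by
      have := lam_le c1 c2; omega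
    rcases c6 with ⟨_, hZ2⟩ | ⟨_, hZ2, _⟩ | ⟨_, _, c', hc'Z₁', hc'Z'e, hZ2⟩
    · exact Or.inl ⟨X₂, (lax_iff T1 T2 hrne hsne).mpr ⟨Y₂, Y₂', c1, hZ2 ▸ c2, hk2, hl2⟩⟩
    · exact Or.inl ⟨X₂, (lax_iff T1 T2 hrne hsne).mpr ⟨Y₂, Y₂', c1, hZ2 ▸ c2, hk2, hl2⟩⟩
    · have hc'ne : c' ≠ c := by rintro rfl; exact hc1 hc'Z₁'
      have hc'Z' : c' ∉ Z' := fun hcc => hc'Z'e (mem_erase.mpr ⟨hc'ne, hcc⟩)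
      exact Or.inr ⟨c', X₂, hc'Z', hc'Z₁',
        (lax_iff T1 T2 hrne hsne).mpr ⟨Y₂, Y₂', c1, hZ2 ▸ c2, hk2, hl2⟩⟩
  · -- swap case
    exact Or.inr ⟨c₂, X, hc₂Z', hc₂Z₁',
      (lax_iff T1 T2 hrne hsne).mpr ⟨Y, Y', hXY', hs', hk, hl⟩⟩

theorem need2 {s : Finset B → Finset C → Prop} {t : Finset C → Finset D → Prop}
    (hs : ExchAxiom s) (ht : ExchAxiom t)
    (hsne : ∃ Y Z, s Y Z) (htne : ∃ Z W, t Z W) : Tri2 (LaxComp s t) := by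
  have T1 := tri1_of_ex hs
  have T2 := tri2_of_ex ht
  intro Y W Y₁ W₁ h h1 b hbY hbY₁
  rw [lax_iff T1 T2 hsne htne] at h h1
  obtain ⟨Z, Z', hYZ', hZW, hk, hl⟩ := h
  obtain ⟨Z₁, Z₁', hY₁Z₁', hZ₁W₁, hk1, hl1⟩ := h1
  rcases exch_left hs hYZ' hY₁Z₁' (a := b) hbY with h' | ⟨b', hb'Y, hb'Y₁, hs'⟩ | ⟨c, hcZ', hcZ₁', hs'⟩
  · exact absurd hbY₁ h'
  · -- swap on Y
    exact Or.inl ⟨b', hb'Y, hb'Y₁,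
      (lax_iff T1 T2 hsne htne).mpr ⟨Z, Z', hs', hZW, hk, hl⟩⟩
  · -- grow : s (insert b Y) (insert c Z') ; forcing c ∉ Z
    have hcZ : c ∉ Z := by
      intro hcZ
      have hle := kap_le hs' hZW
      rw [hsd3 hcZ, card_erase_of_mem (mem_sdiff.mpr ⟨hcZ, hcZ'⟩), hk] at hle
      have : 0 < (Z \ Z').card := card_pos.mpr ⟨c, mem_sdiff.mpr ⟨hcZ, hcZ'⟩⟩
      omega
    have hk' : (Z \ (insert c Z')).card = kap s t := by rw [hsd6 hcZ, hk]
    have hl' : ((insert c Z') \ Z).card = lam s t + 1 := by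
      rw [hsd4 hcZ, card_insert_of_notMem (by simp [hcZ']), hl]
    obtain ⟨Y₂, Z₂', Z₂, W₂, c1, c2, c3, c4, c5, c6⟩ :=
      ldesc_strong hs ht _ (insert b Y) (insert c Z') Z W Y₁ Z₁' Z₁ W₁ rfl hs' hZW
        hY₁Z₁' hZ₁W₁ (by rw [hl', hl1]; omega)
    rw [hk'] at c3 c5
    rw [hl'] at c4 c5 c6
    have hk2 : (Z₂ \ Z₂').card = kap s t := le_antisymm c3 (kap_le c1 c2)
    have hl2 : (Z₂' \ Z₂).card = lam s t := by
      have := lam_le c1 c2; omega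
    rcases c6 with ⟨hY2, hW2⟩ | ⟨_, hW2, b'', hb''m, hb''Y₁, hY2⟩ | ⟨_, hY2, w, hwW₁, hwW, hW2⟩
    · exact Or.inr ⟨W, (lax_iff T1 T2 hsne htne).mpr ⟨Z₂, Z₂', hY2 ▸ c1, hW2 ▸ c2, hk2, hl2⟩⟩
    · have hb''ne : b'' ≠ b := by rintro rfl; exact hb''Y₁ hbY₁
      have hb''Y : b'' ∈ Y := by
        rcases mem_insert.mp hb''m with h' | h'
        · exact absurd h' hb''ne
        · exact h'
      have hY2' : Y₂ = insert b (Y.erase b'') := by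
        rw [hY2, erase_insert_comm' (Ne.symm hb''ne)]
      exact Or.inl ⟨b'', hb''Y, hb''Y₁,
        (lax_iff T1 T2 hsne htne).mpr ⟨Z₂, Z₂', hY2' ▸ c1, hW2 ▸ c2, hk2, hl2⟩⟩
    · exact Or.inr ⟨insert w W,
        (lax_iff T1 T2 hsne htne).mpr ⟨Z₂, Z₂', hY2 ▸ c1, hW2 ▸ c2, hk2, hl2⟩⟩
end Needs

noncomputable section Ineq
variable {A B C D : Type*} [DecidableEq A] [DecidableEq B] [DecidableEq C] [DecidableEq D]
variable {r : Finset A → Finset B → Prop} {s : Finset B → Finset C → Prop}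
variable {t : Finset C → Finset D → Prop}

theorem ineqL (hr : ExchAxiom r) (hs : ExchAxiom s)
    (hrne : ∃ X Y, r X Y) (hsne : ∃ Y Z, s Y Z) :
    ∀ (N : ℕ) (X : Finset A) (Y' Y : Finset B) (Z' Z : Finset C) (W : Finset D),
      (Y \ Y').card + (Y' \ Y).card = N →
      r X Y' → s Y Z' → t Z W →
      kap r s + kap (LaxComp r s) t ≤ (Y \ Y').card + (Z \ Z').card ∧
      lam r s + lam (LaxComp r s) t ≤ (Y' \ Y).card + (Z' \ Z).card := by
  intro N
  induction N using Nat.strong_induction_on with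
  | _ N IH =>
    intro X Y' Y Z' Z W hN h1 h2 h3
    by_cases hlgt : lam r s < (Y' \ Y).card
    · -- descend l
      obtain ⟨Xl, Yl', Yl, Zl', hl1, hl2, hlv⟩ := lam_mem hrne hsne
      obtain ⟨X₂, Y₂', Y₂, Z₂', c1, c2, c3, c4, c5, c6⟩ :=
        ldesc_strong hr hs _ X Y' Y Z' Xl Yl' Yl Zl' rfl h1 h2 hl1 hl2 (by omega)
      obtain ⟨ih1, ih2⟩ := IH ((Y₂ \ Y₂').card + (Y₂' \ Y₂).card) (by omega)
        X₂ Y₂' Y₂ Z₂' Z W rfl c1 c2 h3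
      rcases c6 with ⟨_, hZ2⟩ | ⟨_, hZ2, _⟩ | ⟨htie, _, c, hcZl, hcZ', hZ2⟩
      · rw [hZ2] at ih1 ih2; constructor <;> omega
      · rw [hZ2] at ih1 ih2; constructor <;> omega
      · rw [hZ2] at ih1 ih2
        have e1 : (Z \ insert c Z').card ≤ (Z \ Z').card :=
          card_le_card (sdiff_subset_sdiff (Finset.Subset.refl Z) (subset_insert c Z'))
        have e2 : ((insert c Z') \ Z).card ≤ (Z' \ Z).card + 1 := by
          calc ((insert c Z') \ Z).card ≤ (insert c (Z' \ Z)).card :=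
                card_le_card (by intro x; simp only [mem_sdiff, mem_insert]; tauto)
            _ ≤ (Z' \ Z).card + 1 := card_insert_le _ _
        constructor <;> omega
    · by_cases hkgt : kap r s < (Y \ Y').card
      · -- descend k via swapped relations
        obtain ⟨Xk, Yk', Yk, Zk', hk1, hk2, hkv⟩ := kap_mem hrne hsne
        obtain ⟨Z₂', Y₂, Y₂', X₂, c1, c2, c3, c4, c5, c6⟩ :=
          ldesc_strong (exch_swap hs) (exch_swap hr) _ Z' Y Y' X Zk' Yk Yk' Xk rfl
            h2 h1 hk2 hk1 (by omega)
        obtain ⟨ih1, ih2⟩ := IH ((Y₂ \ Y₂').card + (Y₂' \ Y₂).card) (by omega)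
          X₂ Y₂' Y₂ Z₂' Z W rfl c2 c1 h3
        rcases c6 with ⟨hZ2, _⟩ | ⟨htie, _, c, hcZ', hcZk, hZ2⟩ | ⟨htie, hZ2, _⟩
        · rw [hZ2] at ih1 ih2; constructor <;> omega
        · rw [hZ2] at ih1 ih2
          have e1 : (Z \ (Z'.erase c)).card ≤ (Z \ Z').card + 1 := by
            calc (Z \ (Z'.erase c)).card ≤ (insert c (Z \ Z')).card :=
                  card_le_card (by intro x; by_cases hx : x = c <;>
                    simp only [mem_sdiff, mem_insert, mem_erase, hx] <;> tauto)
              _ ≤ (Z \ Z').card + 1 := card_insert_le _ _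
          have e2 : ((Z'.erase c) \ Z).card ≤ (Z' \ Z).card := by
            rw [hsd2]; exact card_le_card (erase_subset _ _)
          constructor <;> omega
        · rw [hZ2] at ih1 ih2; constructor <;> omega
      · -- base : exact gap
        have hkeq : (Y \ Y').card = kap r s := le_antisymm (by omega) (kap_le h1 h2)
        have hleq : (Y' \ Y).card = lam r s := le_antisymm (by omega) (lam_le h1 h2)
        have hmem : LaxComp r s X Z' :=
          (lax_iff (tri1_of_ex hr) (tri2_of_ex hs) hrne hsne).mpr
            ⟨Y, Y', h1, h2, hkeq, hleq⟩
        have h1' := kap_le (ρ := LaxComp r s) (σ := t) hmem h3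
        have h2' := lam_le (ρ := LaxComp r s) (σ := t) hmem h3
        constructor <;> omega
end Ineq

noncomputable section SwapTrans
variable {A B C : Type*} [DecidableEq A] [DecidableEq B] [DecidableEq C]
variable {ρ : Finset A → Finset B → Prop} {σ : Finset B → Finset C → Prop}

theorem kapSet_swap : kapSet (swapRel σ) (swapRel ρ) = lamSet ρ σ := by
  ext n; constructor
  · rintro ⟨U, V', V, Wn, h1, h2, rfl⟩
    exact ⟨Wn, V, V', U, h2, h1, rfl⟩
  · rintro ⟨X, Y', Y, Z, h1, h2, rfl⟩
    exact ⟨Z, Y, Y', X, h2, h1, rfl⟩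

theorem lamSet_swap : lamSet (swapRel σ) (swapRel ρ) = kapSet ρ σ := by
  ext n; constructor
  · rintro ⟨U, V', V, Wn, h1, h2, rfl⟩
    exact ⟨Wn, V, V', U, h2, h1, rfl⟩
  · rintro ⟨X, Y', Y, Z, h1, h2, rfl⟩
    exact ⟨Z, Y, Y', X, h2, h1, rfl⟩

theorem kap_swap : kap (swapRel σ) (swapRel ρ) = lam ρ σ :=
  congrArg sInf kapSet_swap
theorem lam_swap : lam (swapRel σ) (swapRel ρ) = kap ρ σ :=
  congrArg sInf lamSet_swap

theorem bcomp_swap {k l : ℕ} {Y : Finset A} {W : Finset C} :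
    BComp (swapRel σ) (swapRel ρ) k l W Y ↔ BComp ρ σ l k Y W := by
  constructor
  · rintro ⟨V, V', h1, h2, hk, hl⟩
    exact ⟨V', V, h2, h1, hl, hk⟩
  · rintro ⟨Z, Z', h1, h2, hk, hl⟩
    exact ⟨Z', Z, h2, h1, hl, hk⟩

theorem totalType_swap : totalType (swapRel σ) (swapRel ρ) = totalType ρ σ := by
  unfold totalType
  congr 1
  ext m; constructor
  · rintro ⟨k, l, rfl, W, Y, h⟩
    exact ⟨l, k, by omega, Y, W, bcomp_swap.mp h⟩
  · rintro ⟨k, l, rfl, Y, W, h⟩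
    exact ⟨l, k, by omega, W, Y, bcomp_swap.mpr h⟩

theorem lax_swap_eq : LaxComp (swapRel σ) (swapRel ρ) = swapRel (LaxComp ρ σ) := by
  funext W Y
  apply propext
  constructor
  · rintro ⟨k, l, hsum, h⟩
    exact ⟨l, k, by rw [← totalType_swap (ρ := ρ) (σ := σ)]; omega, bcomp_swap.mp h⟩
  · rintro ⟨k, l, hsum, h⟩
    exact ⟨l, k, by rw [totalType_swap (ρ := ρ) (σ := σ)]; omega, bcomp_swap.mpr h⟩
end SwapTrans

/-- Types are additive under association:
`type(λ • μ, ν) + type(λ, μ) = type(μ, ν) + type(λ, μ • ν)` in `ℤ × ℤ`. -/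
theorem type_additive_under_association {A B C D : Type*}
    [DecidableEq A] [DecidableEq B] [DecidableEq C] [DecidableEq D]
    (r : Finset A → Finset B → Prop) (s : Finset B → Finset C → Prop)
    (t : Finset C → Finset D → Prop)
    (hr : ExchAxiom r) (hs : ExchAxiom s) (ht : ExchAxiom t)
    (hrne : ∃ X Y, r X Y) (hsne : ∃ Y Z, s Y Z) (htne : ∃ Z W, t Z W) :
    TypePair (LaxComp r s) t + TypePair r s = TypePair s t + TypePair r (LaxComp s t) := by
  have T1r := tri1_of_ex hr
  have T2s := tri2_of_ex hs
  have T1s := tri1_of_ex hs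
  have T2t := tri2_of_ex ht
  -- nonemptiness of the compositions
  have laxrs_ne : ∃ X Z, LaxComp r s X Z := by
    obtain ⟨X, Y', Y, Z', h1, h2, hk, hl⟩ := sim T1r T2s hrne hsne
    exact ⟨X, Z', (lax_iff T1r T2s hrne hsne).mpr ⟨Y, Y', h1, h2, hk, hl⟩⟩
  have laxst_ne : ∃ Y W, LaxComp s t Y W := by
    obtain ⟨Y, Z', Z, W, h1, h2, hk, hl⟩ := sim T1s T2t hsne htne
    exact ⟨Y, W, (lax_iff T1s T2t hsne htne).mpr ⟨Z, Z', h1, h2, hk, hl⟩⟩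
  have N1 := need1 hr hs hrne hsne
  have N2 := need2 hs ht hsne htne
  -- the four type pairs
  have eK2 : TypeK r s = kap r s := typeK_eq T1r T2s hrne hsne
  have eL2 : TypeL r s = lam r s := typeL_eq T1r T2s hrne hsne
  have eK3 : TypeK s t = kap s t := typeK_eq T1s T2t hsne htne
  have eL3 : TypeL s t = lam s t := typeL_eq T1s T2t hsne htne
  have eK1 : TypeK (LaxComp r s) t = kap (LaxComp r s) t := typeK_eq N1 T2t laxrs_ne htne
  have eL1 : TypeL (LaxComp r s) t = lam (LaxComp r s) t := typeL_eq N1 T2t laxrs_ne htne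
  have eK4 : TypeK r (LaxComp s t) = kap r (LaxComp s t) := typeK_eq T1r N2 hrne laxst_ne
  have eL4 : TypeL r (LaxComp s t) = lam r (LaxComp s t) := typeL_eq T1r N2 hrne laxst_ne
  -- attainment configs
  obtain ⟨Xa, Za', Za, Wa, ha1, ha2, hak, hal⟩ := sim N1 T2t laxrs_ne htne
  obtain ⟨Ya, Ya', ha1r, ha1s, hak2, hal2⟩ := (lax_iff T1r T2s hrne hsne).mp ha1
  obtain ⟨Xb, Yb', Yb, Wb, hb1, hb2, hbk, hbl⟩ := sim T1r N2 hrne laxst_ne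
  obtain ⟨Zb, Zb', hb2s, hb2t, hbk2, hbl2⟩ := (lax_iff T1s T2t hsne htne).mp hb2
  -- direct inequality at the (r, Lax s t) attainment triple
  obtain ⟨i1, i2⟩ := ineqL hr hs hrne hsne _ Xb Yb' Yb Zb' Zb Wb rfl hb1 hb2s hb2t
  -- swapped inequality at the (Lax r s, t) attainment triple
  have hsne' : ∃ Z Y, swapRel s Z Y := by obtain ⟨Y, Z, h⟩ := hsne; exact ⟨Z, Y, h⟩
  have htne' : ∃ W Z, swapRel t W Z := by obtain ⟨Z, W, h⟩ := htne; exact ⟨W, Z, h⟩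
  obtain ⟨j1, j2⟩ := ineqL (t := swapRel r) (exch_swap ht) (exch_swap hs) htne' hsne' _
    Wa Za Za' Ya Ya' Xa rfl ha2 ha1s ha1r
  -- translate the swapped inequality
  rw [kap_swap, lax_swap_eq, kap_swap] at j1
  rw [lam_swap, lax_swap_eq, lam_swap] at j2
  -- j1 : lam s t + lam r (LaxComp s t) ≤ (Za' \ Za).card + (Ya' \ Ya).card
  -- j2 : kap s t + kap r (LaxComp s t) ≤ (Za \ Za').card + (Ya \ Ya').card
  rw [hbk, hbk2] at i1
  rw [hbl, hbl2] at i2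
  rw [hal, hal2] at j1
  rw [hak, hak2] at j2
  -- now pure arithmetic
  have hKid : kap (LaxComp r s) t + kap r s = kap s t + kap r (LaxComp s t) := by omega
  have hLid : lam (LaxComp r s) t + lam r s = lam s t + lam r (LaxComp s t) := by omega
  unfold TypePair
  rw [eK1, eL1, eK2, eL2, eK3, eL3, eK4, eL4]
  rw [Prod.mk_add_mk, Prod.mk_add_mk, Prod.mk.injEq]
  constructor <;> push_cast <;> omega
end

section
/- Structure theorem for lax composition: suppose λ on 𝒫(A) × 𝒫(B) and μ on 𝒫(B) × 𝒫(C) are nonempty exchange relations and λ • μ has type (k,l). Then there exist disjoint sets K, L ⊆ B with |K| = k, |L| = l such that λ • μ = λ ∘ I_{K,L} ∘ μ, where I_{K,L} is the partial identity relation ((X,Y) ∈ I_{K,L} iff Y \ X = K and X \ Y = L). Moreover, for any disjoint K, L ⊆ B with |K| = k, |L| = l such that λ ∘ I_{K,L} ∘ μ is nonempty, the equation λ • μ = λ ∘ I_{K,L} ∘ μ holds. -/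
open Finset

def PartialId {B : Type*} [DecidableEq B] (K L : Finset B) :
    Finset B → Finset B → Prop :=
  fun X Y => Y \ X = K ∧ X \ Y = L

/-!
A pair `(X, Y') ∈ λ`, `(Y, Z) ∈ μ` is encoded as the subset of `(A ⊕ C) ⊕ B × Bool` made of the
`a ∉ X`, the `c ∈ Z`, the `(b, true)` with `b ∈ Y'` and the `(b, false)` with `b ∉ Y`. The exchange
axioms of `λ` and `μ` make these sets the bases of an exchange family, which therefore has the
symmetric exchange property. In an encoding the pair `{(b, true), (b, false)}` is empty exactly
when `b ∈ Y \ Y'` and full exactly when `b ∈ Y' \ Y`, so the type of a composite pair is read off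
its defective pairs, and `λ • μ` collects the encodings of minimal defect.

Let `V` and `W` be minimal encodings whose `A`- or `C`-parts differ. Start from such an element
of `V \ W` (passing to complements, that is to the dual family, if it lies in `W \ V`) and follow
symmetric exchanges with `W`. Whenever an exchange makes a pair full, its element in `V \ W` is
exchanged next; minimality of the defect rules out every other outcome. Such an alternating path
either moves `V` towards `W` keeping its defective pairs, or moves `W` towards `V` keeping its
`A`- and `C`-part. Iterating, the defective pairs `K`, `L` of one minimal encoding are realised
over every `(X, Z)` of `λ • μ`, which is `λ • μ = λ ∘ I_{K,L} ∘ μ`.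
-/

open Set Sum Function Matroid
open scoped symmDiff

namespace Set

variable {α : Type*} {U V W : Set α} {x y : α}

lemma compl_insert_sdiff (hxy : x ≠ y) : (insert x (V \ {y}))ᶜ = insert y (Vᶜ \ {x}) := by
  ext z; simp only [mem_compl_iff, mem_insert_iff, mem_sdiff, mem_singleton_iff]; grind

lemma symmDiff_subset_symmDiff_of_subset (h₁ : V ∩ W ⊆ U) (h₂ : U ⊆ V ∪ W) :
    U ∆ W ⊆ V ∆ W := by
  intro z hz
  have := @h₁ z; have := @h₂ z
  simp only [mem_symmDiff, mem_inter_iff, mem_union] at *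
  tauto

lemma ncard_symmDiff_lt_of_subset (hfin : (V ∆ W).Finite) (h₁ : V ∩ W ⊆ U) (h₂ : U ⊆ V ∪ W)
    (hx : x ∈ V \ W) (hxU : x ∉ U) : (U ∆ W).ncard < (V ∆ W).ncard :=
  ncard_lt_ncard (ssubset_of_subset_not_subset (symmDiff_subset_symmDiff_of_subset h₁ h₂)
    fun h => by simpa [mem_symmDiff, hxU, hx.2] using h (Or.inl hx)) hfin

lemma ncard_symmDiff_insert_sdiff_lt (hfin : (V ∆ W).Finite) (hx : x ∈ V \ W) (hy : y ∈ W \ V) :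
    (insert y (V \ {x}) ∆ W).ncard < (V ∆ W).ncard :=
  ncard_symmDiff_lt_of_subset hfin
    (fun z hz => mem_insert_of_mem y ⟨hz.1, fun h => hx.2 (h ▸ hz.2)⟩)
    (insert_subset (Or.inr hy.1) (sdiff_subset.trans subset_union_left)) hx
    (by simp [hx.1, ne_of_mem_of_not_mem hx.1 hy.2])

end Set

namespace Matroid

variable {α β γ : Type*}

theorem IsBase.symm_exchange {M : Matroid α} {B₁ B₂ : Set α} {e : α} (hB₁ : M.IsBase B₁)
    (hB₂ : M.IsBase B₂) (he : e ∈ B₁ \ B₂) :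
    ∃ f ∈ B₂ \ B₁, M.IsBase (insert f (B₁ \ {e})) ∧ M.IsBase (insert e (B₂ \ {f})) := by
  have heE : e ∈ M.E := hB₁.subset_ground he.1
  obtain ⟨f, ⟨hfC, hfK⟩, hfe⟩ : ∃ f ∈ M.fundCircuit e B₂ ∩ M.fundCocircuit e B₁, f ≠ e := by
    by_contra! h
    refine (hB₂.fundCircuit_isCircuit heE he.2).inter_isCocircuit_ne_singleton
      (fundCocircuit_isCocircuit he.1 hB₁) (e := e) ?_
    exact Subset.antisymm (fun f hf => h f hf) (singleton_subset_iff.2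
      ⟨M.mem_fundCircuit e B₂, M.mem_fundCocircuit e B₁⟩)
  have hfB₂ : f ∈ B₂ := by simpa [hfe] using M.fundCircuit_subset_insert e B₂ hfC
  have hfB₁ : f ∉ B₁ := by
    have := M.fundCocircuit_subset_insert_compl e B₁ hfK
    simp_all
  refine ⟨f, ⟨hfB₂, hfB₁⟩, ?_, ?_⟩
  · rw [hB₁.mem_fundCocircuit_iff_mem_fundCircuit,
      hB₁.indep.mem_fundCircuit_iff (by rw [hB₁.closure_eq]; exact hB₂.subset_ground hfB₂) hfB₁]
      at hfK
    rw [insert_sdiff_singleton_comm hfe]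
    exact hB₁.exchange_isBase_of_indep' he.1 hfB₁ hfK
  · rw [hB₂.indep.mem_fundCircuit_iff (by rw [hB₂.closure_eq]; exact heE) he.2] at hfC
    rw [insert_sdiff_singleton_comm hfe.symm]
    exact hB₂.exchange_isBase_of_indep' hfB₂ he.2 hfC

theorem ExchangeProperty.slice {𝓑 : Set α → Prop} (h : ExchangeProperty 𝓑) {F D : Set α}
    (hFD : Disjoint F D) : ExchangeProperty (fun T => T ⊆ D ∧ 𝓑 (F ∪ T)) := by
  rintro T T' ⟨hTD, hT⟩ ⟨hT'D, hT'⟩ a ⟨haT, haT'⟩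
  have haF : a ∉ F := hFD.notMem_of_mem_right (hTD haT)
  obtain ⟨b, ⟨hbT', hbT⟩, hb⟩ := h _ _ hT hT' a (by simp [haT, haT', haF])
  have hbT' : b ∈ T' := by simpa [show b ∉ F by simp_all] using hbT'
  refine ⟨b, ⟨hbT', fun h => hbT (Or.inr h)⟩,
    insert_subset (hT'D hbT') (sdiff_subset.trans hTD), ?_⟩
  rwa [union_sdiff_distrib, sdiff_singleton_eq_self haF, ← union_insert] at hb

/-- Only `B₁ ∆ B₂` has to be finite: on it, the sets `T` with `𝓑 ((B₁ ∩ B₂) ∪ T)` are the bases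
of a finite matroid. -/
theorem ExchangeProperty.symm_exchange {𝓑 : Set α → Prop} (h : ExchangeProperty 𝓑)
    {B₁ B₂ : Set α} {e : α} (hB₁ : 𝓑 B₁) (hB₂ : 𝓑 B₂) (hfin : (B₁ ∆ B₂).Finite)
    (he : e ∈ B₁ \ B₂) :
    ∃ f ∈ B₂ \ B₁, 𝓑 (insert f (B₁ \ {e})) ∧ 𝓑 (insert e (B₂ \ {f})) := by
  have hFD : Disjoint (B₁ ∩ B₂) (B₁ ∆ B₂) := by
    rw [Set.disjoint_left]; intro x; simp only [mem_inter_iff, mem_symmDiff]; tauto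
  let M := Matroid.ofIsBaseOfFinite hfin (fun T => T ⊆ B₁ ∆ B₂ ∧ 𝓑 ((B₁ ∩ B₂) ∪ T))
    ⟨B₁ \ B₂, subset_union_left, by rwa [inter_union_sdiff]⟩ (h.slice hFD) (fun _ hT => hT.1)
  have hM₁ : M.IsBase (B₁ \ B₂) := ⟨subset_union_left, by rwa [inter_union_sdiff]⟩
  have hM₂ : M.IsBase (B₂ \ B₁) := ⟨subset_union_right, by rwa [inter_comm, inter_union_sdiff]⟩
  obtain ⟨f, ⟨hf₂, -⟩, ⟨-, hB₁'⟩, ⟨-, hB₂'⟩⟩ :=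
    hM₁.symm_exchange hM₂ (e := e) ⟨he, fun h => h.2 he.1⟩
  refine ⟨f, hf₂, ?_, ?_⟩
  · convert hB₁' using 1
    ext x; simp only [mem_insert_iff, mem_sdiff, mem_union, mem_inter_iff, mem_singleton_iff]; grind
  · convert hB₂' using 1
    ext x; simp only [mem_insert_iff, mem_sdiff, mem_union, mem_inter_iff, mem_singleton_iff]; grind

variable {f : α → γ} {g : β → γ}

lemma ExchangeProperty.exists_image_union {𝓑 : Set α → Prop} (h : ExchangeProperty 𝓑)
    (hf : Injective f) (hfg : Disjoint (range f) (range g)) {V₁ W₁ : Set α} {V₂ W₂ : Set β}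
    (hV₁ : 𝓑 V₁) (hW₁ : 𝓑 W₁) {a : α} (ha : f a ∈ (f '' V₁ ∪ g '' V₂) \ (f '' W₁ ∪ g '' W₂)) :
    ∃ b, f b ∈ (f '' W₁ ∪ g '' W₂) \ (f '' V₁ ∪ g '' V₂) ∧
      ∃ V₁', 𝓑 V₁' ∧ insert (f b) ((f '' V₁ ∪ g '' V₂) \ {f a}) = f '' V₁' ∪ g '' V₂ := by
  have hgf : ∀ x y, g y ≠ f x := fun x y h =>
    hfg.ne_of_mem (mem_range_self x) (mem_range_self y) h.symm
  simp only [mem_sdiff, mem_union, hf.mem_set_image, mem_image, hgf, and_false, exists_false,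
    or_false] at ha
  obtain ⟨b, ⟨hbW, hbV⟩, hb⟩ := h V₁ W₁ hV₁ hW₁ a ha
  refine ⟨b, by simp [hf.mem_set_image, hgf, hbW, hbV], _, hb, ?_⟩
  ext z
  simp only [mem_insert_iff, mem_sdiff, mem_union, mem_image, mem_singleton_iff]
  grind

theorem ExchangeProperty.image_union {𝓑₁ : Set α → Prop} {𝓑₂ : Set β → Prop}
    (h₁ : ExchangeProperty 𝓑₁) (h₂ : ExchangeProperty 𝓑₂) (hf : Injective f) (hg : Injective g)
    (hfg : Disjoint (range f) (range g)) :
    ExchangeProperty (fun V => ∃ V₁ V₂, 𝓑₁ V₁ ∧ 𝓑₂ V₂ ∧ V = f '' V₁ ∪ g '' V₂) := by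
  rintro _ _ ⟨V₁, V₂, hV₁, hV₂, rfl⟩ ⟨W₁, W₂, hW₁, hW₂, rfl⟩ x hx
  rcases hx.1 with ⟨a, -, rfl⟩ | ⟨b, -, rfl⟩
  · obtain ⟨b, hb, V₁', hV₁', heq⟩ := h₁.exists_image_union hf hfg hV₁ hW₁ hx
    exact ⟨f b, hb, V₁', V₂, hV₁', hV₂, heq⟩
  · rw [union_comm (f '' V₁), union_comm (f '' W₁)] at hx ⊢
    obtain ⟨a, ha, V₂', hV₂', heq⟩ := h₂.exists_image_union hg hfg.symm hV₂ hW₂ hx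
    exact ⟨g a, ha, V₁, V₂', hV₁, hV₂', by rw [heq, union_comm]⟩

end Matroid

section PairDefect

variable {E P : Type*}

def emptyPairs (V : Set (E ⊕ P × Bool)) : Set P := {p | ∀ t, inr (p, t) ∉ V}

def fullPairs (V : Set (E ⊕ P × Bool)) : Set P := {p | ∀ t, inr (p, t) ∈ V}

noncomputable def defect (V : Set (E ⊕ P × Bool)) : ℕ :=
  (emptyPairs V).ncard + (fullPairs V).ncard

section Updates

variable {V : Set (E ⊕ P × Bool)} {e : E} {p : P} {t : Bool}

@[simp] lemma emptyPairs_insert_inl : emptyPairs (insert (inl e) V) = emptyPairs V := by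
  ext; simp [emptyPairs]

@[simp] lemma fullPairs_insert_inl : fullPairs (insert (inl e) V) = fullPairs V := by
  ext; simp [fullPairs]

@[simp] lemma emptyPairs_sdiff_inl : emptyPairs (V \ {inl e}) = emptyPairs V := by
  ext; simp [emptyPairs]

@[simp] lemma fullPairs_sdiff_inl : fullPairs (V \ {inl e}) = fullPairs V := by
  ext; simp [fullPairs]

lemma mem_emptyPairs_of_notMem (h : inr (p, t) ∉ V) (h' : inr (p, !t) ∉ V) :
    p ∈ emptyPairs V := by
  cases t <;> simp_all [emptyPairs, Bool.forall_bool]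

lemma mem_fullPairs_of_mem (h : inr (p, t) ∈ V) (h' : inr (p, !t) ∈ V) : p ∈ fullPairs V := by
  cases t <;> simp_all [fullPairs, Bool.forall_bool]

lemma emptyPairs_insert_inr : emptyPairs (insert (inr (p, t)) V) = emptyPairs V \ {p} := by
  ext q; rcases eq_or_ne q p with rfl | hq <;> cases t <;> simp_all [emptyPairs, Bool.forall_bool]

lemma fullPairs_sdiff_inr : fullPairs (V \ {inr (p, t)}) = fullPairs V \ {p} := by
  ext q; rcases eq_or_ne q p with rfl | hq <;> cases t <;> simp_all [fullPairs, Bool.forall_bool]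

lemma emptyPairs_sdiff_inr (h : inr (p, !t) ∈ V) :
    emptyPairs (V \ {inr (p, t)}) = emptyPairs V := by
  ext q; rcases eq_or_ne q p with rfl | hq <;> cases t <;> simp_all [emptyPairs, Bool.forall_bool]

lemma fullPairs_insert_inr (h : inr (p, !t) ∉ V) :
    fullPairs (insert (inr (p, t)) V) = fullPairs V := by
  ext q; rcases eq_or_ne q p with rfl | hq <;> cases t <;> simp_all [fullPairs, Bool.forall_bool]

lemma fullPairs_insert_inr_of_mem (h : inr (p, !t) ∈ V) :
    fullPairs (insert (inr (p, t)) V) = insert p (fullPairs V) := by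
  ext q; rcases eq_or_ne q p with rfl | hq <;> cases t <;> simp_all [fullPairs, Bool.forall_bool]

lemma emptyPairs_swap (h : inr (p, !t) ∈ V) :
    emptyPairs (insert (inr (p, t)) (V \ {inr (p, !t)})) = emptyPairs V := by
  ext q; rcases eq_or_ne q p with rfl | hq <;> cases t <;> simp_all [emptyPairs, Bool.forall_bool]

lemma fullPairs_swap (h : inr (p, t) ∉ V) :
    fullPairs (insert (inr (p, t)) (V \ {inr (p, !t)})) = fullPairs V := by
  ext q; rcases eq_or_ne q p with rfl | hq <;> cases t <;> simp_all [fullPairs, Bool.forall_bool]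

@[simp] lemma emptyPairs_compl : emptyPairs Vᶜ = fullPairs V := by
  ext; simp [emptyPairs, fullPairs]

@[simp] lemma fullPairs_compl : fullPairs Vᶜ = emptyPairs V := by
  ext; simp [emptyPairs, fullPairs]

@[simp] lemma defect_compl : defect Vᶜ = defect V := by
  simp [defect, add_comm]

@[simp] lemma defect_insert_inl : defect (insert (inl e) V) = defect V := by
  simp [defect]

lemma defect_insert_le (z : E ⊕ P × Bool) : defect (insert z V) ≤ defect V + 1 := by
  rcases z with e | ⟨p, t⟩
  · simp
  have := ncard_sdiff_singleton_le (emptyPairs V) p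
  unfold defect
  rw [emptyPairs_insert_inr]
  by_cases h : inr (p, !t) ∈ V
  · have := ncard_insert_le p (fullPairs V)
    rw [fullPairs_insert_inr_of_mem h]; omega
  · rw [fullPairs_insert_inr h]; omega

lemma defect_insert_inr_add_one (hV : (emptyPairs V).Finite) (hp : p ∈ emptyPairs V) :
    defect (insert (inr (p, t)) V) + 1 = defect V := by
  unfold defect
  rw [emptyPairs_insert_inr, fullPairs_insert_inr (hp _), ← ncard_sdiff_singleton_add_one hp hV]
  omega

lemma defect_sdiff_inr_add_one (hV : (fullPairs V).Finite) (hp : p ∈ fullPairs V) :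
    defect (V \ {inr (p, t)}) + 1 = defect V := by
  unfold defect
  rw [fullPairs_sdiff_inr, emptyPairs_sdiff_inr (hp _), ← ncard_sdiff_singleton_add_one hp hV]
  omega

end Updates

structure PairedFamily (𝓑 : Set (E ⊕ P × Bool) → Prop) : Prop where
  exchange : ExchangeProperty 𝓑
  finite_symmDiff : ∀ ⦃V W⦄, 𝓑 V → 𝓑 W → (V ∆ W).Finite
  finite_emptyPairs : ∀ ⦃V⦄, 𝓑 V → (emptyPairs V).Finite
  finite_fullPairs : ∀ ⦃V⦄, 𝓑 V → (fullPairs V).Finite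

namespace PairedFamily

variable {𝓑 : Set (E ⊕ P × Bool) → Prop} {m : ℕ} {V W : Set (E ⊕ P × Bool)}

lemma symm_exchange (h𝓑 : PairedFamily 𝓑) (hV : 𝓑 V) (hW : 𝓑 W) {x : E ⊕ P × Bool}
    (hx : x ∈ V \ W) : ∃ y ∈ W \ V, 𝓑 (insert y (V \ {x})) ∧ 𝓑 (insert x (W \ {y})) :=
  h𝓑.exchange.symm_exchange hV hW (h𝓑.finite_symmDiff hV hW) hx

protected lemma compl (h𝓑 : PairedFamily 𝓑) : PairedFamily (fun V => 𝓑 Vᶜ) where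
  exchange V W hV hW x hx := by
    obtain ⟨y, hy, -, hy'⟩ := h𝓑.symm_exchange hW hV (x := x) ⟨hx.2, not_not.2 hx.1⟩
    refine ⟨y, ⟨not_not.1 hy.2, hy.1⟩, ?_⟩
    simpa only [compl_insert_sdiff (ne_of_mem_of_not_mem hx.1 hy.1).symm] using hy'
  finite_symmDiff V W hV hW := by simpa using h𝓑.finite_symmDiff hV hW
  finite_emptyPairs V hV := by simpa using h𝓑.finite_fullPairs hV
  finite_fullPairs V hV := by simpa using h𝓑.finite_emptyPairs hV

def ApproachStep (𝓑 : Set (E ⊕ P × Bool) → Prop) (m : ℕ) (V W : Set (E ⊕ P × Bool)) : Prop :=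
  (∃ U, 𝓑 U ∧ emptyPairs U = emptyPairs V ∧ fullPairs U = fullPairs V ∧
      (U ∆ W).ncard < (V ∆ W).ncard) ∨
    (∃ W', 𝓑 W' ∧ defect W' = m ∧ (∀ e, inl e ∈ W' ↔ inl e ∈ W) ∧
      (V ∆ W').ncard < (V ∆ W).ncard)

lemma ApproachStep.of_compl (h : ApproachStep (fun X => 𝓑 Xᶜ) m Vᶜ Wᶜ) :
    ApproachStep 𝓑 m V W := by
  rcases h with ⟨U, hU, hUe, hUf, hlt⟩ | ⟨W', hW', hW'm, hW'e, hlt⟩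
  · refine Or.inl ⟨Uᶜ, hU, by simpa using hUf, by simpa using hUe, ?_⟩
    rwa [← compl_symmDiff_compl, compl_compl, ← compl_symmDiff_compl (a := V)]
  · refine Or.inr ⟨W'ᶜ, hW', by simpa using hW'm, fun e => by simpa using (hW'e e).not, ?_⟩
    rwa [← compl_symmDiff_compl, compl_compl, ← compl_symmDiff_compl (a := V)]

theorem approachStep_of_mem_fullPairs (h𝓑 : PairedFamily 𝓑) (hmin : ∀ U, 𝓑 U → m ≤ defect U)
    (hV : 𝓑 V) (hW : 𝓑 W) (hWm : defect W = m) {x : E ⊕ P × Bool} (hx : x ∈ V \ W) {p : P}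
    {t : Bool} (hpW : p ∈ fullPairs W) (hpV : inr (p, t) ∉ V)
    (hW' : 𝓑 (insert x (W \ {inr (p, t)}))) : ApproachStep 𝓑 m V W := by
  have hWdef := defect_sdiff_inr_add_one (t := t) (h𝓑.finite_fullPairs hW) hpW
  rcases x with e | ⟨q, u⟩
  · have := hmin _ hW'
    simp only [defect_insert_inl] at this
    omega
  refine Or.inr ⟨_, hW', le_antisymm ?_ (hmin _ hW'), by simp, ?_⟩
  · have := defect_insert_le (V := W \ {inr (p, t)}) (inr (q, u))
    omega
  · rw [symmDiff_comm V, symmDiff_comm V]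
    exact ncard_symmDiff_insert_sdiff_lt (h𝓑.finite_symmDiff hW hV) ⟨hpW t, hpV⟩ hx

/-- `R` is `V` moved towards `W` with its defective pairs kept, except that `x ∈ V \ W` is still
to be exchanged. Exchanging `x` against `W` either ends the path in one of the two outcomes of
`ApproachStep`, or makes a pair full whose other element, in `V \ W`, is exchanged next. -/
theorem approachStep_of_chain (h𝓑 : PairedFamily 𝓑) (hmin : ∀ U, 𝓑 U → m ≤ defect U)
    (hV : 𝓑 V) (hW : 𝓑 W) (hVm : defect V = m) (hWm : defect W = m)
    {R : Set (E ⊕ P × Bool)} {x : E ⊕ P × Bool} (hS : 𝓑 (insert x R)) (hxR : x ∉ R)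
    (hx : x ∈ V \ W) (hRe : emptyPairs R = emptyPairs V) (hRf : fullPairs R = fullPairs V)
    (hVWR : V ∩ W ⊆ R) (hRVW : R ⊆ V ∪ W) : ApproachStep 𝓑 m V W := by
  have hVW := h𝓑.finite_symmDiff hV hW
  induction hn : (R ∆ W).ncard using Nat.strong_induction_on generalizing R x with
  | _ n ih =>
  obtain ⟨h, ⟨hhW, hhS⟩, hR', hW'⟩ := h𝓑.symm_exchange hS hW ⟨mem_insert x R, hx.2⟩
  rw [insert_sdiff_self_of_notMem hxR] at hR'
  have hhR : h ∉ R := fun h' => hhS (mem_insert_of_mem x h')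
  have hhV : h ∉ V := fun h' => hhR (hVWR ⟨h', hhW⟩)
  rcases h with e | ⟨p, t⟩
  · refine Or.inl ⟨_, hR', by simpa using hRe, by simpa using hRf, ?_⟩
    exact ncard_symmDiff_lt_of_subset hVW (hVWR.trans (subset_insert _ _))
      (insert_subset (Or.inr hhW) hRVW) hx (by simp [(ne_of_mem_of_not_mem hhW hx.2).symm, hxR])
  by_cases hpR : inr (p, !t) ∈ R
  swap
  · have := defect_insert_inr_add_one (t := t) (hRe ▸ h𝓑.finite_emptyPairs hV)
      (mem_emptyPairs_of_notMem hhR hpR)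
    have := hmin _ hR'
    simp only [defect, hRe, hRf] at *
    omega
  by_cases hpW : inr (p, !t) ∈ W
  · exact approachStep_of_mem_fullPairs h𝓑 hmin hV hW hWm hx (mem_fullPairs_of_mem hhW hpW) hhV hW'
  · have hRW : (R ∆ W).Finite := hVW.subset (symmDiff_subset_symmDiff_of_subset hVWR hRVW)
    have hS' : 𝓑 (insert (inr (p, !t)) (insert (inr (p, t)) (R \ {inr (p, !t)}))) := by
      rwa [Set.insert_comm, insert_sdiff_singleton, insert_eq_of_mem hpR]
    exact ih _ (hn ▸ ncard_symmDiff_insert_sdiff_lt hRW ⟨hpR, hpW⟩ ⟨hhW, hhR⟩) hS' (by simp)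
      ⟨(hRVW hpR).resolve_right hpW, hpW⟩
      (by rw [emptyPairs_swap hpR, hRe]) (by rw [fullPairs_swap hhR, hRf])
      (fun z hz => Set.mem_insert_of_mem _ ⟨hVWR hz, fun h => hpW (h ▸ hz.2)⟩)
      (insert_subset (Or.inr hhW) (sdiff_subset.trans hRVW)) rfl

theorem approachStep_of_inl_mem (h𝓑 : PairedFamily 𝓑) (hmin : ∀ U, 𝓑 U → m ≤ defect U)
    (hV : 𝓑 V) (hW : 𝓑 W) (hVm : defect V = m) (hWm : defect W = m) {e : E}
    (he : inl e ∈ V \ W) : ApproachStep 𝓑 m V W :=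
  approachStep_of_chain h𝓑 hmin hV hW hVm hWm (R := V \ {inl e})
    (by rwa [insert_sdiff_singleton, insert_eq_of_mem he.1]) (by simp) he (by simp) (by simp)
    (fun z hz => ⟨hz.1, fun h => he.2 (h ▸ hz.2)⟩) (sdiff_subset.trans subset_union_left)

theorem approachStep_of_not_forall (h𝓑 : PairedFamily 𝓑) (hmin : ∀ U, 𝓑 U → m ≤ defect U)
    (hV : 𝓑 V) (hW : 𝓑 W) (hVm : defect V = m) (hWm : defect W = m)
    (h : ¬ ∀ e : E, inl e ∈ V ↔ inl e ∈ W) : ApproachStep 𝓑 m V W := by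
  obtain ⟨e, he⟩ := not_forall.1 h
  by_cases heV : inl e ∈ V
  · exact approachStep_of_inl_mem h𝓑 hmin hV hW hVm hWm ⟨heV, fun h => he (iff_of_true heV h)⟩
  · refine ApproachStep.of_compl (approachStep_of_inl_mem h𝓑.compl
      (fun U hU => by simpa using hmin _ hU) (by simpa) (by simpa) (by simpa) (by simpa)
      (e := e) ?_)
    simpa [heV] using he

theorem exists_pairs_eq_of_defect_eq (h𝓑 : PairedFamily 𝓑) (hmin : ∀ U, 𝓑 U → m ≤ defect U)
    (hV : 𝓑 V) (hW : 𝓑 W) (hVm : defect V = m) (hWm : defect W = m) :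
    ∃ U, 𝓑 U ∧ emptyPairs U = emptyPairs V ∧ fullPairs U = fullPairs V ∧
      ∀ e : E, inl e ∈ U ↔ inl e ∈ W := by
  induction hn : (V ∆ W).ncard using Nat.strong_induction_on generalizing V W with
  | _ n ih =>
  by_cases hagree : ∀ e : E, inl e ∈ V ↔ inl e ∈ W
  · exact ⟨V, hV, rfl, rfl, hagree⟩
  rcases approachStep_of_not_forall h𝓑 hmin hV hW hVm hWm hagree with
    ⟨U, hU, hUe, hUf, hlt⟩ | ⟨W', hW', hW'm, hW'e, hlt⟩
  · obtain ⟨U', hU', h₁, h₂, h₃⟩ :=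
      ih _ (hn ▸ hlt) hU hW (by rw [defect, hUe, hUf]; exact hVm) hWm rfl
    exact ⟨U', hU', h₁.trans hUe, h₂.trans hUf, h₃⟩
  · obtain ⟨U', hU', h₁, h₂, h₃⟩ := ih _ (hn ▸ hlt) hV hW' hVm hW'm rfl
    exact ⟨U', hU', h₁, h₂, fun e => (h₃ e).trans (hW'e e)⟩

end PairedFamily

end PairDefect

section BarFamily

variable {A B : Type*}

@[simp] lemma inBar_inl {X : Finset A} {Y : Finset B} {a : A} : InBar X Y (inl a) ↔ a ∉ X :=
  Iff.rfl

@[simp] lemma inBar_inr {X : Finset A} {Y : Finset B} {b : B} : InBar X Y (inr b) ↔ b ∈ Y :=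
  Iff.rfl

def barFamily (r : Finset A → Finset B → Prop) (V : Set (A ⊕ B)) : Prop :=
  ∃ X Y, r X Y ∧ V = {u | InBar X Y u}

theorem exchangeProperty_barFamily [DecidableEq A] [DecidableEq B]
    {r : Finset A → Finset B → Prop} (hr : ExchAxiom r) : ExchangeProperty (barFamily r) := by
  rintro _ _ ⟨X, Y, hXY, rfl⟩ ⟨X', Y', hXY', rfl⟩ u ⟨hu, hu'⟩
  obtain ⟨v, hv, hex⟩ := hr X Y X' Y' hXY hXY' u hu
  have huv : u ≠ v := fun h => hu' (h ▸ hv)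
  rcases u with a | b <;> rcases v with a' | b' <;>
    simp only [Exchangeable, mem_ofPred_eq, inBar_inl, inBar_inr, ne_eq, inl.injEq, inr.injEq,
      not_not] at hex hu hu' hv huv
  · obtain ⟨-, ha', hr'⟩ := (hex.resolve_left huv).resolve_left fun h => hu h.1
    refine ⟨inl a', ⟨hv, by simpa⟩, _, _, hr', ?_⟩
    ext (z | z) <;> grind [inBar_inl, inBar_inr]
  · obtain ⟨-, hb', hr'⟩ := hex.resolve_left fun h => hu h.1
    refine ⟨inr b', ⟨hv, by simpa⟩, _, _, hr', ?_⟩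
    ext (z | z) <;> grind [inBar_inl, inBar_inr]
  · obtain ⟨-, ha', hr'⟩ := hex.resolve_right fun h => h.1 hu
    refine ⟨inl a', ⟨hv, by simpa⟩, _, _, hr', ?_⟩
    ext (z | z) <;> grind [inBar_inl, inBar_inr]
  · obtain ⟨-, hb', hr'⟩ := (hex.resolve_left huv).resolve_right fun h => h.1 hu
    refine ⟨inr b', ⟨hv, by simpa⟩, _, _, hr', ?_⟩
    ext (z | z) <;> grind [inBar_inl, inBar_inr]

end BarFamily

section Encoding

variable {A B C : Type*}

def encodeLeft : A ⊕ B → (A ⊕ C) ⊕ B × Bool :=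
  Sum.elim (fun a => inl (inl a)) (fun b => inr (b, true))

def encodeRight : B ⊕ C → (A ⊕ C) ⊕ B × Bool :=
  Sum.elim (fun b => inr (b, false)) (fun c => inl (inr c))

lemma encodeLeft_injective : Injective (encodeLeft : A ⊕ B → (A ⊕ C) ⊕ B × Bool) :=
  Injective.sumElim (fun _ _ h => by simpa using h) (fun _ _ h => by simpa using h) (by simp)

lemma encodeRight_injective : Injective (encodeRight : B ⊕ C → (A ⊕ C) ⊕ B × Bool) :=
  Injective.sumElim (fun _ _ h => by simpa using h) (fun _ _ h => by simpa using h) (by simp)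

lemma disjoint_range_encodeLeft_encodeRight :
    Disjoint (range (encodeLeft : A ⊕ B → (A ⊕ C) ⊕ B × Bool)) (range encodeRight) := by
  rw [disjoint_iff_forall_ne]
  rintro _ ⟨u | u, rfl⟩ _ ⟨v | v, rfl⟩ <;> simp [encodeLeft, encodeRight]

def encode (X : Finset A) (Y' Y : Finset B) (Z : Finset C) : Set ((A ⊕ C) ⊕ B × Bool) :=
  encodeLeft '' {u | InBar X Y' u} ∪ encodeRight '' {u | InBar Y Z u}

variable {X : Finset A} {Y' Y : Finset B} {Z : Finset C}

@[simp] lemma inl_inl_mem_encode {a : A} : inl (inl a) ∈ encode X Y' Y Z ↔ a ∉ X := by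
  simp [encode, encodeLeft, encodeRight]

@[simp] lemma inl_inr_mem_encode {c : C} : inl (inr c) ∈ encode X Y' Y Z ↔ c ∈ Z := by
  simp [encode, encodeLeft, encodeRight]

@[simp] lemma inr_true_mem_encode {b : B} : inr (b, true) ∈ encode X Y' Y Z ↔ b ∈ Y' := by
  simp [encode, encodeLeft, encodeRight]

@[simp] lemma inr_false_mem_encode {b : B} : inr (b, false) ∈ encode X Y' Y Z ↔ b ∉ Y := by
  simp [encode, encodeLeft, encodeRight]

variable [DecidableEq B]

lemma emptyPairs_encode : emptyPairs (encode X Y' Y Z) = ↑(Y \ Y') := by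
  ext b; simp [emptyPairs, Bool.forall_bool, and_comm]

lemma fullPairs_encode : fullPairs (encode X Y' Y Z) = ↑(Y' \ Y) := by
  ext b; simp [fullPairs, Bool.forall_bool, and_comm]

lemma defect_encode : defect (encode X Y' Y Z) = (Y \ Y').card + (Y' \ Y).card := by
  rw [defect, emptyPairs_encode, fullPairs_encode, ncard_coe_finset, ncard_coe_finset]

lemma finite_symmDiff_encode [DecidableEq A] [DecidableEq C] {X₂ : Finset A}
    {Y₂' Y₂ : Finset B} {Z₂ : Finset C} : (encode X Y' Y Z ∆ encode X₂ Y₂' Y₂ Z₂).Finite := by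
  refine ((((X ∪ X₂).finite_toSet.image (inl ∘ inl)).union
    ((Z ∪ Z₂).finite_toSet.image (inl ∘ inr))).union
    ((((Y' ∪ Y₂' ∪ Y ∪ Y₂) ×ˢ (Finset.univ : Finset Bool)).finite_toSet.image inr))).subset ?_
  rintro ((a | c) | ⟨b, _ | _⟩) hz <;> simp [mem_symmDiff] at hz ⊢ <;> tauto

variable (r : Finset A → Finset B → Prop) (s : Finset B → Finset C → Prop)

def compFamily (V : Set ((A ⊕ C) ⊕ B × Bool)) : Prop :=
  ∃ X Y' Y Z, r X Y' ∧ s Y Z ∧ V = encode X Y' Y Z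

variable {r s}

lemma totalType_le_defect {V : Set ((A ⊕ C) ⊕ B × Bool)} (hV : compFamily r s V) :
    totalType r s ≤ defect V := by
  obtain ⟨X, Y', Y, Z, hXY', hYZ, rfl⟩ := hV
  rw [defect_encode]
  exact Nat.sInf_le ⟨_, _, rfl, X, Z, Y, Y', hXY', hYZ, rfl, rfl⟩

variable [DecidableEq A] [DecidableEq C]

theorem exchangeProperty_compFamily (hr : ExchAxiom r) (hs : ExchAxiom s) :
    ExchangeProperty (compFamily r s) := by
  convert (exchangeProperty_barFamily hr).image_union (exchangeProperty_barFamily hs)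
    encodeLeft_injective encodeRight_injective disjoint_range_encodeLeft_encodeRight using 1
  ext V
  constructor
  · rintro ⟨X, Y', Y, Z, hXY', hYZ, rfl⟩
    exact ⟨_, _, ⟨X, Y', hXY', rfl⟩, ⟨Y, Z, hYZ, rfl⟩, rfl⟩
  · rintro ⟨_, _, ⟨X, Y', hXY', rfl⟩, ⟨Y, Z, hYZ, rfl⟩, rfl⟩
    exact ⟨X, Y', Y, Z, hXY', hYZ, rfl⟩

theorem pairedFamily_compFamily (hr : ExchAxiom r) (hs : ExchAxiom s) :
    PairedFamily (compFamily r s) where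
  exchange := exchangeProperty_compFamily hr hs
  finite_symmDiff := by
    rintro _ _ ⟨X, Y', Y, Z, -, -, rfl⟩ ⟨X₂, Y₂', Y₂, Z₂, -, -, rfl⟩
    exact finite_symmDiff_encode
  finite_emptyPairs := by
    rintro _ ⟨X, Y', Y, Z, -, -, rfl⟩
    simp [emptyPairs_encode]
  finite_fullPairs := by
    rintro _ ⟨X, Y', Y, Z, -, -, rfl⟩
    simp [fullPairs_encode]

end Encoding

theorem laxComp_eq_relComp_partialId {A B C : Type*} [DecidableEq A] [DecidableEq B]
    [DecidableEq C] {r : Finset A → Finset B → Prop} {s : Finset B → Finset C → Prop}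
    (hr : ExchAxiom r) (hs : ExchAxiom s) {K L : Finset B}
    (hKL : K.card + L.card = totalType r s)
    (hne : ∃ X Z, RelComp (RelComp r (PartialId K L)) s X Z) :
    LaxComp r s = RelComp (RelComp r (PartialId K L)) s := by
  obtain ⟨X₁, Z₁, Y₁, ⟨Y₁', h₁, hK, hL⟩, h₂⟩ := hne
  have hV : compFamily r s (encode X₁ Y₁' Y₁ Z₁) := ⟨_, _, _, _, h₁, h₂, rfl⟩
  have hVm : defect (encode X₁ Y₁' Y₁ Z₁) = totalType r s := by rw [defect_encode, hK, hL, hKL]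
  funext X Z
  apply propext
  constructor
  · rintro ⟨k, l, hkl, Y, Y', hXY', hYZ, rfl, rfl⟩
    obtain ⟨_, ⟨X₃, Y₃', Y₃, Z₃, h₃, h₄, rfl⟩, hUe, hUf, hUinl⟩ :=
      (pairedFamily_compFamily hr hs).exists_pairs_eq_of_defect_eq
        (fun U hU => totalType_le_defect hU) hV ⟨_, _, _, _, hXY', hYZ, rfl⟩ hVm
        (by rw [defect_encode, hkl])
    simp only [emptyPairs_encode, fullPairs_encode, Finset.coe_inj] at hUe hUf
    obtain rfl : X₃ = X := Finset.ext fun a => by simpa using (hUinl (inl a)).not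
    obtain rfl : Z₃ = Z := Finset.ext fun c => by simpa using hUinl (inr c)
    exact ⟨Y₃, ⟨Y₃', h₃, hUe.trans hK, hUf.trans hL⟩, h₄⟩
  · rintro ⟨Y, ⟨Y', hXY', hK', hL'⟩, hYZ⟩
    exact ⟨K.card, L.card, hKL, Y, Y', hXY', hYZ, by rw [hK'], by rw [hL']⟩

theorem laxComp_structure_general {A B C : Type*} [DecidableEq A] [DecidableEq B] [DecidableEq C]
    (r : Finset A → Finset B → Prop) (s : Finset B → Finset C → Prop)
    (hr : ExchAxiom r) (hs : ExchAxiom s)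
    (k l : ℕ) (hkl : k + l = totalType r s) (hne : ∃ X Z, BComp r s k l X Z) :
    (∃ K L : Finset B, Disjoint K L ∧ K.card = k ∧ L.card = l ∧
      LaxComp r s = RelComp (RelComp r (PartialId K L)) s) ∧
    (∀ K L : Finset B, Disjoint K L → K.card = k → L.card = l →
      (∃ X Z, RelComp (RelComp r (PartialId K L)) s X Z) →
      LaxComp r s = RelComp (RelComp r (PartialId K L)) s) := by
  refine ⟨?_, fun K L _ hK hL hne => laxComp_eq_relComp_partialId hr hs (by rw [hK, hL, hkl]) hne⟩
  obtain ⟨X, Z, Y, Y', hXY', hYZ, hk, hl⟩ := hne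
  exact ⟨Y \ Y', Y' \ Y, disjoint_sdiff_sdiff, hk, hl,
    laxComp_eq_relComp_partialId hr hs (by rw [hk, hl, hkl]) ⟨X, Z, Y, ⟨Y', hXY', rfl, rfl⟩, hYZ⟩⟩

/-- Structure theorem for lax composition: if `λ • μ` has type `(k,l)` then there
exist disjoint `K, L ⊆ B` with `|K| = k`, `|L| = l` such that
`λ • μ = λ ∘ I_{K,L} ∘ μ`; moreover this equation holds for any such disjoint
`K, L` for which the right-hand side is nonempty. -/
theorem laxComp_structure {A B C : Type*} [DecidableEq A] [DecidableEq B] [DecidableEq C]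
    (r : Finset A → Finset B → Prop) (s : Finset B → Finset C → Prop)
    (hr : ExchAxiom r) (hs : ExchAxiom s)
    (hrne : ∃ X Y, r X Y) (hsne : ∃ Y Z, s Y Z)
    (k l : ℕ) (hkl : k + l = totalType r s) (hne : ∃ X Z, BComp r s k l X Z) :
    (∃ K L : Finset B, Disjoint K L ∧ K.card = k ∧ L.card = l ∧
      LaxComp r s = RelComp (RelComp r (PartialId K L)) s) ∧
    (∀ K L : Finset B, Disjoint K L → K.card = k → L.card = l →
      (∃ X Z, RelComp (RelComp r (PartialId K L)) s X Z) →
      LaxComp r s = RelComp (RelComp r (PartialId K L)) s) :=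
  laxComp_structure_general r s hr hs k l hkl hne
end

section
/- Let μ on 𝒫(B) × 𝒫(C) and ν on 𝒫(C) × 𝒫(D) be exchange relations with μ ∘ ν nonempty, and suppose μ •_{k,l} ν is nonempty for non-negative integers k, l. Then at least one of the following holds: (a) (k,l) = (0,0); (b) k > 0 and μ •_{k-1,l} ν is nonempty; (c) l > 0 and μ •_{k,l-1} ν is nonempty; (d) k > 0, l > 0, and μ •_{k-1,l-1} ν is nonempty. -/
open Finset

section Aux

variable {α : Type*} [DecidableEq α]

lemma sdiff_erase_of_notMem' {s t : Finset α} {a : α} (h : a ∉ s) :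
    s \ t.erase a = s \ t := by
  ext x
  simp only [Finset.mem_sdiff, Finset.mem_erase]
  constructor
  · rintro ⟨hs, ht⟩
    refine ⟨hs, fun hxt => ht ⟨?_, hxt⟩⟩
    rintro rfl; exact h hs
  · rintro ⟨hs, ht⟩
    exact ⟨hs, fun hx => ht hx.2⟩

lemma sdiff_erase_of_mem' {s t : Finset α} {a : α} (hs : a ∈ s) :
    s \ t.erase a = insert a (s \ t) := by
  ext x
  simp only [Finset.mem_sdiff, Finset.mem_erase, Finset.mem_insert]
  constructor
  · rintro ⟨hxs, hx⟩
    by_cases hxa : x = a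
    · exact Or.inl hxa
    · exact Or.inr ⟨hxs, fun hxt => hx ⟨hxa, hxt⟩⟩
  · rintro (rfl | ⟨hxs, hxt⟩)
    · exact ⟨hs, fun hx => hx.1 rfl⟩
    · exact ⟨hxs, fun hx => hxt hx.2⟩

end Aux

/-- Descent lemma for the case `l > 0`. -/
lemma lemA {B C D : Type*} [DecidableEq B] [DecidableEq C] [DecidableEq D]
    (mu : Finset B → Finset C → Prop) (nu : Finset C → Finset D → Prop)
    (hmu : ExchAxiom mu) (hnu : ExchAxiom nu)
    (X₀ : Finset B) (Y₀ : Finset C) (Z₀ : Finset D)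
    (hmu0 : mu X₀ Y₀) (hnu0 : nu Y₀ Z₀) :
    ∀ ρ : ℕ, ∀ (X : Finset B) (Y' Y : Finset C) (Z : Finset D),
      (Y \ Y₀).card + (Y₀ \ Y).card + (Y' \ Y₀).card + (Y₀ \ Y').card ≤ ρ →
      mu X Y' → nu Y Z → 0 < (Y' \ Y).card →
      (∃ X₁ Z₁, BComp mu nu ((Y \ Y').card) ((Y' \ Y).card - 1) X₁ Z₁) ∨
      (0 < (Y \ Y').card ∧
        ∃ X₁ Z₁, BComp mu nu ((Y \ Y').card - 1) ((Y' \ Y).card - 1) X₁ Z₁) := by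
  intro ρ
  induction ρ with
  | zero =>
    intro X Y' Y Z hm hmuX hnuY hl
    exfalso
    have h1 : (Y' \ Y₀).card = 0 := by omega
    have h2 : (Y₀ \ Y).card = 0 := by omega
    have hsub1 : Y' ⊆ Y₀ := sdiff_eq_empty_iff_subset.mp (card_eq_zero.mp h1)
    have hsub2 : Y₀ ⊆ Y := sdiff_eq_empty_iff_subset.mp (card_eq_zero.mp h2)
    have he : Y' \ Y = ∅ := sdiff_eq_empty_iff_subset.mpr (hsub1.trans hsub2)
    rw [he, card_empty] at hl
    exact Nat.lt_irrefl 0 hl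
  | succ ρ ih =>
    intro X Y' Y Z hm hmuX hnuY hl
    obtain ⟨c, hc⟩ := card_pos.mp hl
    rw [mem_sdiff] at hc
    obtain ⟨hcY', hcY⟩ := hc
    by_cases hc0 : c ∈ Y₀
    · -- exchange on the nu side between (Y,Z) and (Y₀,Z₀), u = inl c
      obtain ⟨v, hvbar, hex⟩ :=
        hnu Y Z Y₀ Z₀ hnuY hnu0 (Sum.inl c) (show InBar Y Z (Sum.inl c) from hcY)
      rcases v with c3 | d
      · have hc3Y0 : c3 ∉ Y₀ := hvbar
        rcases (hex : c = c3 ∨ (c ∈ Y ∧ c3 ∉ Y ∧ nu (insert c3 (Y.erase c)) Z) ∨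
            (c ∉ Y ∧ c3 ∈ Y ∧ nu (insert c (Y.erase c3)) Z)) with
          rfl | ⟨hcY2, _⟩ | ⟨_, hc3Y, hnuNew⟩
        · exact absurd hc0 hc3Y0
        · exact absurd hcY2 hcY
        · by_cases hc3Y' : c3 ∈ Y'
          · -- recurse: same type, closer to Y₀
            have e1 : insert c (Y.erase c3) \ Y' = Y \ Y' := by
              rw [insert_sdiff_of_mem _ hcY', erase_sdiff_comm,
                erase_eq_of_notMem (by simp [mem_sdiff, hc3Y'])]
            have e2 : (Y' \ insert c (Y.erase c3)).card = (Y' \ Y).card := by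
              rw [sdiff_insert, sdiff_erase_of_mem' hc3Y',
                card_erase_of_mem (by simp only [mem_insert, mem_sdiff]; right; exact ⟨hcY', hcY⟩),
                card_insert_of_notMem (by simp [mem_sdiff, hc3Y])]
              omega
            have m1 : insert c (Y.erase c3) \ Y₀ = (Y \ Y₀).erase c3 := by
              rw [insert_sdiff_of_mem _ hc0, erase_sdiff_comm]
            have m2 : Y₀ \ insert c (Y.erase c3) = (Y₀ \ Y).erase c := by
              rw [sdiff_insert, sdiff_erase_of_notMem' hc3Y0]
            have hc3m : c3 ∈ Y \ Y₀ := mem_sdiff.mpr ⟨hc3Y, hc3Y0⟩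
            have hcm : c ∈ Y₀ \ Y := mem_sdiff.mpr ⟨hc0, hcY⟩
            have hmeas : (insert c (Y.erase c3) \ Y₀).card +
                (Y₀ \ insert c (Y.erase c3)).card + (Y' \ Y₀).card + (Y₀ \ Y').card ≤ ρ := by
              rw [m1, m2, card_erase_of_mem hc3m, card_erase_of_mem hcm]
              have h1 := card_pos.mpr ⟨c3, hc3m⟩
              have h2 := card_pos.mpr ⟨c, hcm⟩
              omega
            have hl' : 0 < (Y' \ insert c (Y.erase c3)).card := by rw [e2]; exact hl
            have h := ih X Y' (insert c (Y.erase c3)) Z hmeas hmuX hnuNew hl'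
            rw [e1, e2] at h
            exact h
          · -- done: type (k-1, l-1)
            have hc3k : c3 ∈ Y \ Y' := mem_sdiff.mpr ⟨hc3Y, hc3Y'⟩
            right
            refine ⟨card_pos.mpr ⟨c3, hc3k⟩, X, Z, insert c (Y.erase c3), Y', hmuX, hnuNew,
              ?_, ?_⟩
            · rw [insert_sdiff_of_mem _ hcY', erase_sdiff_comm, card_erase_of_mem hc3k]
            · rw [sdiff_insert, sdiff_erase_of_notMem' hc3Y',
                card_erase_of_mem (mem_sdiff.mpr ⟨hcY', hcY⟩)]
      · -- v = inr d : done, type (k, l-1)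
        rcases (hex : (c ∈ Y ∧ d ∈ Z ∧ nu (Y.erase c) (Z.erase d)) ∨
            (c ∉ Y ∧ d ∉ Z ∧ nu (insert c Y) (insert d Z))) with
          ⟨hcY2, _⟩ | ⟨_, _, hnuNew⟩
        · exact absurd hcY2 hcY
        · left
          refine ⟨X, insert d Z, insert c Y, Y', hmuX, hnuNew, ?_, ?_⟩
          · rw [insert_sdiff_of_mem _ hcY']
          · rw [sdiff_insert, card_erase_of_mem (mem_sdiff.mpr ⟨hcY', hcY⟩)]
    · -- exchange on the mu side between (X,Y') and (X₀,Y₀), u = inr c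
      obtain ⟨v, hvbar, hex⟩ :=
        hmu X Y' X₀ Y₀ hmuX hmu0 (Sum.inr c) (show InBar X Y' (Sum.inr c) from hcY')
      rcases v with b | c2
      · rcases (hex : (c ∈ Y' ∧ b ∈ X ∧ mu (X.erase b) (Y'.erase c)) ∨
            (c ∉ Y' ∧ b ∉ X ∧ mu (insert b X) (insert c Y'))) with
          ⟨_, _, hmuNew⟩ | ⟨hcn, _⟩
        · -- done, type (k, l-1)
          left
          refine ⟨X.erase b, Z, Y, Y'.erase c, hmuNew, hnuY, ?_, ?_⟩
          · rw [sdiff_erase_of_notMem' hcY]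
          · rw [erase_sdiff_comm, card_erase_of_mem (mem_sdiff.mpr ⟨hcY', hcY⟩)]
        · exact absurd hcY' hcn
      · have hc2Y0 : c2 ∈ Y₀ := hvbar
        rcases (hex : c = c2 ∨ (c ∈ Y' ∧ c2 ∉ Y' ∧ mu X (insert c2 (Y'.erase c))) ∨
            (c ∉ Y' ∧ c2 ∈ Y' ∧ mu X (insert c (Y'.erase c2)))) with
          rfl | ⟨_, hc2Y', hmuNew⟩ | ⟨hcn, _⟩
        · exact absurd hc2Y0 hc0
        · by_cases hc2Y : c2 ∈ Y
          · -- done, type (k-1, l-1)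
            have hc2k : c2 ∈ Y \ Y' := mem_sdiff.mpr ⟨hc2Y, hc2Y'⟩
            right
            refine ⟨card_pos.mpr ⟨c2, hc2k⟩, X, Z, Y, insert c2 (Y'.erase c), hmuNew, hnuY,
              ?_, ?_⟩
            · rw [sdiff_insert, sdiff_erase_of_notMem' hcY, card_erase_of_mem hc2k]
            · rw [insert_sdiff_of_mem _ hc2Y, erase_sdiff_comm,
                card_erase_of_mem (mem_sdiff.mpr ⟨hcY', hcY⟩)]
          · -- recurse
            have e1 : Y \ insert c2 (Y'.erase c) = Y \ Y' := by
              rw [sdiff_insert, sdiff_erase_of_notMem' hcY,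
                erase_eq_of_notMem (by simp [mem_sdiff, hc2Y])]
            have e2 : (insert c2 (Y'.erase c) \ Y).card = (Y' \ Y).card := by
              rw [insert_sdiff_of_notMem _ hc2Y, erase_sdiff_comm,
                card_insert_of_notMem (by simp [mem_erase, mem_sdiff, hc2Y']),
                card_erase_of_mem (mem_sdiff.mpr ⟨hcY', hcY⟩)]
              omega
            have m1 : insert c2 (Y'.erase c) \ Y₀ = (Y' \ Y₀).erase c := by
              rw [insert_sdiff_of_mem _ hc2Y0, erase_sdiff_comm]
            have m2 : Y₀ \ insert c2 (Y'.erase c) = (Y₀ \ Y').erase c2 := by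
              rw [sdiff_insert, sdiff_erase_of_notMem' hc0]
            have hcm : c ∈ Y' \ Y₀ := mem_sdiff.mpr ⟨hcY', hc0⟩
            have hc2m : c2 ∈ Y₀ \ Y' := mem_sdiff.mpr ⟨hc2Y0, hc2Y'⟩
            have hmeas : (Y \ Y₀).card + (Y₀ \ Y).card + (insert c2 (Y'.erase c) \ Y₀).card +
                (Y₀ \ insert c2 (Y'.erase c)).card ≤ ρ := by
              rw [m1, m2, card_erase_of_mem hcm, card_erase_of_mem hc2m]
              have h1 := card_pos.mpr ⟨c, hcm⟩
              have h2 := card_pos.mpr ⟨c2, hc2m⟩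
              omega
            have hl' : 0 < (insert c2 (Y'.erase c) \ Y).card := by rw [e2]; exact hl
            have h := ih X (insert c2 (Y'.erase c)) Y Z hmeas hmuNew hnuY hl'
            rw [e1, e2] at h
            exact h
        · exact absurd hcY' hcn

/-- Descent lemma for the case `l = 0 < k`. -/
lemma lemB {B C D : Type*} [DecidableEq B] [DecidableEq C] [DecidableEq D]
    (mu : Finset B → Finset C → Prop) (nu : Finset C → Finset D → Prop)
    (hmu : ExchAxiom mu) (hnu : ExchAxiom nu)
    (X : Finset B) (Y' Y : Finset C) (Z : Finset D)
    (hmuX : mu X Y') (hnuY : nu Y Z) (hY'Y : Y' ⊆ Y) :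
    ∀ μm : ℕ, ∀ (Xs : Finset B) (Ys Yd : Finset C) (Zd : Finset D),
      (Y \ Yd).card + (Ys \ Y').card ≤ μm →
      mu Xs Ys → nu Yd Zd →
      (Yd \ Ys).card < (Y \ Y').card →
      ∃ X₁ Z₁, BComp mu nu ((Y \ Y').card - 1) 0 X₁ Z₁ := by
  intro μm
  induction μm with
  | zero =>
    intro Xs Ys Yd Zd hm hmuS hnuD hκ
    exfalso
    have h1 : Y ⊆ Yd := sdiff_eq_empty_iff_subset.mp (card_eq_zero.mp (by omega))
    have h2 : Ys ⊆ Y' := sdiff_eq_empty_iff_subset.mp (card_eq_zero.mp (by omega))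
    have hsub : Y \ Y' ⊆ Yd \ Ys := by
      intro x hx
      rw [mem_sdiff] at hx ⊢
      exact ⟨h1 hx.1, fun hxs => hx.2 (h2 hxs)⟩
    exact absurd (card_le_card hsub) (not_le.mpr hκ)
  | succ μm ih =>
    intro Xs Ys Yd Zd hm hmuS hnuD hκ
    by_cases hlam : (Ys \ Yd).Nonempty
    · obtain ⟨c, hc⟩ := hlam
      rw [mem_sdiff] at hc
      obtain ⟨hcYs, hcYd⟩ := hc
      by_cases hcY' : c ∈ Y'
      · -- nu-repair : push c into Yd
        have hcY : c ∈ Y := hY'Y hcY'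
        obtain ⟨v, hvbar, hex⟩ :=
          hnu Yd Zd Y Z hnuD hnuY (Sum.inl c) (show InBar Yd Zd (Sum.inl c) from hcYd)
        rcases v with c3 | d
        · have hc3Y : c3 ∉ Y := hvbar
          rcases (hex : c = c3 ∨ (c ∈ Yd ∧ c3 ∉ Yd ∧ nu (insert c3 (Yd.erase c)) Zd) ∨
              (c ∉ Yd ∧ c3 ∈ Yd ∧ nu (insert c (Yd.erase c3)) Zd)) with
            rfl | ⟨hcYd2, _⟩ | ⟨_, hc3Yd, hnuNew⟩
          · exact absurd hcY hc3Y
          · exact absurd hcYd2 hcYd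
          · have m1 : Y \ insert c (Yd.erase c3) = (Y \ Yd).erase c := by
              rw [sdiff_insert, sdiff_erase_of_notMem' hc3Y]
            have k1 : insert c (Yd.erase c3) \ Ys = (Yd \ Ys).erase c3 := by
              rw [insert_sdiff_of_mem _ hcYs, erase_sdiff_comm]
            have hcm : c ∈ Y \ Yd := mem_sdiff.mpr ⟨hcY, hcYd⟩
            refine ih Xs Ys (insert c (Yd.erase c3)) Zd ?_ hmuS hnuNew ?_
            · rw [m1, card_erase_of_mem hcm]
              have := card_pos.mpr ⟨c, hcm⟩
              omega
            · rw [k1]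
              exact lt_of_le_of_lt card_erase_le hκ
        · rcases (hex : (c ∈ Yd ∧ d ∈ Zd ∧ nu (Yd.erase c) (Zd.erase d)) ∨
              (c ∉ Yd ∧ d ∉ Zd ∧ nu (insert c Yd) (insert d Zd))) with
            ⟨hcYd2, _⟩ | ⟨_, _, hnuNew⟩
          · exact absurd hcYd2 hcYd
          · have m1 : Y \ insert c Yd = (Y \ Yd).erase c := sdiff_insert _ _ _
            have k1 : insert c Yd \ Ys = Yd \ Ys := insert_sdiff_of_mem _ hcYs
            have hcm : c ∈ Y \ Yd := mem_sdiff.mpr ⟨hcY, hcYd⟩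
            refine ih Xs Ys (insert c Yd) (insert d Zd) ?_ hmuS hnuNew ?_
            · rw [m1, card_erase_of_mem hcm]
              have := card_pos.mpr ⟨c, hcm⟩
              omega
            · rw [k1]; exact hκ
      · -- mu-repair : remove c from Ys
        obtain ⟨v, hvbar, hex⟩ :=
          hmu Xs Ys X Y' hmuS hmuX (Sum.inr c) (show InBar Xs Ys (Sum.inr c) from hcYs)
        rcases v with b | c2
        · rcases (hex : (c ∈ Ys ∧ b ∈ Xs ∧ mu (Xs.erase b) (Ys.erase c)) ∨
              (c ∉ Ys ∧ b ∉ Xs ∧ mu (insert b Xs) (insert c Ys))) with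
            ⟨_, _, hmuNew⟩ | ⟨hcn, _⟩
          · have m1 : Ys.erase c \ Y' = (Ys \ Y').erase c := erase_sdiff_comm _ _ _
            have k1 : Yd \ Ys.erase c = Yd \ Ys := sdiff_erase_of_notMem' hcYd
            have hcm : c ∈ Ys \ Y' := mem_sdiff.mpr ⟨hcYs, hcY'⟩
            refine ih (Xs.erase b) (Ys.erase c) Yd Zd ?_ hmuNew hnuD ?_
            · rw [m1, card_erase_of_mem hcm]
              have := card_pos.mpr ⟨c, hcm⟩
              omega
            · rw [k1]; exact hκ
          · exact absurd hcYs hcn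
        · have hc2Y' : c2 ∈ Y' := hvbar
          rcases (hex : c = c2 ∨ (c ∈ Ys ∧ c2 ∉ Ys ∧ mu Xs (insert c2 (Ys.erase c))) ∨
              (c ∉ Ys ∧ c2 ∈ Ys ∧ mu Xs (insert c (Ys.erase c2)))) with
            rfl | ⟨_, _, hmuNew⟩ | ⟨hcn, _⟩
          · exact absurd hc2Y' hcY'
          · have m1 : insert c2 (Ys.erase c) \ Y' = (Ys \ Y').erase c := by
              rw [insert_sdiff_of_mem _ hc2Y', erase_sdiff_comm]
            have k1 : Yd \ insert c2 (Ys.erase c) = (Yd \ Ys).erase c2 := by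
              rw [sdiff_insert, sdiff_erase_of_notMem' hcYd]
            have hcm : c ∈ Ys \ Y' := mem_sdiff.mpr ⟨hcYs, hcY'⟩
            refine ih Xs (insert c2 (Ys.erase c)) Yd Zd ?_ hmuNew hnuD ?_
            · rw [m1, card_erase_of_mem hcm]
              have := card_pos.mpr ⟨c, hcm⟩
              omega
            · rw [k1]
              exact lt_of_le_of_lt card_erase_le hκ
          · exact absurd hcYs hcn
    · -- Ys ⊆ Yd
      have hYsYd : Ys ⊆ Yd :=
        sdiff_eq_empty_iff_subset.mp (not_nonempty_iff_eq_empty.mp hlam)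
      by_cases hdone : (Yd \ Ys).card = (Y \ Y').card - 1
      · exact ⟨Xs, Zd, Yd, Ys, hmuS, hnuD, hdone, by
          rw [card_eq_zero, sdiff_eq_empty_iff_subset]; exact hYsYd⟩
      · have hκ2 : (Yd \ Ys).card + 1 < (Y \ Y').card := by omega
        by_cases hmain : (Ys \ Y').Nonempty
        · -- mu main move
          obtain ⟨c, hcm0⟩ := hmain
          rw [mem_sdiff] at hcm0
          obtain ⟨hcYs, hcY'⟩ := hcm0
          have hcYd : c ∈ Yd := hYsYd hcYs
          obtain ⟨v, hvbar, hex⟩ :=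
            hmu Xs Ys X Y' hmuS hmuX (Sum.inr c) (show InBar Xs Ys (Sum.inr c) from hcYs)
          rcases v with b | c2
          · rcases (hex : (c ∈ Ys ∧ b ∈ Xs ∧ mu (Xs.erase b) (Ys.erase c)) ∨
                (c ∉ Ys ∧ b ∉ Xs ∧ mu (insert b Xs) (insert c Ys))) with
              ⟨_, _, hmuNew⟩ | ⟨hcn, _⟩
            · have m1 : Ys.erase c \ Y' = (Ys \ Y').erase c := erase_sdiff_comm _ _ _
              have k1 : Yd \ Ys.erase c = insert c (Yd \ Ys) := sdiff_erase_of_mem' hcYd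
              have hcm : c ∈ Ys \ Y' := mem_sdiff.mpr ⟨hcYs, hcY'⟩
              refine ih (Xs.erase b) (Ys.erase c) Yd Zd ?_ hmuNew hnuD ?_
              · rw [m1, card_erase_of_mem hcm]
                have := card_pos.mpr ⟨c, hcm⟩
                omega
              · rw [k1]
                exact lt_of_le_of_lt (card_insert_le _ _) hκ2
            · exact absurd hcYs hcn
          · have hc2Y' : c2 ∈ Y' := hvbar
            rcases (hex : c = c2 ∨ (c ∈ Ys ∧ c2 ∉ Ys ∧ mu Xs (insert c2 (Ys.erase c))) ∨
                (c ∉ Ys ∧ c2 ∈ Ys ∧ mu Xs (insert c (Ys.erase c2)))) with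
              rfl | ⟨_, _, hmuNew⟩ | ⟨hcn, _⟩
            · exact absurd hc2Y' hcY'
            · have m1 : insert c2 (Ys.erase c) \ Y' = (Ys \ Y').erase c := by
                rw [insert_sdiff_of_mem _ hc2Y', erase_sdiff_comm]
              have k1 : Yd \ insert c2 (Ys.erase c) = (insert c (Yd \ Ys)).erase c2 := by
                rw [sdiff_insert, sdiff_erase_of_mem' hcYd]
              have hcm : c ∈ Ys \ Y' := mem_sdiff.mpr ⟨hcYs, hcY'⟩
              refine ih Xs (insert c2 (Ys.erase c)) Yd Zd ?_ hmuNew hnuD ?_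
              · rw [m1, card_erase_of_mem hcm]
                have := card_pos.mpr ⟨c, hcm⟩
                omega
              · rw [k1]
                exact lt_of_le_of_lt (le_trans card_erase_le (card_insert_le _ _)) hκ2
            · exact absurd hcYs hcn
        · -- nu main move
          have hYsY' : Ys ⊆ Y' :=
            sdiff_eq_empty_iff_subset.mp (not_nonempty_iff_eq_empty.mp hmain)
          have hYYd : (Y \ Yd).Nonempty := by
            by_contra h
            have hYYd' : Y ⊆ Yd :=
              sdiff_eq_empty_iff_subset.mp (not_nonempty_iff_eq_empty.mp h)
            have hsub : Y \ Y' ⊆ Yd \ Ys := by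
              intro x hx
              rw [mem_sdiff] at hx ⊢
              exact ⟨hYYd' hx.1, fun hxs => hx.2 (hYsY' hxs)⟩
            exact absurd (card_le_card hsub) (not_le.mpr hκ)
          obtain ⟨c, hcm0⟩ := hYYd
          rw [mem_sdiff] at hcm0
          obtain ⟨hcY, hcYd⟩ := hcm0
          have hcYs : c ∉ Ys := fun h => hcYd (hYsYd h)
          obtain ⟨v, hvbar, hex⟩ :=
            hnu Yd Zd Y Z hnuD hnuY (Sum.inl c) (show InBar Yd Zd (Sum.inl c) from hcYd)
          rcases v with c3 | d
          · have hc3Y : c3 ∉ Y := hvbar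
            rcases (hex : c = c3 ∨ (c ∈ Yd ∧ c3 ∉ Yd ∧ nu (insert c3 (Yd.erase c)) Zd) ∨
                (c ∉ Yd ∧ c3 ∈ Yd ∧ nu (insert c (Yd.erase c3)) Zd)) with
              rfl | ⟨hcYd2, _⟩ | ⟨_, hc3Yd, hnuNew⟩
            · exact absurd hcY hc3Y
            · exact absurd hcYd2 hcYd
            · have m1 : Y \ insert c (Yd.erase c3) = (Y \ Yd).erase c := by
                rw [sdiff_insert, sdiff_erase_of_notMem' hc3Y]
              have k1 : insert c (Yd.erase c3) \ Ys = insert c ((Yd \ Ys).erase c3) := by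
                rw [insert_sdiff_of_notMem _ hcYs, erase_sdiff_comm]
              have hcm : c ∈ Y \ Yd := mem_sdiff.mpr ⟨hcY, hcYd⟩
              refine ih Xs Ys (insert c (Yd.erase c3)) Zd ?_ hmuS hnuNew ?_
              · rw [m1, card_erase_of_mem hcm]
                have := card_pos.mpr ⟨c, hcm⟩
                omega
              · rw [k1]
                exact lt_of_le_of_lt
                  (le_trans (card_insert_le _ _) (Nat.succ_le_succ card_erase_le)) hκ2
          · rcases (hex : (c ∈ Yd ∧ d ∈ Zd ∧ nu (Yd.erase c) (Zd.erase d)) ∨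
                (c ∉ Yd ∧ d ∉ Zd ∧ nu (insert c Yd) (insert d Zd))) with
              ⟨hcYd2, _⟩ | ⟨_, _, hnuNew⟩
            · exact absurd hcYd2 hcYd
            · have m1 : Y \ insert c Yd = (Y \ Yd).erase c := sdiff_insert _ _ _
              have k1 : insert c Yd \ Ys = insert c (Yd \ Ys) :=
                insert_sdiff_of_notMem _ hcYs
              have hcm : c ∈ Y \ Yd := mem_sdiff.mpr ⟨hcY, hcYd⟩
              refine ih Xs Ys (insert c Yd) (insert d Zd) ?_ hmuS hnuNew ?_
              · rw [m1, card_erase_of_mem hcm]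
                have := card_pos.mpr ⟨c, hcm⟩
                omega
              · rw [k1]
                exact lt_of_le_of_lt (card_insert_le _ _) hκ2

/-- Stepping-down lemma for lax composition: if `μ ∘ ν` is nonempty and
`μ •_{k,l} ν` is nonempty, then `(k,l) = (0,0)`, or one of `μ •_{k-1,l} ν`,
`μ •_{k,l-1} ν`, `μ •_{k-1,l-1} ν` is nonempty (with the corresponding indices
positive). -/
theorem laxComp_steps {B C D : Type*} [DecidableEq B] [DecidableEq C] [DecidableEq D]
    (mu : Finset B → Finset C → Prop) (nu : Finset C → Finset D → Prop)
    (hmu : ExchAxiom mu) (hnu : ExchAxiom nu)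
    (hcomp : ∃ X Z, RelComp mu nu X Z)
    (k l : ℕ) (hne : ∃ X Z, BComp mu nu k l X Z) :
    (k = 0 ∧ l = 0) ∨
    (0 < k ∧ ∃ X Z, BComp mu nu (k - 1) l X Z) ∨
    (0 < l ∧ ∃ X Z, BComp mu nu k (l - 1) X Z) ∨
    (0 < k ∧ 0 < l ∧ ∃ X Z, BComp mu nu (k - 1) (l - 1) X Z) := by
  obtain ⟨Xw, Zw, Yn, Ym, hmu1, hnu1, hk, hl⟩ := hne
  obtain ⟨X₀, Z₀, Y₀, hmu0, hnu0⟩ := hcomp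
  by_cases hl0 : l = 0
  · subst hl0
    by_cases hk0 : k = 0
    · exact Or.inl ⟨hk0, rfl⟩
    · have hkpos : 0 < k := Nat.pos_of_ne_zero hk0
      have hsub : Ym ⊆ Yn := sdiff_eq_empty_iff_subset.mp (card_eq_zero.mp hl)
      have hres := lemB mu nu hmu hnu Xw Ym Yn Zw hmu1 hnu1 hsub
        ((Yn \ Y₀).card + (Y₀ \ Ym).card) X₀ Y₀ Y₀ Z₀ le_rfl hmu0 hnu0
        (by simp only [sdiff_self, card_empty, hk]; exact hkpos)
      rw [hk] at hres
      exact Or.inr (Or.inl ⟨hkpos, hres⟩)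
  · have hlpos : 0 < (Ym \ Yn).card := by rw [hl]; exact Nat.pos_of_ne_zero hl0
    have hres := lemA mu nu hmu hnu X₀ Y₀ Z₀ hmu0 hnu0
      ((Yn \ Y₀).card + (Y₀ \ Yn).card + (Ym \ Y₀).card + (Y₀ \ Ym).card)
      Xw Ym Yn Zw le_rfl hmu1 hnu1 hlpos
    rw [hk, hl] at hres
    rcases hres with h | ⟨hkpos, h⟩
    · exact Or.inr (Or.inr (Or.inl ⟨Nat.pos_of_ne_zero hl0, h⟩))
    · exact Or.inr (Or.inr (Or.inr ⟨hkpos, Nat.pos_of_ne_zero hl0, h⟩))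
end

section
/- Let λ, μ, ν be exchange relations on 𝒫(A)×𝒫(B), 𝒫(B)×𝒫(C), 𝒫(C)×𝒫(D) respectively with λ ∘ μ ≠ ∅, μ ∘ ν ≠ ∅, and λ ∘ μ ∘ ν = ∅. Then (λ ∘ μ) •_{1,0} ν = λ •_{1,0} (μ ∘ ν) and (λ ∘ μ) •_{0,1} ν = λ •_{0,1} (μ ∘ ν). -/
open Finset

namespace SpecialAssoc

variable {A B : Type*} [DecidableEq A] [DecidableEq B]
  {r : Finset A → Finset B → Prop}

/-- One exchange step towards the second pair, using a left element. -/
lemma step_left (hr : ExchAxiom r) {P S : Finset A} {Q T : Finset B}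
    (h1 : r P Q) (h2 : r S T) {a : A} (haS : a ∈ S) (haP : a ∉ P) :
    ∃ P' Q', r P' Q' ∧ ((Q'.card : ℤ) - P'.card = (Q.card : ℤ) - P.card) ∧
      (P' \ S).card + (S \ P').card + (Q' \ T).card + (T \ Q').card + 2 ≤
      (P \ S).card + (S \ P).card + (Q \ T).card + (T \ Q).card := by
  obtain ⟨v, hv, hex⟩ := hr P Q S T h1 h2 (Sum.inl a) (by simpa [InBar] using haP)
  rcases v with a' | b'
  · simp only [InBar] at hv
    simp only [Exchangeable] at hex
    rcases hex with rfl | ⟨haP', _⟩ | ⟨-, ha'P, hr'⟩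
    · exact absurd haS hv
    · exact absurd haP' haP
    · refine ⟨insert a (P.erase a'), Q, hr', ?_, ?_⟩
      · have h1 : a ∉ P.erase a' := fun h => haP (mem_of_mem_erase h)
        have h2 : (insert a (P.erase a')).card = (P.erase a').card + 1 :=
          card_insert_of_notMem h1
        have h3 : (P.erase a').card = P.card - 1 := card_erase_of_mem ha'P
        have h4 : 1 ≤ P.card := card_pos.mpr ⟨a', ha'P⟩
        have : (insert a (P.erase a')).card = P.card := by omega
        rw [this]
      · have e1 : insert a (P.erase a') \ S = (P \ S).erase a' := by
          ext x
          simp only [mem_sdiff, mem_insert, mem_erase]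
          constructor
          · rintro ⟨rfl | ⟨hx1, hx2⟩, hxS⟩
            · exact absurd haS hxS
            · exact ⟨hx1, hx2, hxS⟩
          · rintro ⟨hx1, hx2, hx3⟩
            exact ⟨Or.inr ⟨hx1, hx2⟩, hx3⟩
        have e2 : S \ insert a (P.erase a') = (S \ P).erase a := by
          ext x
          rcases eq_or_ne x a' with rfl | hxa'
          · simp [mem_sdiff, mem_erase, hv]
          · simp only [mem_sdiff, mem_insert, mem_erase, hxa', not_or]
            tauto
        have m1 : a' ∈ P \ S := mem_sdiff.mpr ⟨ha'P, hv⟩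
        have m2 : a ∈ S \ P := mem_sdiff.mpr ⟨haS, haP⟩
        rw [e1, e2, card_erase_of_mem m1, card_erase_of_mem m2]
        have c1 : 1 ≤ (P \ S).card := card_pos.mpr ⟨a', m1⟩
        have c2 : 1 ≤ (S \ P).card := card_pos.mpr ⟨a, m2⟩
        omega
  · simp only [InBar] at hv
    simp only [Exchangeable] at hex
    rcases hex with ⟨haP', _⟩ | ⟨-, hb'Q, hr'⟩
    · exact absurd haP' haP
    · refine ⟨insert a P, insert b' Q, hr', ?_, ?_⟩
      · rw [card_insert_of_notMem haP, card_insert_of_notMem hb'Q]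
        push_cast; ring
      · have e1 : insert a P \ S = P \ S := by
          ext x
          simp only [mem_sdiff, mem_insert]
          constructor
          · rintro ⟨rfl | hx, hxS⟩
            · exact absurd haS hxS
            · exact ⟨hx, hxS⟩
          · rintro ⟨hx, hxS⟩; exact ⟨Or.inr hx, hxS⟩
        have e2 : S \ insert a P = (S \ P).erase a := by
          ext x
          simp only [mem_sdiff, mem_insert, mem_erase, not_or]
          tauto
        have e3 : insert b' Q \ T = Q \ T := by
          ext x
          simp only [mem_sdiff, mem_insert]
          constructor
          · rintro ⟨rfl | hx, hxT⟩
            · exact absurd hv hxT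
            · exact ⟨hx, hxT⟩
          · rintro ⟨hx, hxT⟩; exact ⟨Or.inr hx, hxT⟩
        have e4 : T \ insert b' Q = (T \ Q).erase b' := by
          ext x
          simp only [mem_sdiff, mem_insert, mem_erase, not_or]
          tauto
        have m1 : a ∈ S \ P := mem_sdiff.mpr ⟨haS, haP⟩
        have m2 : b' ∈ T \ Q := mem_sdiff.mpr ⟨hv, hb'Q⟩
        rw [e1, e2, e3, e4, card_erase_of_mem m1, card_erase_of_mem m2]
        have c1 : 1 ≤ (S \ P).card := card_pos.mpr ⟨a, m1⟩
        have c2 : 1 ≤ (T \ Q).card := card_pos.mpr ⟨b', m2⟩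
        omega

/-- One exchange step towards the second pair, using a right element. -/
lemma step_right (hr : ExchAxiom r) {P S : Finset A} {Q T : Finset B}
    (h1 : r P Q) (h2 : r S T) {b : B} (hbQ : b ∈ Q) (hbT : b ∉ T) :
    ∃ P' Q', r P' Q' ∧ ((Q'.card : ℤ) - P'.card = (Q.card : ℤ) - P.card) ∧
      (P' \ S).card + (S \ P').card + (Q' \ T).card + (T \ Q').card + 2 ≤
      (P \ S).card + (S \ P).card + (Q \ T).card + (T \ Q).card := by
  obtain ⟨v, hv, hex⟩ := hr P Q S T h1 h2 (Sum.inr b) (by simpa [InBar] using hbQ)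
  rcases v with a' | b'
  · simp only [InBar] at hv
    simp only [Exchangeable] at hex
    rcases hex with ⟨-, ha'P, hr'⟩ | ⟨hbQ', -⟩
    · refine ⟨P.erase a', Q.erase b, hr', ?_, ?_⟩
      · have c1 : 1 ≤ P.card := card_pos.mpr ⟨a', ha'P⟩
        have c2 : 1 ≤ Q.card := card_pos.mpr ⟨b, hbQ⟩
        have d1 : ((P.erase a').card : ℤ) = (P.card : ℤ) - 1 := by
          rw [card_erase_of_mem ha'P]; push_cast; omega
        have d2 : ((Q.erase b).card : ℤ) = (Q.card : ℤ) - 1 := by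
          rw [card_erase_of_mem hbQ]; push_cast; omega
        rw [d1, d2]; ring
      · have e1 : P.erase a' \ S = (P \ S).erase a' := by
          ext x; simp only [mem_sdiff, mem_erase]; tauto
        have e2 : S \ P.erase a' = S \ P := by
          ext x
          rcases eq_or_ne x a' with rfl | hxa'
          · simp [hv]
          · simp only [mem_sdiff, mem_erase, hxa']; tauto
        have e3 : Q.erase b \ T = (Q \ T).erase b := by
          ext x; simp only [mem_sdiff, mem_erase]; tauto
        have e4 : T \ Q.erase b = T \ Q := by
          ext x
          rcases eq_or_ne x b with rfl | hxb
          · simp [hbT]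
          · simp only [mem_sdiff, mem_erase, hxb]; tauto
        have m1 : a' ∈ P \ S := mem_sdiff.mpr ⟨ha'P, hv⟩
        have m2 : b ∈ Q \ T := mem_sdiff.mpr ⟨hbQ, hbT⟩
        rw [e1, e2, e3, e4, card_erase_of_mem m1, card_erase_of_mem m2]
        have c1 : 1 ≤ (P \ S).card := card_pos.mpr ⟨a', m1⟩
        have c2 : 1 ≤ (Q \ T).card := card_pos.mpr ⟨b, m2⟩
        omega
    · exact absurd hbQ hbQ'
  · simp only [InBar] at hv
    simp only [Exchangeable] at hex
    rcases hex with rfl | ⟨-, hb'Q, hr'⟩ | ⟨hbQ', -⟩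
    · exact absurd hv hbT
    · refine ⟨P, insert b' (Q.erase b), hr', ?_, ?_⟩
      · have hb' : b' ∉ Q.erase b := fun h => hb'Q (mem_of_mem_erase h)
        have c2 : 1 ≤ Q.card := card_pos.mpr ⟨b, hbQ⟩
        have : (insert b' (Q.erase b)).card = Q.card := by
          rw [card_insert_of_notMem hb', card_erase_of_mem hbQ]; omega
        rw [this]
      · have e3 : insert b' (Q.erase b) \ T = (Q \ T).erase b := by
          ext x
          rcases eq_or_ne x b' with rfl | hxb'
          · simp [hv]
          · simp only [mem_sdiff, mem_insert, mem_erase, hxb', false_or]; tauto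
        have e4 : T \ insert b' (Q.erase b) = (T \ Q).erase b' := by
          ext x
          rcases eq_or_ne x b with rfl | hxb
          · simp [hbT]
          · simp only [mem_sdiff, mem_insert, mem_erase, not_or, hxb]; tauto
        have m1 : b ∈ Q \ T := mem_sdiff.mpr ⟨hbQ, hbT⟩
        have m2 : b' ∈ T \ Q := mem_sdiff.mpr ⟨hv, hb'Q⟩
        rw [e3, e4, card_erase_of_mem m1, card_erase_of_mem m2]
        have c1 : 1 ≤ (Q \ T).card := card_pos.mpr ⟨b, m1⟩
        have c2 : 1 ≤ (T \ Q).card := card_pos.mpr ⟨b', m2⟩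
        omega
    · exact absurd hbQ hbQ'

/-- The defect `|Y| - |X|` is constant across an exchange relation. -/
lemma defect_eq (hr : ExchAxiom r) {X S : Finset A} {Y T : Finset B}
    (h1 : r X Y) (h2 : r S T) : (Y.card : ℤ) - X.card = (T.card : ℤ) - S.card := by
  suffices H : ∀ n (X S : Finset A) (Y T : Finset B),
      (X \ S).card + (S \ X).card + (Y \ T).card + (T \ Y).card ≤ n →
      r X Y → r S T → (Y.card : ℤ) - X.card = (T.card : ℤ) - S.card from
    H _ X S Y T le_rfl h1 h2
  intro n
  induction n with
  | zero =>
    intro X S Y T hm h1 h2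
    have eX : X = S := by
      apply subset_antisymm <;> rw [← sdiff_eq_empty_iff_subset] <;>
        rw [← card_eq_zero] <;> omega
    have eY : Y = T := by
      apply subset_antisymm <;> rw [← sdiff_eq_empty_iff_subset] <;>
        rw [← card_eq_zero] <;> omega
    rw [eX, eY]
  | succ n ih =>
    intro X S Y T hm h1 h2
    rcases (X \ S).eq_empty_or_nonempty with hXS | ⟨a, ha⟩
    · rcases (S \ X).eq_empty_or_nonempty with hSX | ⟨a, ha⟩
      · rcases (Y \ T).eq_empty_or_nonempty with hYT | ⟨b, hb⟩
        · rcases (T \ Y).eq_empty_or_nonempty with hTY | ⟨b, hb⟩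
          · have eX : X = S :=
              subset_antisymm (sdiff_eq_empty_iff_subset.mp hXS)
                (sdiff_eq_empty_iff_subset.mp hSX)
            have eY : Y = T :=
              subset_antisymm (sdiff_eq_empty_iff_subset.mp hYT)
                (sdiff_eq_empty_iff_subset.mp hTY)
            rw [eX, eY]
          · -- b ∈ T \ Y : modify (S, T)
            obtain ⟨hb1, hb2⟩ := mem_sdiff.mp hb
            obtain ⟨P', Q', hr', hd, hle⟩ := step_right hr h2 h1 hb1 hb2
            have := ih X P' Y Q' (by omega) h1 hr'
            omega
        · -- b ∈ Y \ T : modify (X, Y)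
          obtain ⟨hb1, hb2⟩ := mem_sdiff.mp hb
          obtain ⟨P', Q', hr', hd, hle⟩ := step_right hr h1 h2 hb1 hb2
          have := ih P' S Q' T (by omega) hr' h2
          omega
      · -- a ∈ S \ X : modify (X, Y)
        obtain ⟨ha1, ha2⟩ := mem_sdiff.mp ha
        obtain ⟨P', Q', hr', hd, hle⟩ := step_left hr h1 h2 ha1 ha2
        have := ih P' S Q' T (by omega) hr' h2
        omega
    · -- a ∈ X \ S : modify (S, T)
      obtain ⟨ha1, ha2⟩ := mem_sdiff.mp ha
      obtain ⟨P', Q', hr', hd, hle⟩ := step_left hr h2 h1 ha1 ha2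
      have := ih X P' Y Q' (by omega) h1 hr'
      omega

def CoBar {A B : Type*} (X : Finset A) (Y : Finset B) : A ⊕ B → Prop
  | Sum.inl a => a ∈ X
  | Sum.inr b => b ∉ Y

def Fresh {A B : Type*} (X X' : Finset A) (Y Y' : Finset B) : A ⊕ B → Prop
  | Sum.inl a => a ∉ X ∧ a ∈ X'
  | Sum.inr b => b ∈ Y ∧ b ∉ Y'

lemma coExchS (hr : ExchAxiom r) :
    ∀ n (X X' : Finset A) (Y Y' : Finset B),
      (X \ X').card + (Y' \ Y).card ≤ n → r X Y → r X' Y' →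
      ∀ u, Fresh X' X Y' Y u →
      ∃ v, Fresh X X' Y Y' v ∧ Exchangeable r X Y u v := by
  intro n
  induction n with
  | zero =>
    intro X X' Y Y' hm h1 h2 u hu
    exfalso
    rcases u with a | b
    · obtain ⟨h1', h2'⟩ := hu
      have : 1 ≤ (X \ X').card := card_pos.mpr ⟨a, mem_sdiff.mpr ⟨h2', h1'⟩⟩
      omega
    · obtain ⟨h1', h2'⟩ := hu
      have : 1 ≤ (Y' \ Y).card := card_pos.mpr ⟨b, mem_sdiff.mpr ⟨h1', h2'⟩⟩
      omega
  | succ n ih =>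
    intro X X' Y Y' hm h1 h2 u hu
    rcases u with a | b
    · obtain ⟨haX', haX⟩ := hu
      by_cases hw1 : ∃ a₁ ∈ X \ X', a₁ ≠ a
      · obtain ⟨a₁, ha₁, hne⟩ := hw1
        obtain ⟨ha₁X, ha₁X'⟩ := mem_sdiff.mp ha₁
        obtain ⟨v₁, hv₁, hex⟩ :=
          hr X' Y' X Y h2 h1 (Sum.inl a₁) (by simpa [InBar] using ha₁X')
        rcases v₁ with a₂ | b₂
        · simp only [InBar] at hv₁
          simp only [Exchangeable] at hex
          rcases hex with rfl | ⟨h', -⟩ | ⟨-, ha₂X', hr''⟩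
          · exact absurd ha₁X hv₁
          · exact absurd h' ha₁X'
          · -- X'' = insert a₁ (X'.erase a₂)
            have hmeas : X \ insert a₁ (X'.erase a₂) = (X \ X').erase a₁ := by
              ext x
              rcases eq_or_ne x a₂ with rfl | hxa₂
              · simp [hv₁]
              · simp only [mem_sdiff, mem_insert, mem_erase, hxa₂, not_or]
                tauto
            obtain ⟨v, hvf, hvex⟩ := ih X (insert a₁ (X'.erase a₂)) Y Y'
              (by
                rw [hmeas, card_erase_of_mem (mem_sdiff.mpr ⟨ha₁X, ha₁X'⟩)]
                have : 1 ≤ (X \ X').card := card_pos.mpr ⟨a₁, mem_sdiff.mpr ⟨ha₁X, ha₁X'⟩⟩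
                omega)
              h1 hr'' (Sum.inl a)
              ⟨by
                simp only [mem_insert, mem_erase, not_or]
                exact ⟨fun h => hne h.symm, fun h => haX' h.2⟩, haX⟩
            refine ⟨v, ?_, hvex⟩
            rcases v with a₃ | b₃
            · obtain ⟨h₃X, h₃X''⟩ := hvf
              refine ⟨h₃X, ?_⟩
              rcases mem_insert.mp h₃X'' with rfl | h
              · exact absurd ha₁X h₃X
              · exact mem_of_mem_erase h
            · exact hvf
        · simp only [InBar] at hv₁
          simp only [Exchangeable] at hex
          rcases hex with ⟨h', -⟩ | ⟨-, hb₂Y', hr''⟩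
          · exact absurd h' ha₁X'
          · -- X'' = insert a₁ X', Y'' = insert b₂ Y'
            have hmeas : X \ insert a₁ X' = (X \ X').erase a₁ := by
              ext x
              simp only [mem_sdiff, mem_insert, mem_erase, not_or]
              tauto
            have hmeas2 : insert b₂ Y' \ Y = Y' \ Y := by
              ext x
              rcases eq_or_ne x b₂ with rfl | hxb₂
              · simp [hv₁]
              · simp only [mem_sdiff, mem_insert, hxb₂, false_or]
            obtain ⟨v, hvf, hvex⟩ := ih X (insert a₁ X') Y (insert b₂ Y')
              (by
                rw [hmeas, hmeas2, card_erase_of_mem (mem_sdiff.mpr ⟨ha₁X, ha₁X'⟩)]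
                have : 1 ≤ (X \ X').card := card_pos.mpr ⟨a₁, mem_sdiff.mpr ⟨ha₁X, ha₁X'⟩⟩
                omega)
              h1 hr'' (Sum.inl a)
              ⟨by
                simp only [mem_insert, not_or]
                exact ⟨fun h => hne h.symm, haX'⟩, haX⟩
            refine ⟨v, ?_, hvex⟩
            rcases v with a₃ | b₃
            · obtain ⟨h₃X, h₃X''⟩ := hvf
              refine ⟨h₃X, ?_⟩
              rcases mem_insert.mp h₃X'' with rfl | h
              · exact absurd ha₁X h₃X
              · exact h
            · obtain ⟨h₃Y, h₃Y''⟩ := hvf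
              exact ⟨h₃Y, fun h => h₃Y'' (mem_insert_of_mem h)⟩
      · by_cases hw2 : (Y' \ Y).Nonempty
        · obtain ⟨b₁, hb₁⟩ := hw2
          obtain ⟨hb₁Y', hb₁Y⟩ := mem_sdiff.mp hb₁
          obtain ⟨v₁, hv₁, hex⟩ :=
            hr X' Y' X Y h2 h1 (Sum.inr b₁) (by simpa [InBar] using hb₁Y')
          rcases v₁ with a₂ | b₂
          · simp only [InBar] at hv₁
            simp only [Exchangeable] at hex
            rcases hex with ⟨-, ha₂X', hr''⟩ | ⟨h', -⟩
            · -- X'' = X'.erase a₂, Y'' = Y'.erase b₁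
              have hmeas : X \ X'.erase a₂ = X \ X' := by
                ext x
                rcases eq_or_ne x a₂ with rfl | hxa₂
                · simp [hv₁]
                · simp only [mem_sdiff, mem_erase, hxa₂]
                  tauto
              have hmeas2 : Y'.erase b₁ \ Y = (Y' \ Y).erase b₁ := by
                ext x; simp only [mem_sdiff, mem_erase]; tauto
              obtain ⟨v, hvf, hvex⟩ := ih X (X'.erase a₂) Y (Y'.erase b₁)
                (by
                  rw [hmeas, hmeas2, card_erase_of_mem hb₁]
                  have : 1 ≤ (Y' \ Y).card := card_pos.mpr ⟨b₁, hb₁⟩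
                  omega)
                h1 hr'' (Sum.inl a)
                ⟨fun h => haX' (mem_of_mem_erase h), haX⟩
              refine ⟨v, ?_, hvex⟩
              rcases v with a₃ | b₃
              · obtain ⟨h₃X, h₃X''⟩ := hvf
                exact ⟨h₃X, mem_of_mem_erase h₃X''⟩
              · obtain ⟨h₃Y, h₃Y''⟩ := hvf
                refine ⟨h₃Y, fun h => h₃Y'' (mem_erase.mpr ⟨?_, h⟩)⟩
                rintro rfl; exact hb₁Y h₃Y
            · exact absurd hb₁Y' h'
          · simp only [InBar] at hv₁
            simp only [Exchangeable] at hex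
            rcases hex with rfl | ⟨-, hb₂Y', hr''⟩ | ⟨h', -⟩
            · exact absurd hv₁ hb₁Y
            · -- Y'' = insert b₂ (Y'.erase b₁)
              have hmeas2 : insert b₂ (Y'.erase b₁) \ Y = (Y' \ Y).erase b₁ := by
                ext x
                rcases eq_or_ne x b₂ with rfl | hxb₂
                · simp [hv₁]
                · simp only [mem_sdiff, mem_insert, mem_erase, hxb₂, false_or]
                  tauto
              obtain ⟨v, hvf, hvex⟩ := ih X X' Y (insert b₂ (Y'.erase b₁))
                (by
                  rw [hmeas2, card_erase_of_mem hb₁]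
                  have : 1 ≤ (Y' \ Y).card := card_pos.mpr ⟨b₁, hb₁⟩
                  omega)
                h1 hr'' (Sum.inl a) ⟨haX', haX⟩
              refine ⟨v, ?_, hvex⟩
              rcases v with a₃ | b₃
              · exact hvf
              · obtain ⟨h₃Y, h₃Y''⟩ := hvf
                refine ⟨h₃Y, fun h => h₃Y'' ?_⟩
                refine mem_insert_of_mem (mem_erase.mpr ⟨?_, h⟩)
                rintro rfl; exact hb₁Y h₃Y
            · exact absurd hb₁Y' h'
        · -- base case : X \ X' = {a} and Y' ⊆ Y
          push_neg at hw1
          rw [not_nonempty_iff_eq_empty] at hw2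
          have hXX' : X \ X' = {a} := by
            apply subset_antisymm
            · intro x hx
              rw [mem_singleton]
              by_contra hne
              exact hne (hw1 x hx)
            · intro x hx
              rw [mem_singleton] at hx; subst hx
              exact mem_sdiff.mpr ⟨haX, haX'⟩
          have c1 := card_sdiff_add_card_inter X X'
          have c2 := card_sdiff_add_card_inter X' X
          have c3 := card_sdiff_add_card_inter Y Y'
          have c4 := card_sdiff_add_card_inter Y' Y
          have hI : (X ∩ X').card = (X' ∩ X).card := by rw [inter_comm]
          have hJ : (Y ∩ Y').card = (Y' ∩ Y).card := by rw [inter_comm]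
          have hd := defect_eq hr h1 h2
          have hc1 : (X \ X').card = 1 := by rw [hXX', card_singleton]
          have hc0 : (Y' \ Y).card = 0 := by rw [hw2, card_empty]
          have key : (X' \ X).card + (Y \ Y').card = 1 := by omega
          have hYY : Y' ⊆ Y := sdiff_eq_empty_iff_subset.mp hw2
          rcases Nat.eq_zero_or_pos (X' \ X).card with hz | hp
          · -- X' ⊆ X, so Y \ Y' = {b₀}
            have hX'X : X' ⊆ X := sdiff_eq_empty_iff_subset.mp (card_eq_zero.mp hz)
            obtain ⟨b₀, hb₀⟩ := card_eq_one.mp (by omega : (Y \ Y').card = 1)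
            have hb₀Y : b₀ ∈ Y := (mem_sdiff.mp (hb₀ ▸ mem_singleton_self b₀)).1
            have hb₀Y' : b₀ ∉ Y' := (mem_sdiff.mp (hb₀ ▸ mem_singleton_self b₀)).2
            have eX : X' = X.erase a := by
              ext x
              simp only [mem_erase]
              constructor
              · intro hx
                refine ⟨fun h => haX' (h ▸ hx), hX'X hx⟩
              · rintro ⟨hxa, hxX⟩
                by_contra hxX'
                have : x ∈ X \ X' := mem_sdiff.mpr ⟨hxX, hxX'⟩
                rw [hXX', mem_singleton] at this
                exact hxa this
            have eY : Y' = Y.erase b₀ := by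
              ext x
              simp only [mem_erase]
              constructor
              · intro hx
                refine ⟨fun h => hb₀Y' (h ▸ hx), hYY hx⟩
              · rintro ⟨hxb, hxY⟩
                by_contra hxY'
                have : x ∈ Y \ Y' := mem_sdiff.mpr ⟨hxY, hxY'⟩
                rw [hb₀, mem_singleton] at this
                exact hxb this
            refine ⟨Sum.inr b₀, ⟨hb₀Y, hb₀Y'⟩, ?_⟩
            simp only [Exchangeable]
            exact Or.inl ⟨haX, hb₀Y, by rw [← eX, ← eY]; exact h2⟩
          · -- X' \ X = {a₀}, Y = Y'
            obtain ⟨a₀, ha₀⟩ := card_eq_one.mp (by omega : (X' \ X).card = 1)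
            have ha₀X' : a₀ ∈ X' := (mem_sdiff.mp (ha₀ ▸ mem_singleton_self a₀)).1
            have ha₀X : a₀ ∉ X := (mem_sdiff.mp (ha₀ ▸ mem_singleton_self a₀)).2
            have eY : Y' = Y := by
              apply subset_antisymm hYY
              rw [← sdiff_eq_empty_iff_subset, ← card_eq_zero]
              omega
            have eX : X' = insert a₀ (X.erase a) := by
              ext x
              simp only [mem_insert, mem_erase]
              constructor
              · intro hx
                rcases eq_or_ne x a₀ with rfl | hxa₀
                · exact Or.inl rfl
                · refine Or.inr ⟨fun h => haX' (h ▸ hx), ?_⟩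
                  by_contra hxX
                  have : x ∈ X' \ X := mem_sdiff.mpr ⟨hx, hxX⟩
                  rw [ha₀, mem_singleton] at this
                  exact hxa₀ this
              · rintro (rfl | ⟨hxa, hxX⟩)
                · exact ha₀X'
                · by_contra hxX'
                  have : x ∈ X \ X' := mem_sdiff.mpr ⟨hxX, hxX'⟩
                  rw [hXX', mem_singleton] at this
                  exact hxa this
            refine ⟨Sum.inl a₀, ⟨ha₀X, ha₀X'⟩, ?_⟩
            simp only [Exchangeable]
            exact Or.inr (Or.inl ⟨haX, ha₀X, by rw [← eX, ← eY]; exact h2⟩)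
    · obtain ⟨hbY', hbY⟩ := hu
      by_cases hw1 : (X \ X').Nonempty
      · obtain ⟨a₁, ha₁⟩ := hw1
        obtain ⟨ha₁X, ha₁X'⟩ := mem_sdiff.mp ha₁
        obtain ⟨v₁, hv₁, hex⟩ :=
          hr X' Y' X Y h2 h1 (Sum.inl a₁) (by simpa [InBar] using ha₁X')
        rcases v₁ with a₂ | b₂
        · simp only [InBar] at hv₁
          simp only [Exchangeable] at hex
          rcases hex with rfl | ⟨h', -⟩ | ⟨-, ha₂X', hr''⟩
          · exact absurd ha₁X hv₁
          · exact absurd h' ha₁X'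
          · have hmeas : X \ insert a₁ (X'.erase a₂) = (X \ X').erase a₁ := by
              ext x
              rcases eq_or_ne x a₂ with rfl | hxa₂
              · simp [hv₁]
              · simp only [mem_sdiff, mem_insert, mem_erase, hxa₂, not_or]
                tauto
            obtain ⟨v, hvf, hvex⟩ := ih X (insert a₁ (X'.erase a₂)) Y Y'
              (by
                rw [hmeas, card_erase_of_mem (mem_sdiff.mpr ⟨ha₁X, ha₁X'⟩)]
                have : 1 ≤ (X \ X').card := card_pos.mpr ⟨a₁, mem_sdiff.mpr ⟨ha₁X, ha₁X'⟩⟩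
                omega)
              h1 hr'' (Sum.inr b) ⟨hbY', hbY⟩
            refine ⟨v, ?_, hvex⟩
            rcases v with a₃ | b₃
            · obtain ⟨h₃X, h₃X''⟩ := hvf
              refine ⟨h₃X, ?_⟩
              rcases mem_insert.mp h₃X'' with rfl | h
              · exact absurd ha₁X h₃X
              · exact mem_of_mem_erase h
            · exact hvf
        · simp only [InBar] at hv₁
          simp only [Exchangeable] at hex
          rcases hex with ⟨h', -⟩ | ⟨-, hb₂Y', hr''⟩
          · exact absurd h' ha₁X'
          · have hmeas : X \ insert a₁ X' = (X \ X').erase a₁ := by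
              ext x
              simp only [mem_sdiff, mem_insert, mem_erase, not_or]
              tauto
            have hmeas2 : insert b₂ Y' \ Y = Y' \ Y := by
              ext x
              rcases eq_or_ne x b₂ with rfl | hxb₂
              · simp [hv₁]
              · simp only [mem_sdiff, mem_insert, hxb₂, false_or]
            obtain ⟨v, hvf, hvex⟩ := ih X (insert a₁ X') Y (insert b₂ Y')
              (by
                rw [hmeas, hmeas2, card_erase_of_mem (mem_sdiff.mpr ⟨ha₁X, ha₁X'⟩)]
                have : 1 ≤ (X \ X').card := card_pos.mpr ⟨a₁, mem_sdiff.mpr ⟨ha₁X, ha₁X'⟩⟩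
                omega)
              h1 hr'' (Sum.inr b) ⟨mem_insert_of_mem hbY', hbY⟩
            refine ⟨v, ?_, hvex⟩
            rcases v with a₃ | b₃
            · obtain ⟨h₃X, h₃X''⟩ := hvf
              refine ⟨h₃X, ?_⟩
              rcases mem_insert.mp h₃X'' with rfl | h
              · exact absurd ha₁X h₃X
              · exact h
            · obtain ⟨h₃Y, h₃Y''⟩ := hvf
              exact ⟨h₃Y, fun h => h₃Y'' (mem_insert_of_mem h)⟩
      · by_cases hw2 : ∃ b₁ ∈ Y' \ Y, b₁ ≠ b
        · obtain ⟨b₁, hb₁, hne⟩ := hw2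
          obtain ⟨hb₁Y', hb₁Y⟩ := mem_sdiff.mp hb₁
          obtain ⟨v₁, hv₁, hex⟩ :=
            hr X' Y' X Y h2 h1 (Sum.inr b₁) (by simpa [InBar] using hb₁Y')
          rcases v₁ with a₂ | b₂
          · simp only [InBar] at hv₁
            simp only [Exchangeable] at hex
            rcases hex with ⟨-, ha₂X', hr''⟩ | ⟨h', -⟩
            · have hmeas : X \ X'.erase a₂ = X \ X' := by
                ext x
                rcases eq_or_ne x a₂ with rfl | hxa₂
                · simp [hv₁]
                · simp only [mem_sdiff, mem_erase, hxa₂]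
                  tauto
              have hmeas2 : Y'.erase b₁ \ Y = (Y' \ Y).erase b₁ := by
                ext x; simp only [mem_sdiff, mem_erase]; tauto
              obtain ⟨v, hvf, hvex⟩ := ih X (X'.erase a₂) Y (Y'.erase b₁)
                (by
                  rw [hmeas, hmeas2, card_erase_of_mem hb₁]
                  have : 1 ≤ (Y' \ Y).card := card_pos.mpr ⟨b₁, hb₁⟩
                  omega)
                h1 hr'' (Sum.inr b) ⟨mem_erase.mpr ⟨hne.symm, hbY'⟩, hbY⟩
              refine ⟨v, ?_, hvex⟩
              rcases v with a₃ | b₃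
              · obtain ⟨h₃X, h₃X''⟩ := hvf
                exact ⟨h₃X, mem_of_mem_erase h₃X''⟩
              · obtain ⟨h₃Y, h₃Y''⟩ := hvf
                refine ⟨h₃Y, fun h => h₃Y'' (mem_erase.mpr ⟨?_, h⟩)⟩
                rintro rfl; exact hb₁Y h₃Y
            · exact absurd hb₁Y' h'
          · simp only [InBar] at hv₁
            simp only [Exchangeable] at hex
            rcases hex with rfl | ⟨-, hb₂Y', hr''⟩ | ⟨h', -⟩
            · exact absurd hv₁ hb₁Y
            · have hmeas2 : insert b₂ (Y'.erase b₁) \ Y = (Y' \ Y).erase b₁ := by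
                ext x
                rcases eq_or_ne x b₂ with rfl | hxb₂
                · simp [hv₁]
                · simp only [mem_sdiff, mem_insert, mem_erase, hxb₂, false_or]
                  tauto
              obtain ⟨v, hvf, hvex⟩ := ih X X' Y (insert b₂ (Y'.erase b₁))
                (by
                  rw [hmeas2, card_erase_of_mem hb₁]
                  have : 1 ≤ (Y' \ Y).card := card_pos.mpr ⟨b₁, hb₁⟩
                  omega)
                h1 hr'' (Sum.inr b)
                ⟨mem_insert_of_mem (mem_erase.mpr ⟨hne.symm, hbY'⟩), hbY⟩
              refine ⟨v, ?_, hvex⟩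
              rcases v with a₃ | b₃
              · exact hvf
              · obtain ⟨h₃Y, h₃Y''⟩ := hvf
                refine ⟨h₃Y, fun h => h₃Y'' ?_⟩
                refine mem_insert_of_mem (mem_erase.mpr ⟨?_, h⟩)
                rintro rfl; exact hb₁Y h₃Y
            · exact absurd hb₁Y' h'
        · -- base case : X ⊆ X' with X \ X' = ∅, Y' \ Y = {b}
          rw [not_nonempty_iff_eq_empty] at hw1
          push_neg at hw2
          have hYY' : Y' \ Y = {b} := by
            apply subset_antisymm
            · intro x hx
              rw [mem_singleton]
              by_contra hxx
              exact hxx (hw2 x hx)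
            · intro x hx
              rw [mem_singleton] at hx; subst hx
              exact mem_sdiff.mpr ⟨hbY', hbY⟩
          have c1 := card_sdiff_add_card_inter X X'
          have c2 := card_sdiff_add_card_inter X' X
          have c3 := card_sdiff_add_card_inter Y Y'
          have c4 := card_sdiff_add_card_inter Y' Y
          have hI : (X ∩ X').card = (X' ∩ X).card := by rw [inter_comm]
          have hJ : (Y ∩ Y').card = (Y' ∩ Y).card := by rw [inter_comm]
          have hd := defect_eq hr h1 h2
          have hc1 : (X \ X').card = 0 := by rw [hw1, card_empty]
          have hc0 : (Y' \ Y).card = 1 := by rw [hYY', card_singleton]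
          have key : (X' \ X).card + (Y \ Y').card = 1 := by omega
          have hXsub : X ⊆ X' := sdiff_eq_empty_iff_subset.mp hw1
          rcases Nat.eq_zero_or_pos (X' \ X).card with hz | hp
          · -- X' = X, Y \ Y' = {b₀}
            have eX : X' = X :=
              subset_antisymm (sdiff_eq_empty_iff_subset.mp (card_eq_zero.mp hz)) hXsub
            obtain ⟨b₀, hb₀⟩ := card_eq_one.mp (by omega : (Y \ Y').card = 1)
            have hb₀Y : b₀ ∈ Y := (mem_sdiff.mp (hb₀ ▸ mem_singleton_self b₀)).1
            have hb₀Y' : b₀ ∉ Y' := (mem_sdiff.mp (hb₀ ▸ mem_singleton_self b₀)).2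
            have eY : Y' = insert b (Y.erase b₀) := by
              ext x
              simp only [mem_insert, mem_erase]
              constructor
              · intro hx
                rcases eq_or_ne x b with rfl | hxb
                · exact Or.inl rfl
                · refine Or.inr ⟨fun h => hb₀Y' (h ▸ hx), ?_⟩
                  by_contra hxY
                  have : x ∈ Y' \ Y := mem_sdiff.mpr ⟨hx, hxY⟩
                  rw [hYY', mem_singleton] at this
                  exact hxb this
              · rintro (rfl | ⟨hxb₀, hxY⟩)
                · exact hbY'
                · by_contra hxY'
                  have : x ∈ Y \ Y' := mem_sdiff.mpr ⟨hxY, hxY'⟩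
                  rw [hb₀, mem_singleton] at this
                  exact hxb₀ this
            refine ⟨Sum.inr b₀, ⟨hb₀Y, hb₀Y'⟩, ?_⟩
            simp only [Exchangeable]
            refine Or.inr (Or.inr ⟨hbY, hb₀Y, ?_⟩)
            rw [← eY]
            exact eX ▸ h2
          · -- X' = insert a₀ X, Y' = insert b Y
            obtain ⟨a₀, ha₀⟩ := card_eq_one.mp (by omega : (X' \ X).card = 1)
            have ha₀X' : a₀ ∈ X' := (mem_sdiff.mp (ha₀ ▸ mem_singleton_self a₀)).1
            have ha₀X : a₀ ∉ X := (mem_sdiff.mp (ha₀ ▸ mem_singleton_self a₀)).2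
            have hYsub : Y ⊆ Y' := by
              rw [← sdiff_eq_empty_iff_subset, ← card_eq_zero]; omega
            have eX : X' = insert a₀ X := by
              ext x
              simp only [mem_insert]
              constructor
              · intro hx
                rcases eq_or_ne x a₀ with rfl | hxa₀
                · exact Or.inl rfl
                · right
                  by_contra hxX
                  have : x ∈ X' \ X := mem_sdiff.mpr ⟨hx, hxX⟩
                  rw [ha₀, mem_singleton] at this
                  exact hxa₀ this
              · rintro (rfl | hx)
                · exact ha₀X'
                · exact hXsub hx
            have eY : Y' = insert b Y := by
              ext x
              simp only [mem_insert]
              constructor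
              · intro hx
                rcases eq_or_ne x b with rfl | hxb
                · exact Or.inl rfl
                · right
                  by_contra hxY
                  have : x ∈ Y' \ Y := mem_sdiff.mpr ⟨hx, hxY⟩
                  rw [hYY', mem_singleton] at this
                  exact hxb this
              · rintro (rfl | hx)
                · exact hbY'
                · exact hYsub hx
            refine ⟨Sum.inl a₀, ⟨ha₀X, ha₀X'⟩, ?_⟩
            simp only [Exchangeable]
            refine Or.inr ⟨hbY, ha₀X, ?_⟩
            rw [← eX, ← eY]
            exact h2

lemma coExch (hr : ExchAxiom r) {X X' : Finset A} {Y Y' : Finset B}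
    (h1 : r X Y) (h2 : r X' Y') :
    ∀ u, CoBar X Y u → ∃ v, CoBar X' Y' v ∧ Exchangeable r X Y u v := by
  intro u hu
  rcases u with a | b
  · simp only [CoBar] at hu
    by_cases hx : a ∈ X'
    · exact ⟨Sum.inl a, by simpa [CoBar] using hx, by simp only [Exchangeable]; exact Or.inl trivial⟩
    · obtain ⟨v, hf, he⟩ := coExchS hr _ X X' Y Y' le_rfl h1 h2 (Sum.inl a) ⟨hx, hu⟩
      refine ⟨v, ?_, he⟩
      rcases v with a' | b'
      · simpa [CoBar] using hf.2
      · simpa [CoBar] using hf.2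
  · simp only [CoBar] at hu
    by_cases hb : b ∈ Y'
    · obtain ⟨v, hf, he⟩ := coExchS hr _ X X' Y Y' le_rfl h1 h2 (Sum.inr b) ⟨hb, hu⟩
      refine ⟨v, ?_, he⟩
      rcases v with a' | b'
      · simpa [CoBar] using hf.2
      · simpa [CoBar] using hf.2
    · exact ⟨Sum.inr b, by simpa [CoBar] using hb,
        by simp only [Exchangeable]; exact Or.inl trivial⟩

section Engines

variable {B C D : Type*} [DecidableEq B] [DecidableEq C] [DecidableEq D]
  {mu : Finset B → Finset C → Prop} {nu : Finset C → Finset D → Prop}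

/-- T3' engine, step 1 : move the extra element of the μ-side into `Y0`. -/
lemma engine_step1 (hmu : ExchAxiom mu) {B0 : Finset B} {Y0 : Finset C}
    (hB0 : mu B0 Y0) {Bb : Finset B} {K : Finset C} {x : C}
    (hxK : x ∉ K) (hxY0 : x ∉ Y0) (hmuB : mu Bb (insert x K)) :
    (∃ b ∈ Bb, mu (Bb.erase b) K) ∨ (∃ y ∈ Y0, y ∉ K ∧ mu Bb (insert y K)) := by
  obtain ⟨v, hv, hex⟩ := hmu Bb (insert x K) B0 Y0 hmuB hB0 (Sum.inr x)
    (by simpa [InBar] using mem_insert_self x K)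
  rcases v with b' | y'
  · simp only [InBar] at hv
    simp only [Exchangeable] at hex
    rcases hex with ⟨-, hbB, hr'⟩ | ⟨hn, -⟩
    · rw [erase_insert hxK] at hr'
      exact Or.inl ⟨b', hbB, hr'⟩
    · exact absurd (mem_insert_self x K) hn
  · simp only [InBar] at hv
    simp only [Exchangeable] at hex
    rcases hex with rfl | ⟨-, hyK, hr'⟩ | ⟨hn, -⟩
    · exact absurd hv hxY0
    · rw [erase_insert hxK] at hr'
      exact Or.inr ⟨y', hv, fun h => hyK (mem_insert_of_mem h), hr'⟩
    · exact absurd (mem_insert_self x K) hn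

/-- T3' engine : overlap configuration. -/
lemma engineA (hmu : ExchAxiom mu) (hnu : ExchAxiom nu)
    {B0 : Finset B} {Y0 : Finset C} {W0 : Finset D}
    (hB0 : mu B0 Y0) (hW0 : nu Y0 W0) :
    ∀ n (K : Finset C) (x : C) (Bb : Finset B) (W : Finset D),
      (K \ Y0).card ≤ n → x ∉ K → mu Bb (insert x K) → nu K W →
      (∃ Yh Wh, mu Bb Yh ∧ nu Yh Wh) ∨
      (∃ b ∈ Bb, ∃ Yh, mu (Bb.erase b) Yh ∧ nu Yh W) := by
  intro n
  induction n with
  | zero =>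
    intro K x Bb W hn hxK hmuB hnuK
    have key : ∀ x', x' ∈ Y0 → x' ∉ K → mu Bb (insert x' K) →
        (∃ Yh Wh, mu Bb Yh ∧ nu Yh Wh) ∨
        (∃ b ∈ Bb, ∃ Yh, mu (Bb.erase b) Yh ∧ nu Yh W) := by
      intro x' hx'Y0 hx'K hmuB'
      obtain ⟨v, hv, hex⟩ := hnu K W Y0 W0 hnuK hW0 (Sum.inl x')
        (by simpa [InBar] using hx'K)
      rcases v with c' | w'
      · simp only [InBar] at hv
        simp only [Exchangeable] at hex
        rcases hex with rfl | ⟨h', -⟩ | ⟨-, hcK, -⟩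
        · exact absurd hx'Y0 hv
        · exact absurd h' hx'K
        · exfalso
          have : 1 ≤ (K \ Y0).card := card_pos.mpr ⟨c', mem_sdiff.mpr ⟨hcK, hv⟩⟩
          omega
      · simp only [InBar] at hv
        simp only [Exchangeable] at hex
        rcases hex with ⟨h', -⟩ | ⟨-, -, hr'⟩
        · exact absurd h' hx'K
        · exact Or.inl ⟨insert x' K, insert w' W, hmuB', hr'⟩
    by_cases hxY0 : x ∈ Y0
    · exact key x hxY0 hxK hmuB
    · rcases engine_step1 hmu hB0 hxK hxY0 hmuB with ⟨b, hb, hK⟩ | ⟨y, hy1, hy2, hy3⟩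
      · exact Or.inr ⟨b, hb, K, hK, hnuK⟩
      · exact key y hy1 hy2 hy3
  | succ n ih =>
    intro K x Bb W hn hxK hmuB hnuK
    have key : ∀ x', x' ∈ Y0 → x' ∉ K → mu Bb (insert x' K) →
        (∃ Yh Wh, mu Bb Yh ∧ nu Yh Wh) ∨
        (∃ b ∈ Bb, ∃ Yh, mu (Bb.erase b) Yh ∧ nu Yh W) := by
      intro x' hx'Y0 hx'K hmuB'
      obtain ⟨v, hv, hex⟩ := hnu K W Y0 W0 hnuK hW0 (Sum.inl x')
        (by simpa [InBar] using hx'K)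
      rcases v with c' | w'
      · simp only [InBar] at hv
        simp only [Exchangeable] at hex
        rcases hex with rfl | ⟨h', -⟩ | ⟨-, hcK, hr'⟩
        · exact absurd hx'Y0 hv
        · exact absurd h' hx'K
        · -- recurse with K' = insert x' (K.erase c'), position c'
          have hcx : c' ≠ x' := fun h => hv (h ▸ hx'Y0)
          have hc'K' : c' ∉ insert x' (K.erase c') := by
            simp [hcx, notMem_erase]
          have hins : insert c' (insert x' (K.erase c')) = insert x' K := by
            rw [Finset.insert_comm, insert_erase hcK]
          have hmeas : insert x' (K.erase c') \ Y0 = (K \ Y0).erase c' := by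
            ext z
            rcases eq_or_ne z x' with rfl | hzx
            · simp [hx'Y0]
            · simp only [mem_sdiff, mem_insert, mem_erase, hzx, false_or]
              tauto
          have hlt : (insert x' (K.erase c') \ Y0).card ≤ n := by
            rw [hmeas, card_erase_of_mem (mem_sdiff.mpr ⟨hcK, hv⟩)]
            have : 1 ≤ (K \ Y0).card := card_pos.mpr ⟨c', mem_sdiff.mpr ⟨hcK, hv⟩⟩
            omega
          exact ih (insert x' (K.erase c')) c' Bb W hlt hc'K'
            (by rwa [hins]) hr'
      · simp only [InBar] at hv
        simp only [Exchangeable] at hex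
        rcases hex with ⟨h', -⟩ | ⟨-, -, hr'⟩
        · exact absurd h' hx'K
        · exact Or.inl ⟨insert x' K, insert w' W, hmuB', hr'⟩
    by_cases hxY0 : x ∈ Y0
    · exact key x hxY0 hxK hmuB
    · rcases engine_step1 hmu hB0 hxK hxY0 hmuB with ⟨b, hb, hK⟩ | ⟨y, hy1, hy2, hy3⟩
      · exact Or.inr ⟨b, hb, K, hK, hnuK⟩
      · exact key y hy1 hy2 hy3

/-- T2' engine, step 1. -/
lemma co_step1 (hmu : ExchAxiom mu) {B0 : Finset B} {Y0 : Finset C}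
    (hB0 : mu B0 Y0) {Bb : Finset B} {S : Finset C} {x : C}
    (hxS : x ∈ S) (hxY0 : x ∈ Y0) (hmuB : mu Bb (S.erase x)) :
    (∃ b ∉ Bb, mu (insert b Bb) S) ∨ (∃ y ∈ S, y ∉ Y0 ∧ mu Bb (S.erase y)) := by
  obtain ⟨v, hv, hex⟩ := coExch hmu hmuB hB0 (Sum.inr x)
    (by simpa [CoBar] using notMem_erase x S)
  rcases v with b' | y'
  · simp only [Exchangeable] at hex
    rcases hex with ⟨h', -⟩ | ⟨-, hbB, hr'⟩
    · exact absurd h' (notMem_erase x S)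
    · rw [insert_erase hxS] at hr'
      exact Or.inl ⟨b', hbB, hr'⟩
  · simp only [CoBar] at hv
    simp only [Exchangeable] at hex
    rcases hex with rfl | ⟨h', -⟩ | ⟨-, hyS, hr'⟩
    · exact absurd hxY0 hv
    · exact absurd h' (notMem_erase x S)
    · have hyx : y' ≠ x := (mem_erase.mp hyS).1
      have hyS' : y' ∈ S := mem_of_mem_erase hyS
      have : insert x ((S.erase x).erase y') = S.erase y' := by
        ext z
        rcases eq_or_ne z x with rfl | hzx
        · simp [hxS, Ne.symm hyx]
        · simp only [mem_insert, mem_erase, hzx, false_or]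
          tauto
      rw [this] at hr'
      exact Or.inr ⟨y', hyS', hv, hr'⟩

/-- T2' engine : gap configuration. -/
lemma engineB (hmu : ExchAxiom mu) (hnu : ExchAxiom nu)
    {B0 : Finset B} {Y0 : Finset C} {W0 : Finset D}
    (hB0 : mu B0 Y0) (hW0 : nu Y0 W0) :
    ∀ n (S : Finset C) (x : C) (Bb : Finset B) (W : Finset D),
      (S \ Y0).card ≤ n → x ∈ S → mu Bb (S.erase x) → nu S W →
      (∃ Yh Wh, mu Bb Yh ∧ nu Yh Wh) ∨
      (∃ b ∉ Bb, ∃ Yh, mu (insert b Bb) Yh ∧ nu Yh W) := by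
  intro n
  induction n with
  | zero =>
    intro S x Bb W hn hxS hmuB hnuS
    have key : ∀ x', x' ∈ S → x' ∉ Y0 → mu Bb (S.erase x') →
        (∃ Yh Wh, mu Bb Yh ∧ nu Yh Wh) ∨
        (∃ b ∉ Bb, ∃ Yh, mu (insert b Bb) Yh ∧ nu Yh W) := by
      intro x' hx'S hx'Y0 hmuB'
      exfalso
      have : 1 ≤ (S \ Y0).card := card_pos.mpr ⟨x', mem_sdiff.mpr ⟨hx'S, hx'Y0⟩⟩
      omega
    by_cases hxY0 : x ∈ Y0
    · rcases co_step1 hmu hB0 hxS hxY0 hmuB with ⟨b, hb, hS⟩ | ⟨y, hy1, hy2, hy3⟩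
      · exact Or.inr ⟨b, hb, S, hS, hnuS⟩
      · exact key y hy1 hy2 hy3
    · exact key x hxS hxY0 hmuB
  | succ n ih =>
    intro S x Bb W hn hxS hmuB hnuS
    have key : ∀ x', x' ∈ S → x' ∉ Y0 → mu Bb (S.erase x') →
        (∃ Yh Wh, mu Bb Yh ∧ nu Yh Wh) ∨
        (∃ b ∉ Bb, ∃ Yh, mu (insert b Bb) Yh ∧ nu Yh W) := by
      intro x' hx'S hx'Y0 hmuB'
      obtain ⟨v, hv, hex⟩ := coExch hnu hnuS hW0 (Sum.inl x')
        (by simpa [CoBar] using hx'S)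
      rcases v with c' | w'
      · simp only [CoBar] at hv
        simp only [Exchangeable] at hex
        rcases hex with rfl | ⟨-, hcS, hr'⟩ | ⟨h', -⟩
        · exact absurd hv hx'Y0
        · -- recurse with S' = insert c' (S.erase x'), position c'
          have hc'S' : c' ∈ insert c' (S.erase x') := mem_insert_self _ _
          have herase : (insert c' (S.erase x')).erase c' = S.erase x' := by
            apply erase_insert
            simp only [mem_erase, not_and]
            intro _; exact hcS
          have hmeas : insert c' (S.erase x') \ Y0 = (S \ Y0).erase x' := by
            ext z
            rcases eq_or_ne z c' with rfl | hzc
            · simp [hv]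
            · simp only [mem_sdiff, mem_insert, mem_erase, hzc, false_or]
              tauto
          have hlt : (insert c' (S.erase x') \ Y0).card ≤ n := by
            rw [hmeas, card_erase_of_mem (mem_sdiff.mpr ⟨hx'S, hx'Y0⟩)]
            have : 1 ≤ (S \ Y0).card := card_pos.mpr ⟨x', mem_sdiff.mpr ⟨hx'S, hx'Y0⟩⟩
            omega
          exact ih (insert c' (S.erase x')) c' Bb W hlt hc'S'
            (by rwa [herase]) hr'
        · exact absurd hx'S h'
      · simp only [CoBar] at hv
        simp only [Exchangeable] at hex
        rcases hex with ⟨-, -, hr'⟩ | ⟨h', -⟩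
        · exact Or.inl ⟨S.erase x', W.erase w', hmuB', hr'⟩
        · exact absurd hx'S h'
    by_cases hxY0 : x ∈ Y0
    · rcases co_step1 hmu hB0 hxS hxY0 hmuB with ⟨b, hb, hS⟩ | ⟨y, hy1, hy2, hy3⟩
      · exact Or.inr ⟨b, hb, S, hS, hnuS⟩
      · exact key y hy1 hy2 hy3
    · exact key x hxS hxY0 hmuB

end Engines

lemma exchangeable_swap {X : Finset A} {Y : Finset B} {u v : A ⊕ B}
    (h : Exchangeable r X Y u v) :
    Exchangeable (fun (Y : Finset B) (X : Finset A) => r X Y) Y X u.swap v.swap := by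
  rcases u with a | b <;> rcases v with a' | b' <;>
    simpa [Exchangeable, Sum.swap] using h

lemma flip_exchAxiom (hr : ExchAxiom r) :
    ExchAxiom (fun (Y : Finset B) (X : Finset A) => r X Y) := by
  intro P Q P' Q' h1 h2 u hu
  have hu' : CoBar Q P u.swap := by
    rcases u with b | a
    · simpa [CoBar, Sum.swap, InBar] using hu
    · simpa [CoBar, Sum.swap, InBar] using hu
  obtain ⟨v₀, hv₀, hex⟩ := coExch hr h1 h2 u.swap hu'
  refine ⟨v₀.swap, ?_, ?_⟩
  · rcases v₀ with a | b
    · simpa [CoBar, Sum.swap, InBar] using hv₀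
    · simpa [CoBar, Sum.swap, InBar] using hv₀
  · have := exchangeable_swap (r := r) hex
    rwa [Sum.swap_swap] at this

lemma sdiff_card_decode {α : Type*} [DecidableEq α] {Y Y' : Finset α}
    (h1 : (Y \ Y').card = 1) (h0 : (Y' \ Y).card = 0) :
    ∃ c ∉ Y', Y = insert c Y' := by
  obtain ⟨c, hc⟩ := card_eq_one.mp h1
  have hsub : Y' ⊆ Y := sdiff_eq_empty_iff_subset.mp (card_eq_zero.mp h0)
  have hcY : c ∈ Y ∧ c ∉ Y' := mem_sdiff.mp (hc ▸ mem_singleton_self c)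
  refine ⟨c, hcY.2, ?_⟩
  ext z
  simp only [mem_insert]
  constructor
  · intro hz
    by_cases h : z ∈ Y'
    · exact Or.inr h
    · left
      have : z ∈ Y \ Y' := mem_sdiff.mpr ⟨hz, h⟩
      rw [hc, mem_singleton] at this
      exact this
  · rintro (rfl | hz)
    · exact hcY.1
    · exact hsub hz

lemma insert_sdiff_cards {α : Type*} [DecidableEq α] {Y' : Finset α} {c : α}
    (hc : c ∉ Y') :
    ((insert c Y') \ Y').card = 1 ∧ (Y' \ insert c Y').card = 0 := by
  constructor
  · have : insert c Y' \ Y' = {c} := by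
      ext z
      simp only [mem_sdiff, mem_insert, mem_singleton]
      constructor
      · rintro ⟨rfl | hz, hz'⟩
        · rfl
        · exact absurd hz hz'
      · rintro rfl
        exact ⟨Or.inl rfl, hc⟩
    rw [this, card_singleton]
  · rw [card_eq_zero, sdiff_eq_empty_iff_subset]
    exact subset_insert _ _

lemma erase_sdiff_cards {α : Type*} [DecidableEq α] {Y : Finset α} {c : α}
    (hc : c ∈ Y) :
    ((Y.erase c) \ Y).card = 0 ∧ (Y \ (Y.erase c)).card = 1 := by
  constructor
  · rw [card_eq_zero, sdiff_eq_empty_iff_subset]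
    exact erase_subset _ _
  · have : Y \ Y.erase c = {c} := by
      ext z
      simp only [mem_sdiff, mem_erase, mem_singleton, not_and]
      constructor
      · rintro ⟨hz, h⟩
        by_contra hne
        exact (h hne) hz
      · rintro rfl
        exact ⟨hc, fun h => absurd rfl h⟩
    rw [this, card_singleton]

end SpecialAssoc

/-- If `λ ∘ μ ≠ ∅`, `μ ∘ ν ≠ ∅` and `λ ∘ μ ∘ ν = ∅`, then
`(λ ∘ μ) •_{1,0} ν = λ •_{1,0} (μ ∘ ν)` and `(λ ∘ μ) •_{0,1} ν = λ •_{0,1} (μ ∘ ν)`. -/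
theorem special_associativity {A B C D : Type*}
    [DecidableEq A] [DecidableEq B] [DecidableEq C] [DecidableEq D]
    (lam : Finset A → Finset B → Prop) (mu : Finset B → Finset C → Prop)
    (nu : Finset C → Finset D → Prop)
    (hlam : ExchAxiom lam) (hmu : ExchAxiom mu) (hnu : ExchAxiom nu)
    (h1 : ∃ X Z, RelComp lam mu X Z)
    (h2 : ∃ Y W, RelComp mu nu Y W)
    (h3 : ¬ ∃ X W, RelComp (RelComp lam mu) nu X W) :
    BComp (RelComp lam mu) nu 1 0 = BComp lam (RelComp mu nu) 1 0 ∧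
    BComp (RelComp lam mu) nu 0 1 = BComp lam (RelComp mu nu) 0 1 := by
  obtain ⟨Xe, Ze, Be, hlame, hmue⟩ := h1
  obtain ⟨Be2, We, Yme, hmu2, hnu2⟩ := h2
  constructor
  · funext X W
    apply propext
    constructor
    · rintro ⟨Y, Y', ⟨Bm, hlamX, hmuB⟩, hnuY, hc1, hc0⟩
      obtain ⟨c, hc, rfl⟩ := SpecialAssoc.sdiff_card_decode hc1 hc0
      have hmuB' : mu Bm ((insert c Y').erase c) := by rwa [erase_insert hc]
      rcases SpecialAssoc.engineB hmu hnu hmu2 hnu2 _ (insert c Y') c Bm W le_rfl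
          (mem_insert_self c Y') hmuB' hnuY with ⟨Yh, Wh, hm, hn⟩ | ⟨b, hb, Yh, hm, hn⟩
      · exact absurd ⟨X, Wh, Yh, ⟨Bm, hlamX, hm⟩, hn⟩ h3
      · exact ⟨insert b Bm, Bm, hlamX, ⟨Yh, hm, hn⟩,
          (SpecialAssoc.insert_sdiff_cards hb).1, (SpecialAssoc.insert_sdiff_cards hb).2⟩
    · rintro ⟨Ym, Ym', hlamX, ⟨Yh, hmuY, hnuY⟩, hc1, hc0⟩
      obtain ⟨b, hb, rfl⟩ := SpecialAssoc.sdiff_card_decode hc1 hc0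
      rcases SpecialAssoc.engineA (SpecialAssoc.flip_exchAxiom hmu)
          (SpecialAssoc.flip_exchAxiom hlam) hmue hlame _ Ym' b Yh X le_rfl
          hb hmuY hlamX with ⟨Bh, Xh, hm, hl⟩ | ⟨cc, hcc, Bh, hm, hl⟩
      · exact absurd ⟨Xh, W, Yh, ⟨Bh, hl, hm⟩, hnuY⟩ h3
      · exact ⟨Yh, Yh.erase cc, ⟨Bh, hl, hm⟩, hnuY,
          (SpecialAssoc.erase_sdiff_cards hcc).2, (SpecialAssoc.erase_sdiff_cards hcc).1⟩
  · funext X W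
    apply propext
    constructor
    · rintro ⟨Y, Y', ⟨Bm, hlamX, hmuB⟩, hnuY, hc0, hc1⟩
      obtain ⟨c, hc, rfl⟩ := SpecialAssoc.sdiff_card_decode hc1 hc0
      rcases SpecialAssoc.engineA hmu hnu hmu2 hnu2 _ Y c Bm W le_rfl hc hmuB hnuY with
          ⟨Yh, Wh, hm, hn⟩ | ⟨b, hb, Yh, hm, hn⟩
      · exact absurd ⟨X, Wh, Yh, ⟨Bm, hlamX, hm⟩, hn⟩ h3
      · exact ⟨Bm.erase b, Bm, hlamX, ⟨Yh, hm, hn⟩,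
          (SpecialAssoc.erase_sdiff_cards hb).1, (SpecialAssoc.erase_sdiff_cards hb).2⟩
    · rintro ⟨Ym, Ym', hlamX, ⟨Yh, hmuY, hnuY⟩, hc0, hc1⟩
      obtain ⟨b, hb, rfl⟩ := SpecialAssoc.sdiff_card_decode hc1 hc0
      have hmuY' : mu ((insert b Ym).erase b) Yh := by rwa [erase_insert hb]
      rcases SpecialAssoc.engineB (SpecialAssoc.flip_exchAxiom hmu)
          (SpecialAssoc.flip_exchAxiom hlam) hmue hlame _ (insert b Ym) b Yh X le_rfl
          (mem_insert_self b Ym) hmuY' hlamX with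
          ⟨Bh, Xh, hm, hl⟩ | ⟨cc, hcc, Bh, hm, hl⟩
      · exact absurd ⟨Xh, W, Yh, ⟨Bh, hl, hm⟩, hnuY⟩ h3
      · exact ⟨Yh, insert cc Yh, ⟨Bh, hl, hm⟩, hnuY,
          (SpecialAssoc.insert_sdiff_cards hcc).2, (SpecialAssoc.insert_sdiff_cards hcc).1⟩
end
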